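/- arXiv:2209.06204 — 8 statements merged into one kernel-verified Lean document; each statement's English description precedes it below -/
import Mathlib

section
/- Let k ≥ 1 and ℓ be integers with ℓ ≥ (3/2)k and ℓ ≤ 2k−1, and let n be a positive integer with 2 ≤ n ≤ k/(2k−ℓ). Then the multigraph on n vertices with exactly 2k−ℓ parallel edges between every pair of distinct vertices is (k,ℓ)-sparse, i.e., every subset X of vertices with |X| ≥ 2 induces at most k|X|−ℓ edges. -/
open scoped Classical

/-- For integers `k ≥ 1`, `(3/2)k ≤ ℓ ≤ 2k-1` and `2 ≤ n ≤ k/(2k-ℓ)`,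
the multigraph on `n` vertices with exactly `2k-ℓ` parallel edges between every pair of
distinct vertices is `(k,ℓ)`-sparse: every vertex subset `X` with `|X| ≥ 2` induces at most
`k|X| - ℓ` edges. -/
theorem stmt_1 {Q : Type} [Fintype Q] (k ℓ : ℤ) (n : ℕ)
    (hk : 1 ≤ k) (hl1 : 3 * k ≤ 2 * ℓ) (hl2 : ℓ ≤ 2 * k - 1)
    (hn2 : 2 ≤ n) (hn : (n : ℤ) * (2 * k - ℓ) ≤ k)
    (ends : Q → Sym2 (Fin n))
    (hloop : ∀ e, ¬ (ends e).IsDiag)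
    (hmult : ∀ u v : Fin n, u ≠ v →
      ((Finset.univ.filter (fun e => ends e = s(u, v))).card : ℤ) = 2 * k - ℓ) :
    ∀ X : Finset (Fin n), 2 ≤ X.card →
      ((Finset.univ.filter (fun e => ∀ v ∈ ends e, v ∈ X)).card : ℤ) ≤ k * X.card - ℓ := by
  intro X hX
  set S := Finset.univ.filter (fun e => ∀ v ∈ ends e, v ∈ X) with hS
  set T := X.sym2.filter (fun z => ¬ z.IsDiag) with hT
  set m : ℕ := X.card with hm
  have hmap : ∀ e ∈ S, ends e ∈ T := by
    intro e he
    simp only [hS, Finset.mem_filter, Finset.mem_univ, true_and] at he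
    simp only [hT, Finset.mem_filter, Finset.mem_sym2_iff]
    exact ⟨he, hloop e⟩
  have hcard := Finset.card_eq_sum_card_fiberwise hmap
  have hfib : ∀ z ∈ T, ((S.filter (fun e => ends e = z)).card : ℤ) = 2 * k - ℓ := by
    intro z hz
    simp only [hT, Finset.mem_filter, Finset.mem_sym2_iff] at hz
    obtain ⟨hzX, hznd⟩ := hz
    induction z using Sym2.ind with
    | _ u v =>
      have huv : u ≠ v := by simpa using hznd
      rw [← hmult u v huv]
      congr 2
      ext e
      simp only [hS, Finset.mem_filter, Finset.mem_univ, true_and]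
      constructor
      · rintro ⟨-, h2⟩; exact h2
      · intro h2
        refine ⟨?_, h2⟩
        intro v' hv'
        rw [h2] at hv'
        exact hzX v' hv'
  -- total count
  have hSval : (S.card : ℤ) = (2 * k - ℓ) * T.card := by
    rw [hcard]
    push_cast
    rw [Finset.sum_congr rfl (fun z hz => hfib z hz)]
    simp [mul_comm]
    ring
  -- card of T
  have hTdiag : X.sym2.filter (fun z => z.IsDiag) = X.image Sym2.diag := by
    ext z
    induction z using Sym2.ind with
    | _ a b =>
      simp only [Finset.mem_filter, Finset.mem_image, Finset.mem_sym2_iff,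
        Sym2.mk_isDiag_iff]
      constructor
      · rintro ⟨h1, rfl⟩
        exact ⟨a, h1 a (by simp), rfl⟩
      · rintro ⟨c, hc, h⟩
        rw [Sym2.diag] at h
        rw [Sym2.eq_iff] at h
        rcases h with ⟨rfl, rfl⟩ | ⟨rfl, rfl⟩ <;>
          exact ⟨by intro v hv; rw [Sym2.mem_iff] at hv; rcases hv with rfl | rfl <;> exact hc, rfl⟩
  have hTcard : 2 * T.card = m * (m - 1) := by
    have hdisj : Disjoint T (X.sym2.filter (fun z => z.IsDiag)) :=
      Finset.disjoint_filter_filter' _ _ (by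
        intro p hp1 hp2 z hz
        exact absurd (hp2 z hz) (hp1 z hz))
    have hunion : T ∪ X.sym2.filter (fun z => z.IsDiag) = X.sym2 := by
      rw [Finset.union_comm, hT, Finset.filter_union_filter_not_eq]
    have h1 : T.card + m = (m + 1).choose 2 := by
      have := Finset.card_union_of_disjoint hdisj
      rw [hunion, Finset.card_sym2, hTdiag,
        Finset.card_image_of_injective _ Sym2.diag_injective, ← hm] at this
      omega
    have h2 : (m + 1).choose 2 = m + m.choose 2 := by
      rw [Nat.choose_succ_succ]
      simp
    have h3 : m.choose 2 = m * (m - 1) / 2 := Nat.choose_two_right m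
    have h4 : 2 ∣ m * (m - 1) := by
      rcases Nat.even_or_odd m with he | ho
      · exact Dvd.dvd.mul_right he.two_dvd _
      · obtain ⟨j, hj⟩ := ho
        exact Dvd.dvd.mul_left ⟨j, by omega⟩ _
    omega
  -- the arithmetic
  have hmn : (m : ℤ) ≤ n := by
    have : m ≤ n := by simpa using Finset.card_le_univ X
    exact_mod_cast this
  have ht1 : (1 : ℤ) ≤ 2 * k - ℓ := by omega
  have hmt : (m : ℤ) * (2 * k - ℓ) ≤ k :=
    le_trans (by nlinarith) hn
  have hm2 : (2 : ℤ) ≤ (m : ℤ) := by exact_mod_cast hX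
  have key : 2 * (S.card : ℤ) = (2 * k - ℓ) * (m * (m - 1)) := by
    have : ((2 * T.card : ℕ) : ℤ) = ((m * (m - 1) : ℕ) : ℤ) := by rw [hTcard]
    push_cast [Nat.cast_sub (by omega : 1 ≤ m)] at this
    rw [hSval, ← this]
    ring
  have : 2 * (S.card : ℤ) ≤ 2 * (k * m - ℓ) := by
    rw [key]
    nlinarith [mul_nonneg (sub_nonneg.mpr hm2) (sub_nonneg.mpr hmt)]
  linarith
end

section
/- Let k ≥ 1 and ℓ ≤ 0 be integers and let G = (V,E) be a multigraph in which every vertex has degree at least 2k − 2ℓ/|V|. Then G contains a spanning subgraph G₀ that is (k,ℓ)-tight, i.e., (k,ℓ)-sparse with exactly k|V| − ℓ edges. Consequently G is (k,ℓ)-rigid. -/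
open scoped Classical

/-- A multigraph given by `ends` is `(k,ℓ)`-sparse on an edge set `F`: every vertex set `X`
with `|X| ≥ 2` induces at most `k|X| - ℓ` edges of `F`. -/
noncomputable def SparseM {V E : Type} [Fintype E] (ends : E → Sym2 V) (k ℓ : ℤ)
    (F : Finset E) : Prop :=
  ∀ X : Finset V, 2 ≤ X.card →
    ((F.filter (fun e => ∀ v ∈ ends e, v ∈ X)).card : ℤ) ≤ k * X.card - ℓ

lemma edge_card_aux {V E : Type} [Fintype V] [Fintype E]
    (ends : E → Sym2 V) (hloop : ∀ e, ¬ (ends e).IsDiag) (A : Finset V) (e : E) :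
    (A.filter (· ∈ ends e)).card =
      if (∀ v ∈ ends e, v ∈ A) then 2 else if (∃ v ∈ ends e, v ∈ A) then 1 else 0 := by
  have hmk : ends e = s((ends e).out.1, (ends e).out.2) := ((ends e).out_eq).symm
  set x := (ends e).out.1
  set y := (ends e).out.2
  have hne : x ≠ y := fun h' => hloop e (by rw [hmk]; exact Sym2.mk_isDiag_iff.2 h')
  have hf : ∀ (z : V), A.filter (fun a => a = z) = if z ∈ A then {z} else ∅ := by
    intro z; split <;> (ext a; simp only [Finset.mem_filter, Finset.mem_singleton,
      Finset.notMem_empty, iff_def]) <;> grind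
  rw [hmk]
  simp only [Sym2.ball, Sym2.mem_iff, Finset.filter_or, hf, exists_eq_or_imp, exists_eq_left]
  by_cases hx : x ∈ A <;> by_cases hy : y ∈ A
  · rw [if_pos hx, if_pos hy, if_pos (fun v hv => by rcases hv with rfl|rfl; exacts [hx, hy]),
      Finset.card_union_of_disjoint (by simp [Ne.symm hne, hne])]
    rfl
  · rw [if_pos hx, if_neg hy]; simp [hx, hy]
  · rw [if_neg hx, if_pos hy]; simp [hx, hy]
  · rw [if_neg hx, if_neg hy]; simp [hx, hy]

lemma degsum_aux {V E : Type} [Fintype V] [Fintype E]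
    (ends : E → Sym2 V) (hloop : ∀ e, ¬ (ends e).IsDiag) (A : Finset V) :
    ∑ v ∈ A, (Finset.univ.filter (fun e => v ∈ ends e)).card
      = 2 * (Finset.univ.filter (fun e : E => ∀ v ∈ ends e, v ∈ A)).card
        + (Finset.univ.filter
            (fun e : E => ¬ (∀ v ∈ ends e, v ∈ A) ∧ ∃ v ∈ ends e, v ∈ A)).card := by
  have h1 : ∑ v ∈ A, (Finset.univ.filter (fun e => v ∈ ends e)).card
      = ∑ e : E, (A.filter (· ∈ ends e)).card := by
    simp only [Finset.card_filter]
    exact Finset.sum_comm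
  rw [h1]
  have h2 : ∀ e : E, (A.filter (· ∈ ends e)).card
      = (if (∀ v ∈ ends e, v ∈ A) then 2 else 0)
        + (if (¬ (∀ v ∈ ends e, v ∈ A) ∧ ∃ v ∈ ends e, v ∈ A) then 1 else 0) := by
    intro e
    rw [edge_card_aux ends hloop A e]
    by_cases hP : (∀ v ∈ ends e, v ∈ A)
    · rw [if_pos hP, if_pos hP, if_neg (fun h => h.1 hP), add_zero]
    · rw [if_neg hP, if_neg hP, zero_add]
      by_cases hQ : (∃ v ∈ ends e, v ∈ A)
      · rw [if_pos hQ, if_pos ⟨hP, hQ⟩]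
      · rw [if_neg hQ, if_neg (fun h => hQ h.2)]
  rw [Finset.sum_congr rfl (fun e _ => h2 e), Finset.sum_add_distrib]
  congr 1
  · rw [← Finset.sum_filter, Finset.sum_const, smul_eq_mul, mul_comm]
  · rw [← Finset.sum_filter, Finset.sum_const, smul_eq_mul, mul_one]

set_option maxHeartbeats 1000000 in
/-- If `k ≥ 1`, `ℓ ≤ 0` and every vertex of the multigraph `G` has degree at
least `2k - 2ℓ/|V|`, then `G` has a spanning `(k,ℓ)`-tight subgraph (so `G` is `(k,ℓ)`-rigid). -/
theorem stmt_4 {V E : Type} [Fintype V] [Fintype E] [Nonempty V]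
    (ends : E → Sym2 V) (hloop : ∀ e, ¬ (ends e).IsDiag)
    (k ℓ : ℤ) (hk : 1 ≤ k) (hl : ℓ ≤ 0)
    (hdeg : ∀ v : V, ((2 * k : ℚ) - 2 * ℓ / (Fintype.card V : ℚ)) ≤
      ((Finset.univ.filter (fun e => v ∈ ends e)).card : ℚ)) :
    ∃ F : Finset E, SparseM ends k ℓ F ∧ (F.card : ℤ) = k * Fintype.card V - ℓ := by
  set n := Fintype.card V with hn
  have hn1 : 1 ≤ n := Fintype.card_pos
  -- the case n = 1 is impossible
  have hn2 : 2 ≤ n := by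
    by_contra h
    have hcard1 : n = 1 := by omega
    have hsub : Subsingleton V := by
      rw [← Fintype.card_le_one_iff_subsingleton, ← hn, hcard1]
    have hEempty : ∀ e : E, False := by
      intro e
      exact hloop e (by
        rw [← (ends e).out_eq]
        exact Sym2.mk_isDiag_iff.2 (Subsingleton.elim _ _))
    obtain ⟨v⟩ := ‹Nonempty V›
    have h0 : (Finset.univ.filter (fun e => v ∈ ends e)) = (∅ : Finset E) := by
      ext e; exact absurd trivial (by simpa using hEempty e)
    have := hdeg v
    rw [h0] at this
    rw [hcard1] at *
    simp only [Nat.cast_one, Finset.card_empty, Nat.cast_zero, div_one] at this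
    have hkQ : (1 : ℚ) ≤ (k : ℚ) := by exact_mod_cast hk
    have hlQ : (ℓ : ℚ) ≤ 0 := by exact_mod_cast hl
    linarith
  -- choose a sparse set of maximum cardinality
  set S : Finset (Finset E) := Finset.univ.filter (fun F => SparseM ends k ℓ F) with hS
  have hSne : S.Nonempty := by
    refine ⟨∅, Finset.mem_filter.2 ⟨Finset.mem_univ _, ?_⟩⟩
    intro X hX
    simp only [Finset.filter_empty, Finset.card_empty, Nat.cast_zero]
    have : (0 : ℤ) ≤ k * X.card := mul_nonneg (by linarith) (Int.natCast_nonneg _)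
    linarith
  obtain ⟨F, hFS, hFmax⟩ := S.exists_max_image Finset.card hSne
  have hFsp : SparseM ends k ℓ F := (Finset.mem_filter.1 hFS).2
  have hFsp' : ∀ X : Finset V, 2 ≤ X.card →
      ((F.filter (fun e => ∀ v ∈ ends e, v ∈ X)).card : ℤ) ≤ k * X.card - ℓ := by
    intro X hX
    have h2 := hFsp X hX
    rwa [Finset.filter_congr_decidable] at h2
  refine ⟨F, hFsp, ?_⟩
  -- upper bound from sparsity of the whole vertex set
  have hub : (F.card : ℤ) ≤ k * n - ℓ := by
    have h := hFsp Finset.univ (by rw [Finset.card_univ]; exact hn2)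
    simp only [Finset.mem_univ, implies_true, Finset.filter_true_of_mem,
      Finset.card_univ] at h
    exact h
  -- every vertex has degree at least 2k
  have hdegZ : ∀ v : V, 2 * k ≤ ((Finset.univ.filter (fun e => v ∈ ends e)).card : ℤ) := by
    intro v
    have h := hdeg v
    have hnQ : (0 : ℚ) < (n : ℚ) := by exact_mod_cast hn1
    have hdiv : 2 * (ℓ : ℚ) / (n : ℚ) ≤ 0 :=
      div_nonpos_iff.2 (Or.inr ⟨by exact_mod_cast (by linarith : 2 * ℓ ≤ 0), le_of_lt hnQ⟩)
    have : (2 * (k : ℚ)) ≤ ((Finset.univ.filter (fun e => v ∈ ends e)).card : ℚ) := by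
      rw [hn] at h; linarith
    exact_mod_cast this
  -- maximality
  have hmax' : ∀ e ∉ F, ¬ SparseM ends k ℓ (insert e F) := by
    intro e he hsp
    have hmem : insert e F ∈ S := Finset.mem_filter.2 ⟨Finset.mem_univ _, hsp⟩
    have := hFmax _ hmem
    rw [Finset.card_insert_of_notMem he] at this
    omega
  -- lower bound
  have hlb : k * n - ℓ ≤ (F.card : ℤ) := by
    by_cases hall : ∀ e : E, e ∈ F
    · -- all edges are in F; handshake over the whole vertex set
      have hFuniv : F = Finset.univ := Finset.eq_univ_iff_forall.2 hall
      have hds := degsum_aux ends hloop (Finset.univ : Finset V)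
      simp only [Finset.mem_univ, implies_true, Finset.filter_true_of_mem, Finset.card_univ,
        not_true_eq_false, false_and, Finset.filter_false, Finset.card_empty, add_zero] at hds
      have hnQ : (0 : ℚ) < (n : ℚ) := by exact_mod_cast hn1
      have hsum : (2 * (k:ℚ) - 2 * ℓ / n) * n ≤ ∑ v : V, (((Finset.univ.filter
          (fun e => v ∈ ends e)).card : ℚ)) := by
        calc (2 * (k:ℚ) - 2 * ℓ / n) * n
            = ∑ _v : V, (2 * (k:ℚ) - 2 * ℓ / n) := by
              rw [Finset.sum_const, Finset.card_univ, ← hn, nsmul_eq_mul, mul_comm]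
          _ ≤ _ := Finset.sum_le_sum (fun v _ => hdeg v)
      have hLHS : (2 * (k:ℚ) - 2 * ℓ / n) * n = 2 * k * n - 2 * ℓ := by
        field_simp
      have hRHS : ∑ v : V, (((Finset.univ.filter (fun e => v ∈ ends e)).card : ℚ))
          = 2 * (Fintype.card E : ℚ) := by
        rw [← Nat.cast_sum, hds]; push_cast; ring
      have hcardE : Fintype.card E = F.card := by rw [hFuniv, Finset.card_univ]
      rw [hLHS, hRHS, hcardE] at hsum
      have : (k:ℚ) * n - ℓ ≤ (F.card : ℚ) := by linarith
      exact_mod_cast this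
    · push_neg at hall
      obtain ⟨e₀, he₀⟩ := hall
      set Tight : Finset V → Prop := fun X => 2 ≤ X.card ∧
        ((F.filter (fun e => ∀ v ∈ ends e, v ∈ X)).card : ℤ) = k * X.card - ℓ with hTight
      -- every edge outside F is blocked by a tight set
      have hblock : ∀ e ∉ F, ∃ X, Tight X ∧ ∀ v ∈ ends e, v ∈ X := by
        intro e he
        have hns := hmax' e he
        rw [SparseM] at hns
        push_neg at hns
        obtain ⟨X, hX2, hgt⟩ := hns
        rw [Finset.filter_congr_decidable] at hgt
        by_cases hp : ∀ v ∈ ends e, v ∈ X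
        · refine ⟨X, ⟨hX2, ?_⟩, hp⟩
          have hfe : ((insert e F).filter (fun e => ∀ v ∈ ends e, v ∈ X))
              = insert e (F.filter (fun e => ∀ v ∈ ends e, v ∈ X)) := by
            rw [Finset.filter_insert, if_pos hp]
          rw [hfe, Finset.card_insert_of_notMem
            (fun h => he (Finset.mem_filter.1 h).1)] at hgt
          have hle := hFsp' X hX2
          push_cast at hgt
          linarith
        · exfalso
          have hfe : ((insert e F).filter (fun e => ∀ v ∈ ends e, v ∈ X))
              = F.filter (fun e => ∀ v ∈ ends e, v ∈ X) := by
            rw [Finset.filter_insert, if_neg hp]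
          rw [hfe] at hgt
          exact absurd (hFsp' X hX2) (not_le.2 hgt)
      -- tight sets are closed under union
      have hunion : ∀ X Y : Finset V, Tight X → Tight Y → Tight (X ∪ Y) := by
        intro X Y hX hY
        have hsub : (F.filter (fun e => ∀ v ∈ ends e, v ∈ X))
              ∪ (F.filter (fun e => ∀ v ∈ ends e, v ∈ Y))
            ⊆ F.filter (fun e => ∀ v ∈ ends e, v ∈ X ∪ Y) := by
          intro e hee
          rcases Finset.mem_union.1 hee with h | h
          · exact Finset.mem_filter.2 ⟨(Finset.mem_filter.1 h).1,
              fun v hv => Finset.mem_union.2 (Or.inl ((Finset.mem_filter.1 h).2 v hv))⟩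
          · exact Finset.mem_filter.2 ⟨(Finset.mem_filter.1 h).1,
              fun v hv => Finset.mem_union.2 (Or.inr ((Finset.mem_filter.1 h).2 v hv))⟩
        have hinter : (F.filter (fun e => ∀ v ∈ ends e, v ∈ X))
              ∩ (F.filter (fun e => ∀ v ∈ ends e, v ∈ Y))
            = F.filter (fun e => ∀ v ∈ ends e, v ∈ X ∩ Y) := by
          ext e
          simp only [Finset.mem_inter, Finset.mem_filter]
          constructor
          · rintro ⟨⟨h1, h2⟩, ⟨-, h3⟩⟩
            exact ⟨h1, fun v hv => ⟨h2 v hv, h3 v hv⟩⟩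
          · rintro ⟨h1, h2⟩
            exact ⟨⟨h1, fun v hv => (h2 v hv).1⟩, ⟨h1, fun v hv => (h2 v hv).2⟩⟩
        have hcap : ((F.filter (fun e => ∀ v ∈ ends e, v ∈ X ∩ Y)).card : ℤ)
            ≤ k * (X ∩ Y).card - ℓ := by
          by_cases h2 : 2 ≤ (X ∩ Y).card
          · exact hFsp' _ h2
          · have hempty : F.filter (fun e => ∀ v ∈ ends e, v ∈ X ∩ Y) = ∅ := by
              rw [Finset.filter_eq_empty_iff]
              intro e _ hp
              have hx := hp _ (Sym2.out_fst_mem (ends e))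
              have hy := hp _ (Sym2.out_snd_mem (ends e))
              have hne : (ends e).out.1 ≠ (ends e).out.2 := fun h' => hloop e (by
                rw [← (ends e).out_eq]; exact Sym2.mk_isDiag_iff.2 h')
              have := Finset.one_lt_card.2 ⟨_, hx, _, hy, hne⟩
              omega
            rw [hempty]
            simp only [Finset.card_empty, Nat.cast_zero]
            have : (0:ℤ) ≤ k * (X ∩ Y).card := mul_nonneg (by linarith) (Int.natCast_nonneg _)
            linarith
        have hcount := Finset.card_union_add_card_inter
          (F.filter (fun e => ∀ v ∈ ends e, v ∈ X)) (F.filter (fun e => ∀ v ∈ ends e, v ∈ Y))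
        have hle1 := Finset.card_le_card hsub
        have hvert := Finset.card_union_add_card_inter X Y
        have hXY2 : 2 ≤ (X ∪ Y).card :=
          le_trans hX.1 (Finset.card_le_card Finset.subset_union_left)
        have hspXY := hFsp' (X ∪ Y) hXY2
        refine ⟨hXY2, ?_⟩
        rw [hinter] at hcount
        have hvZ : ((X ∪ Y).card : ℤ) + ((X ∩ Y).card : ℤ) = (X.card : ℤ) + Y.card := by
          exact_mod_cast hvert
        have hkv : k * (((X ∪ Y).card : ℤ))
            = k * X.card + k * Y.card - k * ((X ∩ Y).card : ℤ) := by
          linear_combination k * hvZ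
        have hcountZ : (((F.filter (fun e => ∀ v ∈ ends e, v ∈ X))
              ∪ (F.filter (fun e => ∀ v ∈ ends e, v ∈ Y))).card : ℤ)
              + ((F.filter (fun e => ∀ v ∈ ends e, v ∈ X ∩ Y)).card : ℤ)
            = ((F.filter (fun e => ∀ v ∈ ends e, v ∈ X)).card : ℤ)
              + ((F.filter (fun e => ∀ v ∈ ends e, v ∈ Y)).card : ℤ) := by
          exact_mod_cast hcount
        have hle1Z : (((F.filter (fun e => ∀ v ∈ ends e, v ∈ X))
              ∪ (F.filter (fun e => ∀ v ∈ ends e, v ∈ Y))).card : ℤ)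
            ≤ ((F.filter (fun e => ∀ v ∈ ends e, v ∈ X ∪ Y)).card : ℤ) := by
          exact_mod_cast hle1
        have hXv := hX.2
        have hYv := hY.2
        linarith
      -- the maximal tight set
      set TS : Finset (Finset V) := Finset.univ.filter Tight with hTS
      have hTSne : TS.Nonempty := by
        obtain ⟨X, hX, -⟩ := hblock e₀ he₀
        exact ⟨X, Finset.mem_filter.2 ⟨Finset.mem_univ _, hX⟩⟩
      obtain ⟨T, hTmem, hTmax⟩ := TS.exists_max_image Finset.card hTSne
      have hT : Tight T := (Finset.mem_filter.1 hTmem).2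
      have hTall : ∀ X, Tight X → X ⊆ T := by
        intro X hX
        have hu := hunion X T hX hT
        have hle : (X ∪ T).card ≤ T.card :=
          hTmax _ (Finset.mem_filter.2 ⟨Finset.mem_univ _, hu⟩)
        have heq : T = X ∪ T := Finset.eq_of_subset_of_card_le Finset.subset_union_right hle
        intro x hx
        rw [heq]
        exact Finset.mem_union.2 (Or.inl hx)
      have hinT : ∀ e, e ∉ F → ∀ v ∈ ends e, v ∈ T := by
        intro e he
        obtain ⟨X, hX, hp⟩ := hblock e he
        exact fun v hv => hTall X hX (hp v hv)
      -- count degrees outside T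
      set A : Finset V := Finset.univ \ T with hA
      have hds := degsum_aux ends hloop A
      have hdsum : 2 * k * (A.card : ℤ)
          ≤ ∑ v ∈ A, ((Finset.univ.filter (fun e => v ∈ ends e)).card : ℤ) := by
        calc 2 * k * (A.card : ℤ) = ∑ _v ∈ A, 2 * k := by
              rw [Finset.sum_const, nsmul_eq_mul]; ring
          _ ≤ _ := Finset.sum_le_sum (fun v _ => hdegZ v)
      have hdsZ : ∑ v ∈ A, ((Finset.univ.filter (fun e => v ∈ ends e)).card : ℤ)
          = 2 * ((Finset.univ.filter (fun e : E => ∀ v ∈ ends e, v ∈ A)).card : ℤ)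
            + ((Finset.univ.filter
                (fun e : E => ¬ (∀ v ∈ ends e, v ∈ A) ∧ ∃ v ∈ ends e, v ∈ A)).card : ℤ) := by
        exact_mod_cast hds
      -- all edges touching A are in F and not induced by T
      have hsubF : (Finset.univ.filter (fun e : E => ∀ v ∈ ends e, v ∈ A))
            ∪ (Finset.univ.filter
                (fun e : E => ¬ (∀ v ∈ ends e, v ∈ A) ∧ ∃ v ∈ ends e, v ∈ A))
          ⊆ F.filter (fun e => ¬ (∀ v ∈ ends e, v ∈ T)) := by
        intro e hee
        have hnotT : ¬ (∀ v ∈ ends e, v ∈ T) := by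
          rcases Finset.mem_union.1 hee with h | h
          · have hp := (Finset.mem_filter.1 h).2
            have hmem := hp _ (Sym2.out_fst_mem (ends e))
            exact fun hall' =>
              (Finset.mem_sdiff.1 hmem).2 (hall' _ (Sym2.out_fst_mem (ends e)))
          · obtain ⟨-, v, hv, hvA⟩ := (Finset.mem_filter.1 h).2
            exact fun hall' => (Finset.mem_sdiff.1 hvA).2 (hall' v hv)
        have heF : e ∈ F := by
          by_contra he
          exact hnotT (hinT e he)
        exact Finset.mem_filter.2 ⟨heF, hnotT⟩
      have hdisj : Disjoint (Finset.univ.filter (fun e : E => ∀ v ∈ ends e, v ∈ A))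
          (Finset.univ.filter
            (fun e : E => ¬ (∀ v ∈ ends e, v ∈ A) ∧ ∃ v ∈ ends e, v ∈ A)) := by
        rw [Finset.disjoint_left]
        intro e h1 h2
        exact (Finset.mem_filter.1 h2).2.1 (Finset.mem_filter.1 h1).2
      have hcardsum : (Finset.univ.filter (fun e : E => ∀ v ∈ ends e, v ∈ A)).card
            + (Finset.univ.filter
                (fun e : E => ¬ (∀ v ∈ ends e, v ∈ A) ∧ ∃ v ∈ ends e, v ∈ A)).card
          ≤ (F.filter (fun e => ¬ (∀ v ∈ ends e, v ∈ T))).card := by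
        rw [← Finset.card_union_of_disjoint hdisj]
        exact Finset.card_le_card hsubF
      have hsplit := Finset.card_filter_add_card_filter_not
        (s := F) (p := fun e => ∀ v ∈ ends e, v ∈ T)
      have hTval : ((F.filter (fun e => ∀ v ∈ ends e, v ∈ T)).card : ℤ) = k * T.card - ℓ :=
        hT.2
      have hAcard : A.card + T.card = n := by
        rw [hA, Finset.card_sdiff_of_subset (Finset.subset_univ T), Finset.card_univ, ← hn]
        have := Finset.card_le_univ T
        omega
      have hAZ : (A.card : ℤ) + (T.card : ℤ) = (n : ℤ) := by exact_mod_cast hAcard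
      have hkA : k * (A.card : ℤ) = k * n - k * T.card := by linear_combination k * hAZ
      have hsplitZ : ((F.filter (fun e => ∀ v ∈ ends e, v ∈ T)).card : ℤ)
          + ((F.filter (fun e => ¬ (∀ v ∈ ends e, v ∈ T))).card : ℤ) = (F.card : ℤ) := by
        exact_mod_cast hsplit
      have hcardsumZ : ((Finset.univ.filter (fun e : E => ∀ v ∈ ends e, v ∈ A)).card : ℤ)
            + ((Finset.univ.filter
                (fun e : E => ¬ (∀ v ∈ ends e, v ∈ A) ∧ ∃ v ∈ ends e, v ∈ A)).card : ℤ)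
          ≤ ((F.filter (fun e => ¬ (∀ v ∈ ends e, v ∈ T))).card : ℤ) := by
        exact_mod_cast hcardsum
      have hcnz : (0:ℤ) ≤ ((Finset.univ.filter
          (fun e : E => ¬ (∀ v ∈ ends e, v ∈ A) ∧ ∃ v ∈ ends e, v ∈ A)).card : ℤ) :=
        Int.natCast_nonneg _
      linarith
  omega
end

section
/- Let k ≥ 1 and ℓ ≤ 0 be integers and let G = (V,E) be a multigraph in which every vertex has degree at least 2k − (2ℓ−2)/|V|. Then for every edge e ∈ E, the graph G − e is (k,ℓ)-rigid; i.e., G is (k,ℓ)-redundant. -/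
open scoped Classical

namespace Stmt5Aux

open Finset

variable {V E : Type} [Fintype V] [Fintype E]

/-- Bridge between the decidability instances used in `SparseM` (elaborated without
`Fintype V`) and the ambient ones. -/
lemma sparse_iff (ends : E → Sym2 V) (k ℓ : ℤ) (F : Finset E) :
    SparseM ends k ℓ F ↔ ∀ X : Finset V, 2 ≤ X.card →
      ((F.filter (fun e => ∀ v ∈ ends e, v ∈ X)).card : ℤ) ≤ k * X.card - ℓ := by
  unfold SparseM
  refine forall_congr' fun X => imp_congr Iff.rfl ?_
  rw [Finset.filter_congr_decidable]

lemma exists_ne_pair (ends : E → Sym2 V) (e : E) (h : ¬ (ends e).IsDiag) :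
    ∃ a b : V, a ≠ b ∧ ends e = s(a, b) := by
  obtain ⟨⟨a, b⟩, hab⟩ := Quot.exists_rep (ends e)
  have hab' : ends e = s(a, b) := hab.symm
  refine ⟨a, b, fun hEq => h ?_, hab'⟩
  rw [hab', hEq]
  exact Sym2.mk_isDiag_iff.mpr rfl

lemma swap_sum (ends : E → Sym2 V) (F : Finset E) (U : Finset V) :
    ∑ v ∈ U, (F.filter (fun e => v ∈ ends e)).card
      = ∑ e ∈ F, (U.filter (fun v => v ∈ ends e)).card := by
  simp_rw [Finset.card_filter]
  exact Finset.sum_comm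

lemma card_ends_eq_two (ends : E → Sym2 V) (e : E) (h : ¬ (ends e).IsDiag) :
    (univ.filter (fun v => v ∈ ends e)).card = 2 := by
  obtain ⟨a, b, hne, hab⟩ := exists_ne_pair ends e h
  have hset : univ.filter (fun v => v ∈ ends e) = {a, b} := by
    ext v; simp [hab, Sym2.mem_iff]
  rw [hset, Finset.card_pair hne]

lemma card_ends_le_two (ends : E → Sym2 V) (e : E) (h : ¬ (ends e).IsDiag) (U : Finset V) :
    (U.filter (fun v => v ∈ ends e)).card ≤ 2 := by
  calc (U.filter (fun v => v ∈ ends e)).card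
      ≤ (univ.filter (fun v => v ∈ ends e)).card :=
        Finset.card_le_card (Finset.monotone_filter_left _ (Finset.subset_univ U))
    _ = 2 := card_ends_eq_two ends e h

lemma tight_union (ends : E → Sym2 V) (hloop : ∀ e, ¬ (ends e).IsDiag)
    (k ℓ : ℤ) (hk : 1 ≤ k) (hl : ℓ ≤ 0) (F : Finset E) (hF : SparseM ends k ℓ F)
    (X Y : Finset V) (hX2 : 2 ≤ X.card)
    (hX : ((F.filter (fun e => ∀ v ∈ ends e, v ∈ X)).card : ℤ) = k * X.card - ℓ)
    (hY2 : 2 ≤ Y.card)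
    (hY : ((F.filter (fun e => ∀ v ∈ ends e, v ∈ Y)).card : ℤ) = k * Y.card - ℓ) :
    ((F.filter (fun e => ∀ v ∈ ends e, v ∈ X ∪ Y)).card : ℤ) = k * (X ∪ Y).card - ℓ := by
  have hF' := (sparse_iff ends k ℓ F).mp hF
  set iX := F.filter (fun e => ∀ v ∈ ends e, v ∈ X) with hiX
  set iY := F.filter (fun e => ∀ v ∈ ends e, v ∈ Y) with hiY
  set iU := F.filter (fun e => ∀ v ∈ ends e, v ∈ X ∪ Y) with hiU
  set iI := F.filter (fun e => ∀ v ∈ ends e, v ∈ X ∩ Y) with hiI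
  have hsubU : iX ∪ iY ⊆ iU := by
    intro e he
    rcases Finset.mem_union.mp he with h | h
    · rw [hiX, Finset.mem_filter] at h
      rw [hiU, Finset.mem_filter]
      exact ⟨h.1, fun v hv => Finset.mem_union.mpr (Or.inl (h.2 v hv))⟩
    · rw [hiY, Finset.mem_filter] at h
      rw [hiU, Finset.mem_filter]
      exact ⟨h.1, fun v hv => Finset.mem_union.mpr (Or.inr (h.2 v hv))⟩
  have hinter : iX ∩ iY = iI := by
    ext e
    rw [Finset.mem_inter, hiX, hiY, hiI, Finset.mem_filter, Finset.mem_filter,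
      Finset.mem_filter]
    constructor
    · rintro ⟨⟨h1, h2⟩, ⟨-, h3⟩⟩
      exact ⟨h1, fun v hv => Finset.mem_inter.mpr ⟨h2 v hv, h3 v hv⟩⟩
    · rintro ⟨h1, h2⟩
      exact ⟨⟨h1, fun v hv => (Finset.mem_inter.mp (h2 v hv)).1⟩,
             ⟨h1, fun v hv => (Finset.mem_inter.mp (h2 v hv)).2⟩⟩
  have hkey : iX.card + iY.card ≤ iU.card + iI.card := by
    calc iX.card + iY.card = (iX ∪ iY).card + (iX ∩ iY).card :=
          (Finset.card_union_add_card_inter _ _).symm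
      _ ≤ iU.card + iI.card := by
          rw [hinter]
          exact Nat.add_le_add_right (Finset.card_le_card hsubU) _
  have hII : (iI.card : ℤ) ≤ k * (X ∩ Y).card - ℓ := by
    by_cases h2 : 2 ≤ (X ∩ Y).card
    · rw [hiI]; exact hF' _ h2
    · have hempty : iI = ∅ := by
        rw [Finset.eq_empty_iff_forall_notMem]
        intro e he
        rw [hiI, Finset.mem_filter] at he
        obtain ⟨a, b, hne, hab⟩ := exists_ne_pair ends e (hloop e)
        have ha : a ∈ X ∩ Y := he.2 a (by rw [hab]; exact Sym2.mem_mk_left a b)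
        have hb : b ∈ X ∩ Y := he.2 b (by rw [hab]; exact Sym2.mem_mk_right a b)
        have : 1 < (X ∩ Y).card := Finset.one_lt_card.mpr ⟨a, ha, b, hb, hne⟩
        omega
      rw [hempty]
      simp only [Finset.card_empty, Nat.cast_zero]
      have h0 : (0 : ℤ) ≤ (X ∩ Y).card := Int.natCast_nonneg _
      nlinarith
  have hUb : (iU.card : ℤ) ≤ k * (X ∪ Y).card - ℓ := by
    rw [hiU]
    exact hF' _ (le_trans hX2 (Finset.card_le_card Finset.subset_union_left))
  have hcards : ((X ∪ Y).card : ℤ) + ((X ∩ Y).card : ℤ) = (X.card : ℤ) + (Y.card : ℤ) := by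
    exact_mod_cast Finset.card_union_add_card_inter X Y
  have hkey' : (iX.card : ℤ) + (iY.card : ℤ) ≤ (iU.card : ℤ) + (iI.card : ℤ) := by
    exact_mod_cast hkey
  have hc2 : k * ((X ∪ Y).card : ℤ) + k * ((X ∩ Y).card : ℤ)
      = k * (X.card : ℤ) + k * (Y.card : ℤ) := by linear_combination k * hcards
  linarith

lemma core (ends : E → Sym2 V) (hloop : ∀ e, ¬ (ends e).IsDiag) (k ℓ : ℤ)
    (hdeg : ∀ v : V, ((2 * k : ℚ) - (2 * ℓ - 2) / (Fintype.card V : ℚ)) ≤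
      ((Finset.univ.filter (fun e => v ∈ ends e)).card : ℚ))
    (e₀ : E) (F : Finset E) (T : Finset V)
    (hcov : ∀ e : E, e ∉ insert e₀ F → ∀ v ∈ ends e, v ∈ T) :
    (((univ \ T).card : ℚ)) * ((2 * k : ℚ) - (2 * ℓ - 2) / (Fintype.card V : ℚ))
      ≤ 2 + 2 * ((F.card : ℚ) - ((F.filter (fun e => ∀ v ∈ ends e, v ∈ T)).card : ℚ)) := by
  set U := univ \ T with hU
  set indT := F.filter (fun e => ∀ v ∈ ends e, v ∈ T) with hindT
  have hdegle : ∀ v ∈ U, (univ.filter (fun e => v ∈ ends e)).card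
      ≤ ((insert e₀ F).filter (fun e => v ∈ ends e)).card := by
    intro v hv
    apply Finset.card_le_card
    intro e he
    rw [Finset.mem_filter] at he ⊢
    refine ⟨?_, he.2⟩
    by_contra hne
    exact (Finset.mem_sdiff.mp hv).2 (hcov e hne v he.2)
  have step1 : ∑ v ∈ U, (univ.filter (fun e => v ∈ ends e)).card
      ≤ ∑ e ∈ insert e₀ F, (U.filter (fun v => v ∈ ends e)).card := by
    rw [← swap_sum]
    exact Finset.sum_le_sum hdegle
  have step2 : ∑ e ∈ insert e₀ F, (U.filter (fun v => v ∈ ends e)).card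
      ≤ 2 + ∑ e ∈ F, (U.filter (fun v => v ∈ ends e)).card := by
    by_cases h : e₀ ∈ F
    · rw [Finset.insert_eq_self.mpr h]; omega
    · rw [Finset.sum_insert h]
      have := card_ends_le_two ends e₀ (hloop e₀) U
      omega
  have step3 : ∑ e ∈ F, (U.filter (fun v => v ∈ ends e)).card
      ≤ 2 * (F.card - indT.card) := by
    rw [← Finset.sum_filter_add_sum_filter_not F (fun e => ∀ v ∈ ends e, v ∈ T)]
    have hz : ∑ e ∈ F.filter (fun e => ∀ v ∈ ends e, v ∈ T),
        (U.filter (fun v => v ∈ ends e)).card = 0 := by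
      apply Finset.sum_eq_zero
      intro e he
      rw [Finset.mem_filter] at he
      rw [Finset.card_eq_zero, Finset.eq_empty_iff_forall_notMem]
      intro v hv
      rw [Finset.mem_filter] at hv
      exact (Finset.mem_sdiff.mp hv.1).2 (he.2 v hv.2)
    rw [hz, zero_add]
    have hb : ∑ e ∈ F.filter (fun e => ¬ ∀ v ∈ ends e, v ∈ T),
        (U.filter (fun v => v ∈ ends e)).card
        ≤ (F.filter (fun e => ¬ ∀ v ∈ ends e, v ∈ T)).card * 2 := by
      apply Finset.sum_le_card_nsmul
      intro e _
      exact card_ends_le_two ends e (hloop e) U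
    have hcc : (F.filter (fun e => ∀ v ∈ ends e, v ∈ T)).card
        + (F.filter (fun e => ¬ ∀ v ∈ ends e, v ∈ T)).card = F.card :=
      Finset.card_filter_add_card_filter_not _
    rw [hindT]
    omega
  -- lower bound in ℚ
  have hlow : (U.card : ℚ) * ((2 * k : ℚ) - (2 * ℓ - 2) / (Fintype.card V : ℚ))
      ≤ ((∑ v ∈ U, (univ.filter (fun e => v ∈ ends e)).card : ℕ) : ℚ) := by
    rw [Nat.cast_sum]
    calc (U.card : ℚ) * ((2 * k : ℚ) - (2 * ℓ - 2) / (Fintype.card V : ℚ))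
        = ∑ _v ∈ U, ((2 * k : ℚ) - (2 * ℓ - 2) / (Fintype.card V : ℚ)) := by
          rw [Finset.sum_const, nsmul_eq_mul]
      _ ≤ ∑ v ∈ U, ((univ.filter (fun e => v ∈ ends e)).card : ℚ) :=
          Finset.sum_le_sum (fun v _ => hdeg v)
  have hmono : indT.card ≤ F.card := by
    rw [hindT]; exact Finset.card_le_card (Finset.filter_subset _ _)
  have hup : ((∑ v ∈ U, (univ.filter (fun e => v ∈ ends e)).card : ℕ) : ℚ)
      ≤ 2 + 2 * ((F.card : ℚ) - (indT.card : ℚ)) := by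
    have h : ∑ v ∈ U, (univ.filter (fun e => v ∈ ends e)).card
        ≤ 2 + 2 * (F.card - indT.card) := by omega
    calc ((∑ v ∈ U, (univ.filter (fun e => v ∈ ends e)).card : ℕ) : ℚ)
        ≤ ((2 + 2 * (F.card - indT.card) : ℕ) : ℚ) := by exact_mod_cast h
      _ = 2 + 2 * ((F.card : ℚ) - (indT.card : ℚ)) := by
          rw [Nat.cast_add, Nat.cast_mul, Nat.cast_sub hmono]
          norm_num
  exact le_trans hlow hup

end Stmt5Aux

/-- If `k ≥ 1`, `ℓ ≤ 0` and every vertex of the multigraph `G` has degree at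
least `2k - (2ℓ-2)/|V|`, then for every edge `e₀`, `G - e₀` contains a spanning
`(k,ℓ)`-tight subgraph; i.e. `G` is `(k,ℓ)`-redundant. -/
theorem stmt_5 {V E : Type} [Fintype V] [Fintype E] [Nonempty V]
    (ends : E → Sym2 V) (hloop : ∀ e, ¬ (ends e).IsDiag)
    (k ℓ : ℤ) (hk : 1 ≤ k) (hl : ℓ ≤ 0)
    (hdeg : ∀ v : V, ((2 * k : ℚ) - (2 * ℓ - 2) / (Fintype.card V : ℚ)) ≤
      ((Finset.univ.filter (fun e => v ∈ ends e)).card : ℚ)) :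
    ∀ e₀ : E, ∃ F : Finset E, e₀ ∉ F ∧ SparseM ends k ℓ F ∧
      (F.card : ℤ) = k * Fintype.card V - ℓ := by
  intro e₀
  classical
  have hn1 : 1 ≤ Fintype.card V := Fintype.card_pos
  have hn2 : 2 ≤ Fintype.card V := by
    by_contra h
    have hsub : ∀ a b : V, a = b := by
      have h1 : Fintype.card V ≤ 1 := by omega
      intro a b
      exact Fintype.card_le_one_iff.mp h1 a b
    obtain ⟨a, b, hne, _⟩ := Stmt5Aux.exists_ne_pair ends e₀ (hloop e₀)
    exact hne (hsub a b)
  have hnQ : (0 : ℚ) < (Fintype.card V : ℚ) := by exact_mod_cast hn1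
  set S := (Finset.univ.erase e₀).powerset.filter (fun F => SparseM ends k ℓ F) with hS
  have hempty : (∅ : Finset E) ∈ S := by
    rw [hS, Finset.mem_filter]
    refine ⟨Finset.mem_powerset.mpr (Finset.empty_subset _), ?_⟩
    rw [Stmt5Aux.sparse_iff]
    intro X hX
    have hX' : (2 : ℤ) ≤ (X.card : ℤ) := by exact_mod_cast hX
    simp only [Finset.filter_empty, Finset.card_empty, Nat.cast_zero]
    nlinarith
  obtain ⟨F, hFS, hFmax⟩ := Finset.exists_max_image S Finset.card ⟨∅, hempty⟩
  rw [hS, Finset.mem_filter] at hFS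
  have hFsub : F ⊆ Finset.univ.erase e₀ := Finset.mem_powerset.mp hFS.1
  have hFsp : SparseM ends k ℓ F := hFS.2
  have hFsp' := (Stmt5Aux.sparse_iff ends k ℓ F).mp hFsp
  have he₀F : e₀ ∉ F := fun h => (Finset.mem_erase.mp (hFsub h)).1 rfl
  refine ⟨F, he₀F, hFsp, ?_⟩
  have hFle : (F.card : ℤ) ≤ k * Fintype.card V - ℓ := by
    have h := hFsp' Finset.univ (by simpa [Finset.card_univ] using hn2)
    simpa [Finset.card_univ] using h
  by_contra hne
  have hFlt : (F.card : ℤ) + 1 ≤ k * Fintype.card V - ℓ :=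
    Int.add_one_le_iff.mpr (hFle.lt_of_ne hne)
  -- every edge outside F ∪ {e₀} lies in a tight set
  have htight : ∀ e : E, e ∉ F → e ≠ e₀ →
      ∃ X : Finset V, 2 ≤ X.card ∧
        ((F.filter (fun e' => ∀ v ∈ ends e', v ∈ X)).card : ℤ) = k * X.card - ℓ ∧
        ∀ v ∈ ends e, v ∈ X := by
    intro e heF hee
    have hnotS : insert e F ∉ S := by
      intro hmem
      have h := hFmax _ hmem
      rw [Finset.card_insert_of_notMem heF] at h
      omega
    have hsub' : insert e F ⊆ Finset.univ.erase e₀ :=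
      Finset.insert_subset (Finset.mem_erase.mpr ⟨hee, Finset.mem_univ e⟩) hFsub
    have hnotsp : ¬ SparseM ends k ℓ (insert e F) := by
      intro hsp
      exact hnotS (by rw [hS]; exact Finset.mem_filter.mpr ⟨Finset.mem_powerset.mpr hsub', hsp⟩)
    rw [Stmt5Aux.sparse_iff] at hnotsp
    push_neg at hnotsp
    obtain ⟨X, hX2, hXgt⟩ := hnotsp
    have hcovX : ∀ v ∈ ends e, v ∈ X := by
      by_contra hc
      have heq : (insert e F).filter (fun e' => ∀ v ∈ ends e', v ∈ X)
          = F.filter (fun e' => ∀ v ∈ ends e', v ∈ X) := by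
        rw [Finset.filter_insert, if_neg hc]
      rw [heq] at hXgt
      exact absurd (hFsp' X hX2) (not_le.mpr hXgt)
    refine ⟨X, hX2, ?_, hcovX⟩
    have h1 : (insert e F).filter (fun e' => ∀ v ∈ ends e', v ∈ X)
        = insert e (F.filter (fun e' => ∀ v ∈ ends e', v ∈ X)) := by
      rw [Finset.filter_insert, if_pos hcovX]
    have h2 := hFsp' X hX2
    have h3 : ((insert e F).filter (fun e' => ∀ v ∈ ends e', v ∈ X)).card
        ≤ (F.filter (fun e' => ∀ v ∈ ends e', v ∈ X)).card + 1 := by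
      rw [h1]; exact Finset.card_insert_le _ _
    have h3' : (((insert e F).filter (fun e' => ∀ v ∈ ends e', v ∈ X)).card : ℤ)
        ≤ ((F.filter (fun e' => ∀ v ∈ ends e', v ∈ X)).card : ℤ) + 1 := by exact_mod_cast h3
    linarith
  by_cases hex : ∃ X : Finset V, 2 ≤ X.card ∧
      ((F.filter (fun e' => ∀ v ∈ ends e', v ∈ X)).card : ℤ) = k * X.card - ℓ
  · -- there is a tight set: take a maximum one
    obtain ⟨X₀, hX₀⟩ := hex
    set TS := Finset.univ.powerset.filter (fun X : Finset V => 2 ≤ X.card ∧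
      ((F.filter (fun e' => ∀ v ∈ ends e', v ∈ X)).card : ℤ) = k * X.card - ℓ) with hTSdef
    have hX₀mem : X₀ ∈ TS := by
      rw [hTSdef, Finset.mem_filter]
      exact ⟨Finset.mem_powerset.mpr (Finset.subset_univ _), hX₀⟩
    obtain ⟨T, hTmem, hTmax⟩ := Finset.exists_max_image TS Finset.card ⟨X₀, hX₀mem⟩
    rw [hTSdef, Finset.mem_filter] at hTmem
    obtain ⟨-, hT2, hTt⟩ := hTmem
    have hmaxT : ∀ X : Finset V, 2 ≤ X.card →
        ((F.filter (fun e' => ∀ v ∈ ends e', v ∈ X)).card : ℤ) = k * X.card - ℓ → X ⊆ T := by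
      intro X hX2 hXt
      have hUn := Stmt5Aux.tight_union ends hloop k ℓ hk hl F hFsp X T hX2 hXt hT2 hTt
      have hmemU : X ∪ T ∈ TS := by
        rw [hTSdef, Finset.mem_filter]
        exact ⟨Finset.mem_powerset.mpr (Finset.subset_univ _),
          le_trans hT2 (Finset.card_le_card Finset.subset_union_right), hUn⟩
      have hle := hTmax _ hmemU
      have hEq : T = X ∪ T :=
        Finset.eq_of_subset_of_card_le Finset.subset_union_right hle
      rw [hEq]
      exact Finset.subset_union_left
    by_cases hTuniv : T = Finset.univ
    · rw [hTuniv] at hTt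
      apply hne
      simpa [Finset.card_univ] using hTt
    · have hcov : ∀ e : E, e ∉ insert e₀ F → ∀ v ∈ ends e, v ∈ T := by
        intro e he v hv
        rw [Finset.mem_insert] at he
        push_neg at he
        obtain ⟨X, hX2, hXt, hXe⟩ := htight e he.2 he.1
        exact hmaxT X hX2 hXt (hXe v hv)
      have hkey := Stmt5Aux.core ends hloop k ℓ hdeg e₀ F T hcov
      -- arithmetic contradiction
      have hTssub : T ⊂ Finset.univ := (Finset.subset_univ T).ssubset_of_ne hTuniv
      have hTcard : T.card < Fintype.card V := by
        have h := Finset.card_lt_card hTssub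
        simpa [Finset.card_univ] using h
      have hucard : (Finset.univ \ T).card = Fintype.card V - T.card := by
        rw [Finset.card_sdiff_of_subset (Finset.subset_univ T), Finset.card_univ]
      have hu1 : 1 ≤ (Finset.univ \ T).card := by omega
      set u : ℚ := ((Finset.univ \ T).card : ℚ) with hudef
      set t : ℚ := (T.card : ℚ) with htdef
      set nQ : ℚ := (Fintype.card V : ℚ) with hnQdef
      set fQ : ℚ := (F.card : ℚ) with hfdef
      set kQ : ℚ := (k : ℚ) with hkdef
      set lQ : ℚ := (ℓ : ℚ) with hldef
      have hC : u = nQ - t := by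
        rw [hudef, htdef, hnQdef, hucard]
        push_cast [Nat.le_of_lt hTcard]
        ring
      have hD : (1 : ℚ) ≤ u := by rw [hudef]; exact_mod_cast hu1
      have hTtQ : ((F.filter (fun e' => ∀ v ∈ ends e', v ∈ T)).card : ℚ) = kQ * t - lQ := by
        rw [hkdef, htdef, hldef]
        exact_mod_cast hTt
      have hBQ : fQ + 1 ≤ kQ * nQ - lQ := by
        rw [hfdef, hkdef, hnQdef, hldef]
        exact_mod_cast hFlt
      have hlQ : lQ ≤ 0 := by rw [hldef]; exact_mod_cast hl
      have hdiv : (2 * lQ - 2) / nQ < 0 := by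
        apply div_neg_of_neg_of_pos
        · linarith
        · rw [hnQdef]; exact hnQ
      have h1 : u * (2 * kQ - (2 * lQ - 2) / nQ)
          = u * (2 * kQ) - u * ((2 * lQ - 2) / nQ) := by ring
      have h2 : kQ * nQ - kQ * t - kQ * u = 0 := by
        have h0 : nQ - t - u = 0 := by rw [hC]; ring
        linear_combination kQ * h0
      have h3 : u * ((2 * lQ - 2) / nQ) ≤ (2 * lQ - 2) / nQ := by
        nlinarith
      rw [h1, hTtQ] at hkey
      linarith
  · -- no tight set at all: every edge is in F ∪ {e₀}
    have hcov : ∀ e : E, e ∉ insert e₀ F → ∀ v ∈ ends e, v ∈ (∅ : Finset V) := by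
      intro e he
      exfalso
      rw [Finset.mem_insert] at he
      push_neg at he
      obtain ⟨X, hX2, hXt, _⟩ := htight e he.2 he.1
      exact hex ⟨X, hX2, hXt⟩
    have hkey := Stmt5Aux.core ends hloop k ℓ hdeg e₀ F ∅ hcov
    have hind0 : F.filter (fun e' => ∀ v ∈ ends e', v ∈ (∅ : Finset V)) = ∅ := by
      rw [Finset.eq_empty_iff_forall_notMem]
      intro e he
      rw [Finset.mem_filter] at he
      obtain ⟨a, b, hne', hab⟩ := Stmt5Aux.exists_ne_pair ends e (hloop e)
      exact absurd (he.2 a (by rw [hab]; exact Sym2.mem_mk_left a b)) (Finset.notMem_empty a)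
    rw [hind0, Finset.sdiff_empty, Finset.card_univ] at hkey
    simp only [Finset.card_empty, Nat.cast_zero] at hkey
    set nQ : ℚ := (Fintype.card V : ℚ) with hnQdef
    set fQ : ℚ := (F.card : ℚ) with hfdef
    set kQ : ℚ := (k : ℚ) with hkdef
    set lQ : ℚ := (ℓ : ℚ) with hldef
    have hBQ : fQ + 1 ≤ kQ * nQ - lQ := by
      rw [hfdef, hkdef, hnQdef, hldef]
      exact_mod_cast hFlt
    have hnQ' : nQ ≠ 0 := by rw [hnQdef]; exact ne_of_gt hnQ
    have hmul : nQ * ((2 * lQ - 2) / nQ) = 2 * lQ - 2 :=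
      mul_div_cancel₀ _ hnQ'
    have h1 : nQ * (2 * kQ - (2 * lQ - 2) / nQ)
        = nQ * (2 * kQ) - nQ * ((2 * lQ - 2) / nQ) := by ring
    rw [h1, hmul] at hkey
    linarith
end

section
/- Let k and ℓ be integers with 0 < ℓ ≤ k, and let G = (V,E) be a 2k-edge-connected multigraph. Then for every edge e ∈ E, the graph G − e contains a spanning (k,ℓ)-tight subgraph; i.e., G is (k,ℓ)-redundant. -/
open scoped Classical

namespace Stmt6

set_option linter.unusedSectionVars false

variable {V E : Type}

/-- The set of edges of `F` induced in a vertex set `X`. -/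
noncomputable def ind (ends : E → Sym2 V) (F : Finset E) (X : Finset V) : Finset E :=
  F.filter (fun e => ∀ v ∈ ends e, v ∈ X)

lemma mem_ind {ends : E → Sym2 V} {F : Finset E} {X : Finset V} {e : E} :
    e ∈ ind ends F X ↔ e ∈ F ∧ ∀ v ∈ ends e, v ∈ X := Finset.mem_filter

lemma ind_def (ends : E → Sym2 V) (F : Finset E) (X : Finset V) :
    ind ends F X = F.filter (fun e => ∀ v ∈ ends e, v ∈ X) := rfl

lemma exists_rep (ends : E → Sym2 V) (hloop : ∀ e, ¬ (ends e).IsDiag) (e : E) :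
    ∃ a b : V, a ≠ b ∧ ends e = s(a, b) := by
  obtain ⟨a, b, h⟩ : ∃ a b : V, ends e = s(a, b) := by
    have : ∀ z : Sym2 V, ∃ a b : V, z = s(a, b) := by
      intro z
      induction z using Sym2.ind with
      | _ x y => exact ⟨x, y, rfl⟩
    exact this (ends e)
  refine ⟨a, b, fun hab => hloop e ?_, h⟩
  rw [h]; exact Sym2.mk_isDiag_iff.2 hab

lemma ind_singleton (ends : E → Sym2 V) (hloop : ∀ e, ¬ (ends e).IsDiag)
    (F : Finset E) (v : V) : ind ends F ({v} : Finset V) = ∅ := by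
  rw [ind, Finset.filter_eq_empty_iff]
  intro e _ h
  obtain ⟨a, b, hab, hre⟩ := exists_rep ends hloop e
  have ha : a ∈ ends e := by rw [hre]; exact Sym2.mem_mk_left a b
  have hb : b ∈ ends e := by rw [hre]; exact Sym2.mem_mk_right a b
  have h1 := Finset.mem_singleton.1 (h a ha)
  have h2 := Finset.mem_singleton.1 (h b hb)
  exact hab (h1.trans h2.symm)

lemma card_ind_submod (ends : E → Sym2 V) (F : Finset E) (X Y : Finset V) :
    (ind ends F X).card + (ind ends F Y).card ≤
      (ind ends F (X ∪ Y)).card + (ind ends F (X ∩ Y)).card := by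
  have h1 : ind ends F X ∪ ind ends F Y ⊆ ind ends F (X ∪ Y) := by
    intro e he
    rcases Finset.mem_union.1 he with h | h <;> rw [mem_ind] at h ⊢
    · exact ⟨h.1, fun v hv => Finset.mem_union.2 (Or.inl (h.2 v hv))⟩
    · exact ⟨h.1, fun v hv => Finset.mem_union.2 (Or.inr (h.2 v hv))⟩
  have h2 : ind ends F X ∩ ind ends F Y ⊆ ind ends F (X ∩ Y) := by
    intro e he
    have ha := mem_ind.1 (Finset.mem_inter.1 he).1
    have hb := mem_ind.1 (Finset.mem_inter.1 he).2
    exact mem_ind.2 ⟨ha.1, fun v hv => Finset.mem_inter.2 ⟨ha.2 v hv, hb.2 v hv⟩⟩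
  calc (ind ends F X).card + (ind ends F Y).card
      = (ind ends F X ∪ ind ends F Y).card + (ind ends F X ∩ ind ends F Y).card :=
        (Finset.card_union_add_card_inter _ _).symm
    _ ≤ _ := add_le_add (Finset.card_le_card h1) (Finset.card_le_card h2)

end Stmt6

/-- If `0 < ℓ ≤ k` and the multigraph `G` is `2k`-edge-connected
(every nonempty proper vertex subset has at least `2k` edges leaving it), then for every
edge `e₀`, `G - e₀` contains a spanning `(k,ℓ)`-tight subgraph; i.e. `G` is
`(k,ℓ)`-redundant. -/
theorem stmt_6 {V E : Type} [Fintype V] [Fintype E]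
    (ends : E → Sym2 V) (hloop : ∀ e, ¬ (ends e).IsDiag)
    (k ℓ : ℤ) (hl0 : 0 < ℓ) (hlk : ℓ ≤ k)
    (hconn : ∀ X : Finset V, X.Nonempty → X ≠ Finset.univ →
      2 * k ≤ ((Finset.univ.filter
        (fun e => (∃ v ∈ ends e, v ∈ X) ∧ ∃ v ∈ ends e, v ∉ X)).card : ℤ)) :
    ∀ e₀ : E, ∃ F : Finset E, e₀ ∉ F ∧ SparseM ends k ℓ F ∧
      (F.card : ℤ) = k * Fintype.card V - ℓ := by
  intro e₀
  obtain ⟨u₀, v₀, hne₀, -⟩ := Stmt6.exists_rep ends hloop e₀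
  have hV2 : 2 ≤ Fintype.card V :=
    Fintype.one_lt_card_iff_nontrivial.2 ⟨⟨u₀, v₀, hne₀⟩⟩
  -- choose a maximum sparse set avoiding e₀
  set 𝒮 : Finset (Finset E) :=
    Finset.univ.filter (fun F => e₀ ∉ F ∧ SparseM ends k ℓ F) with h𝒮
  have hSempty : (∅ : Finset E) ∈ 𝒮 := by
    rw [h𝒮, Finset.mem_filter]
    refine ⟨Finset.mem_univ _, Finset.notMem_empty _, fun X hX => ?_⟩
    have hX' : (2 : ℤ) ≤ (X.card : ℤ) := by exact_mod_cast hX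
    simp only [Finset.filter_empty, Finset.card_empty, Nat.cast_zero]
    nlinarith
  obtain ⟨F, hFS, hFmax⟩ := 𝒮.exists_max_image Finset.card ⟨∅, hSempty⟩
  rw [h𝒮, Finset.mem_filter] at hFS
  obtain ⟨-, he₀F, hsp⟩ := hFS
  have hsp' : ∀ X : Finset V, 2 ≤ X.card →
      ((Stmt6.ind ends F X).card : ℤ) ≤ k * X.card - ℓ := fun X hX => by
    rw [Stmt6.ind_def]; exact hsp X hX
  refine ⟨F, he₀F, hsp, ?_⟩
  have hFuniv : Stmt6.ind ends F Finset.univ = F := by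
    ext e
    simp only [Stmt6.mem_ind, Finset.mem_univ, implies_true, and_true]
  have hup : (F.card : ℤ) ≤ k * Fintype.card V - ℓ := by
    have h := hsp' Finset.univ (by simpa using hV2)
    rw [hFuniv, Finset.card_univ] at h
    exact h
  -- tight sets
  set Tight : Finset V → Prop :=
    fun X => 2 ≤ X.card ∧ ((Stmt6.ind ends F X).card : ℤ) = k * X.card - ℓ with hTight
  -- augmentation: any edge outside F (other than e₀) lies in a tight set
  have haug : ∀ e, e ∉ F → e ≠ e₀ → ∃ X, Tight X ∧ ∀ v ∈ ends e, v ∈ X := by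
    intro e heF hee₀
    have hnotS : insert e F ∉ 𝒮 := by
      intro hmem
      have h := hFmax _ hmem
      rw [Finset.card_insert_of_notMem heF] at h
      omega
    have hnot : ¬ SparseM ends k ℓ (insert e F) := by
      intro hs
      apply hnotS
      rw [h𝒮, Finset.mem_filter]
      refine ⟨Finset.mem_univ _, ?_, hs⟩
      rw [Finset.mem_insert]
      rintro (h | h)
      · exact hee₀ h.symm
      · exact he₀F h
    rw [SparseM] at hnot
    push_neg at hnot
    obtain ⟨X, hX2, hXgt⟩ := hnot
    have hmem : ∀ v ∈ ends e, v ∈ X := by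
      by_contra hcon
      rw [Finset.filter_insert, if_neg hcon] at hXgt
      exact absurd (hsp X hX2) (not_le.2 hXgt)
    rw [Finset.filter_insert, if_pos hmem, ← Stmt6.ind_def ends F X] at hXgt
    refine ⟨X, ⟨hX2, le_antisymm (hsp' X hX2) ?_⟩, hmem⟩
    have h7 : ((insert e (Stmt6.ind ends F X)).card : ℤ)
        ≤ ((Stmt6.ind ends F X).card : ℤ) + 1 := by
      exact_mod_cast Finset.card_insert_le e (Stmt6.ind ends F X)
    have h8 := hsp' X hX2
    linarith
  -- union of intersecting tight sets is tight
  have hTU : ∀ X Y, Tight X → Tight Y → (X ∩ Y).Nonempty → Tight (X ∪ Y) := by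
    rintro X Y ⟨hX2, hXt⟩ ⟨hY2, hYt⟩ ⟨v, hv⟩
    have hU2 : 2 ≤ (X ∪ Y).card :=
      le_trans hX2 (Finset.card_le_card Finset.subset_union_left)
    have hcards : ((X ∪ Y).card : ℤ) + ((X ∩ Y).card : ℤ) = (X.card : ℤ) + Y.card := by
      exact_mod_cast Finset.card_union_add_card_inter X Y
    have hsmz : ((Stmt6.ind ends F X).card : ℤ) + ((Stmt6.ind ends F Y).card : ℤ)
        ≤ ((Stmt6.ind ends F (X ∪ Y)).card : ℤ) + ((Stmt6.ind ends F (X ∩ Y)).card : ℤ) := by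
      exact_mod_cast Stmt6.card_ind_submod ends F X Y
    have hle : ((Stmt6.ind ends F (X ∪ Y)).card : ℤ) ≤ k * (X ∪ Y).card - ℓ := hsp' _ hU2
    refine ⟨hU2, le_antisymm hle ?_⟩
    rcases Nat.lt_or_ge (X ∩ Y).card 2 with hI | hI
    · have h1 : (X ∩ Y).card = 1 := by
        have := Finset.card_pos.2 ⟨v, hv⟩
        omega
      obtain ⟨w, hw⟩ := Finset.card_eq_one.1 h1
      have hind0 : Stmt6.ind ends F (X ∩ Y) = ∅ := by
        rw [hw]; exact Stmt6.ind_singleton ends hloop F w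
      rw [hind0] at hsmz
      simp only [Finset.card_empty, Nat.cast_zero, add_zero] at hsmz
      have hI1 : ((X ∩ Y).card : ℤ) = 1 := by exact_mod_cast h1
      have hmul : k * ((X ∪ Y).card : ℤ) + k * ((X ∩ Y).card : ℤ)
          = k * (X.card : ℤ) + k * (Y.card : ℤ) := by linear_combination k * hcards
      have hk1 : k * ((X ∩ Y).card : ℤ) = k := by rw [hI1]; ring
      linarith
    · have hleI := hsp' _ hI
      have hmul : k * ((X ∪ Y).card : ℤ) + k * ((X ∩ Y).card : ℤ)
          = k * (X.card : ℤ) + k * (Y.card : ℤ) := by linear_combination k * hcards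
      linarith
  -- maximal tight sets
  set 𝒯 : Finset (Finset V) := Finset.univ.filter Tight with h𝒯
  set M : Finset (Finset V) := 𝒯.filter (fun X => ∀ Y ∈ 𝒯, X ⊆ Y → X = Y) with hM
  have hMtight : ∀ X ∈ M, Tight X := by
    intro X hX
    rw [hM, Finset.mem_filter, h𝒯, Finset.mem_filter] at hX
    exact hX.1.2
  have hMmax : ∀ X ∈ M, ∀ Z, Tight Z → X ⊆ Z → X = Z := by
    intro X hX Z hZ hXZ
    rw [hM, Finset.mem_filter] at hX
    exact hX.2 Z (by rw [h𝒯, Finset.mem_filter]; exact ⟨Finset.mem_univ _, hZ⟩) hXZ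
  have hmaxsup : ∀ X, Tight X → ∃ Y ∈ M, X ⊆ Y := by
    intro X hX
    have hne : (𝒯.filter (fun Z => X ⊆ Z)).Nonempty :=
      ⟨X, by rw [Finset.mem_filter, h𝒯, Finset.mem_filter]
             exact ⟨⟨Finset.mem_univ _, hX⟩, Finset.Subset.refl X⟩⟩
    obtain ⟨Y, hY, hYmax⟩ := Finset.exists_maximal hne
    rw [Finset.mem_filter] at hY
    refine ⟨Y, ?_, hY.2⟩
    rw [hM, Finset.mem_filter]
    refine ⟨hY.1, fun Z hZ hYZ => ?_⟩
    have hXZ : X ⊆ Z := hY.2.trans hYZ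
    have hnot := hYmax (Finset.mem_filter.2 ⟨hZ, hXZ⟩) hYZ
    exact le_antisymm hYZ hnot
  have hMdisj : ∀ X ∈ M, ∀ Y ∈ M, ∀ v, v ∈ X → v ∈ Y → X = Y := by
    intro X hX Y hY v hvX hvY
    have hT := hTU X Y (hMtight X hX) (hMtight Y hY) ⟨v, Finset.mem_inter.2 ⟨hvX, hvY⟩⟩
    have h1 := hMmax X hX _ hT Finset.subset_union_left
    have h2 := hMmax Y hY _ hT Finset.subset_union_right
    exact h1.trans h2.symm
  -- case: the whole vertex set is tight
  by_cases htu : Tight Finset.univ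
  · have h := htu.2
    rw [hFuniv, Finset.card_univ] at h
    exact h
  -- otherwise: build the partition into maximal tight sets and singletons
  have hpex : ∀ v : V, ∃ P : Finset V,
      v ∈ P ∧ (P ∈ M ∨ (P = {v} ∧ ∀ X ∈ M, v ∉ X)) := by
    intro v
    by_cases h : ∃ X ∈ M, v ∈ X
    · obtain ⟨X, hX, hv⟩ := h; exact ⟨X, hv, Or.inl hX⟩
    · push_neg at h
      exact ⟨{v}, Finset.mem_singleton_self v, Or.inr ⟨rfl, h⟩⟩
  choose p hpmem hpcase using hpex
  have hpeq : ∀ v P, P ∈ M → v ∈ P → p v = P := by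
    intro v P hP hv
    rcases hpcase v with h | ⟨h, hall⟩
    · exact hMdisj _ h _ hP v (hpmem v) hv
    · exact absurd hv (hall P hP)
  have hpu : ∀ u v, u ∈ p v → p u = p v := by
    intro u v hu
    rcases hpcase v with h | ⟨h, hall⟩
    · exact hpeq u _ h hu
    · rw [h] at hu
      rw [Finset.mem_singleton.1 hu]
  set parts : Finset (Finset V) := Finset.univ.image p with hparts
  have hppart : ∀ v, p v ∈ parts := fun v => Finset.mem_image_of_mem p (Finset.mem_univ v)
  have hpart_rep : ∀ P ∈ parts, ∀ v ∈ P, p v = P := by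
    intro P hP v hv
    obtain ⟨w, -, rfl⟩ := Finset.mem_image.1 hP
    exact hpu v w hv
  have hpart_ne : ∀ P ∈ parts, P.Nonempty := by
    intro P hP
    obtain ⟨w, -, rfl⟩ := Finset.mem_image.1 hP
    exact ⟨w, hpmem w⟩
  have hpart_proper : ∀ P ∈ parts, P ≠ Finset.univ := by
    intro P hP h
    obtain ⟨w, -, rfl⟩ := Finset.mem_image.1 hP
    rcases hpcase w with hM' | ⟨hs, -⟩
    · exact htu (h ▸ hMtight _ hM')
    · rw [hs] at h
      have h2 := congrArg Finset.card h
      rw [Finset.card_singleton] at h2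
      have h3 : (Finset.univ : Finset V).card = Fintype.card V := Finset.card_univ
      omega
  have hMsub : M ⊆ parts := by
    intro X hX
    have h2 : 2 ≤ X.card := (hMtight X hX).1
    have hpos : 0 < X.card := by omega
    obtain ⟨v, hv⟩ := Finset.card_pos.1 hpos
    rw [← hpeq v X hX hv]
    exact hppart v
  -- crossing edges
  set cross : E → Prop := fun e => ¬ ∃ P ∈ parts, ∀ v ∈ ends e, v ∈ P with hcross
  -- decomposition of F
  have hdisjind : ∀ P ∈ parts, ∀ Q ∈ parts, P ≠ Q →
      Disjoint (Stmt6.ind ends F P) (Stmt6.ind ends F Q) := by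
    intro P hP Q hQ hPQ
    rw [Finset.disjoint_left]
    intro e heP heQ
    obtain ⟨a, b, hab, hre⟩ := Stmt6.exists_rep ends hloop e
    have ha : a ∈ ends e := by rw [hre]; exact Sym2.mem_mk_left a b
    have haP : a ∈ P := (Stmt6.mem_ind.1 heP).2 a ha
    have haQ : a ∈ Q := (Stmt6.mem_ind.1 heQ).2 a ha
    exact hPQ ((hpart_rep P hP a haP).symm.trans (hpart_rep Q hQ a haQ))
  have hcover : F = parts.biUnion (fun P => Stmt6.ind ends F P) ∪ F.filter cross := by
    ext e
    constructor
    · intro he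
      rw [Finset.mem_union]
      by_cases hc : cross e
      · exact Or.inr (Finset.mem_filter.2 ⟨he, hc⟩)
      · rw [hcross, not_not] at hc
        obtain ⟨P, hP, hall⟩ := hc
        exact Or.inl (Finset.mem_biUnion.2 ⟨P, hP, Stmt6.mem_ind.2 ⟨he, hall⟩⟩)
    · intro he
      rcases Finset.mem_union.1 he with h | h
      · obtain ⟨P, -, hP⟩ := Finset.mem_biUnion.1 h
        exact (Stmt6.mem_ind.1 hP).1
      · exact (Finset.mem_filter.1 h).1
  have hdisjUC : Disjoint (parts.biUnion (fun P => Stmt6.ind ends F P)) (F.filter cross) := by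
    rw [Finset.disjoint_left]
    intro e he he'
    obtain ⟨P, hP, hPe⟩ := Finset.mem_biUnion.1 he
    exact (Finset.mem_filter.1 he').2 ⟨P, hP, (Stmt6.mem_ind.1 hPe).2⟩
  have hC1 : F.card = ∑ P ∈ parts, (Stmt6.ind ends F P).card + (F.filter cross).card := by
    conv_lhs => rw [hcover]
    rw [Finset.card_union_of_disjoint hdisjUC, Finset.card_biUnion hdisjind]
  -- sums over parts
  set S : Finset V := M.biUnion id with hS
  have hσ : S.card = ∑ X ∈ M, X.card := by
    rw [hS]
    apply Finset.card_biUnion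
    intro X hX Y hY hXY
    show Disjoint X Y; rw [Finset.disjoint_left]
    intro v hvX hvY
    exact hXY (hMdisj X hX Y hY v hvX hvY)
  have hsum_parts : (∑ P ∈ parts, ((Stmt6.ind ends F P).card : ℤ))
      = k * S.card - ℓ * M.card := by
    rw [← Finset.sum_sdiff hMsub]
    have h0 : ∀ P ∈ parts \ M, ((Stmt6.ind ends F P).card : ℤ) = 0 := by
      intro P hP
      rw [Finset.mem_sdiff] at hP
      obtain ⟨w, -, rfl⟩ := Finset.mem_image.1 hP.1
      rcases hpcase w with hM' | ⟨hs, -⟩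
      · exact absurd hM' hP.2
      · rw [hs, Stmt6.ind_singleton ends hloop F w]
        simp
    rw [Finset.sum_eq_zero h0, zero_add,
        Finset.sum_congr rfl (fun X hX => (hMtight X hX).2)]
    rw [Finset.sum_sub_distrib, ← Finset.mul_sum, Finset.sum_const, hσ]
    push_cast
    ring
  -- sizes
  have hσn : S.card ≤ Fintype.card V := Finset.card_le_univ S
  have hpartsM : parts \ M = (Finset.univ \ S).image (fun v => ({v} : Finset V)) := by
    ext P
    simp only [Finset.mem_sdiff, Finset.mem_image, Finset.mem_univ, true_and]
    constructor
    · rintro ⟨hP, hPM⟩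
      obtain ⟨w, -, rfl⟩ := Finset.mem_image.1 hP
      rcases hpcase w with hM' | ⟨hs, hall⟩
      · exact absurd hM' hPM
      · refine ⟨w, ?_, hs.symm⟩
        intro hwS
        obtain ⟨X, hX, hwX⟩ := Finset.mem_biUnion.1 hwS
        exact hall X hX hwX
    · rintro ⟨w, hw, rfl⟩
      constructor
      · rcases hpcase w with hM' | ⟨hs, -⟩
        · exact absurd (Finset.mem_biUnion.2 ⟨_, hM', hpmem w⟩) hw
        · rw [← hs]; exact hppart w
      · intro hMmem
        exact hw (Finset.mem_biUnion.2 ⟨{w}, hMmem, Finset.mem_singleton_self w⟩)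
  have hr : parts.card = M.card + (Fintype.card V - S.card) := by
    rw [← Finset.card_sdiff_add_card_eq_card hMsub, hpartsM,
        Finset.card_image_of_injective _ Finset.singleton_injective,
        Finset.card_sdiff_of_subset (Finset.subset_univ S), Finset.card_univ]
    omega
  have hrz : (parts.card : ℤ) = (M.card : ℤ) + ((Fintype.card V : ℤ) - S.card) := by
    rw [hr]
    push_cast [Nat.cast_sub hσn]
    ring
  -- per-edge crossing count
  have hkey : ∀ e : E, (parts.filter
      (fun P => (∃ v ∈ ends e, v ∈ P) ∧ ∃ v ∈ ends e, v ∉ P)).card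
      = if cross e then 2 else 0 := by
    intro e
    obtain ⟨a, b, hab, hre⟩ := Stmt6.exists_rep ends hloop e
    have hmem : ∀ w : V, w ∈ ends e ↔ w = a ∨ w = b := by
      intro w; rw [hre, Sym2.mem_iff]
    by_cases hpe : p a = p b
    · rw [if_neg, Finset.card_eq_zero.2]
      · rw [Finset.filter_eq_empty_iff]
        rintro P hP ⟨⟨w, hw, hwP⟩, ⟨w', hw', hw'P⟩⟩
        have hPw : p w = P := hpart_rep P hP w hwP
        have hPa : P = p a := by
          rcases (hmem w).1 hw with rfl | rfl
          · exact hPw.symm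
          · rw [← hPw, hpe]
        apply hw'P
        rcases (hmem w').1 hw' with rfl | rfl
        · rw [hPa]; exact hpmem w'
        · rw [hPa, hpe]; exact hpmem w'
      · rw [hcross, not_not]
        refine ⟨p a, hppart a, fun w hw => ?_⟩
        rcases (hmem w).1 hw with rfl | rfl
        · exact hpmem w
        · rw [hpe]; exact hpmem w
    · rw [if_pos]
      · have heq : parts.filter
            (fun P => (∃ v ∈ ends e, v ∈ P) ∧ ∃ v ∈ ends e, v ∉ P) = {p a, p b} := by
          ext P
          simp only [Finset.mem_filter, Finset.mem_insert, Finset.mem_singleton]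
          constructor
          · rintro ⟨hP, ⟨w, hw, hwP⟩, -⟩
            have hPw : p w = P := hpart_rep P hP w hwP
            rcases (hmem w).1 hw with rfl | rfl
            · exact Or.inl hPw.symm
            · exact Or.inr hPw.symm
          · rintro (rfl | rfl)
            · refine ⟨hppart a, ⟨a, (hmem a).2 (Or.inl rfl), hpmem a⟩,
                ⟨b, (hmem b).2 (Or.inr rfl), fun hbp => hpe (hpu b a hbp).symm⟩⟩
            · refine ⟨hppart b, ⟨b, (hmem b).2 (Or.inr rfl), hpmem b⟩,
                ⟨a, (hmem a).2 (Or.inl rfl), fun hap => hpe (hpu a b hap)⟩⟩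
        rw [heq, Finset.card_pair hpe]
      · rintro ⟨P, hP, hall⟩
        have ha : a ∈ P := hall a ((hmem a).2 (Or.inl rfl))
        have hb : b ∈ P := hall b ((hmem b).2 (Or.inr rfl))
        exact hpe ((hpart_rep P hP a ha).trans (hpart_rep P hP b hb).symm)
  -- double counting
  have hdouble : ∑ P ∈ parts, (Finset.univ.filter
      (fun e => (∃ v ∈ ends e, v ∈ P) ∧ ∃ v ∈ ends e, v ∉ P)).card
      = 2 * (Finset.univ.filter cross).card := by
    have h1 : ∀ P : Finset V, (Finset.univ.filter
        (fun e => (∃ v ∈ ends e, v ∈ P) ∧ ∃ v ∈ ends e, v ∉ P)).card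
        = ∑ e ∈ Finset.univ, (if (∃ v ∈ ends e, v ∈ P) ∧ ∃ v ∈ ends e, v ∉ P then (1 : ℕ) else 0) := by
      intro P
      rw [Finset.card_filter]
    calc ∑ P ∈ parts, (Finset.univ.filter
          (fun e => (∃ v ∈ ends e, v ∈ P) ∧ ∃ v ∈ ends e, v ∉ P)).card
        = ∑ P ∈ parts, ∑ e ∈ Finset.univ,
            if (∃ v ∈ ends e, v ∈ P) ∧ ∃ v ∈ ends e, v ∉ P then 1 else 0 :=
          Finset.sum_congr rfl (fun P _ => h1 P)
      _ = ∑ e ∈ Finset.univ, ∑ P ∈ parts,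
            if (∃ v ∈ ends e, v ∈ P) ∧ ∃ v ∈ ends e, v ∉ P then 1 else 0 :=
          Finset.sum_comm
      _ = ∑ e ∈ Finset.univ, (if cross e then 2 else 0) := by
          refine Finset.sum_congr rfl (fun e _ => ?_)
          rw [← Finset.card_filter]
          exact hkey e
      _ = 2 * (Finset.univ.filter cross).card := by
          rw [Finset.card_filter, Finset.mul_sum]
          refine Finset.sum_congr rfl (fun e _ => ?_)
          split <;> ring
  have hcut : k * (parts.card : ℤ) ≤ ((Finset.univ.filter cross).card : ℤ) := by
    have h1 : ∀ P ∈ parts, 2 * k ≤ ((Finset.univ.filter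
        (fun e => (∃ v ∈ ends e, v ∈ P) ∧ ∃ v ∈ ends e, v ∉ P)).card : ℤ) :=
      fun P hP => hconn P (hpart_ne P hP) (hpart_proper P hP)
    have h2 : (2 * k) * (parts.card : ℤ)
        ≤ 2 * ((Finset.univ.filter cross).card : ℤ) := by
      calc (2 * k) * (parts.card : ℤ) = ∑ _P ∈ parts, (2 * k : ℤ) := by
            rw [Finset.sum_const, nsmul_eq_mul]; ring
        _ ≤ ∑ P ∈ parts, ((Finset.univ.filter
            (fun e => (∃ v ∈ ends e, v ∈ P) ∧ ∃ v ∈ ends e, v ∉ P)).card : ℤ) :=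
            Finset.sum_le_sum h1
        _ = 2 * ((Finset.univ.filter cross).card : ℤ) := by exact_mod_cast hdouble
    linarith
  -- crossing edges other than e₀ are all in F
  have hFcross : ((Finset.univ.filter cross).card : ℤ) - 1 ≤ ((F.filter cross).card : ℤ) := by
    have hsub : (Finset.univ.filter cross).erase e₀ ⊆ F.filter cross := by
      intro e he
      rw [Finset.mem_erase, Finset.mem_filter] at he
      obtain ⟨hee₀, -, hce⟩ := he
      rw [Finset.mem_filter]
      refine ⟨?_, hce⟩
      by_contra heF
      obtain ⟨X, hXt, hXe⟩ := haug e heF hee₀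
      obtain ⟨Y, hY, hXY⟩ := hmaxsup X hXt
      exact hce ⟨Y, hMsub hY, fun v hv => hXY (hXe v hv)⟩
    have h1 := Finset.card_le_card hsub
    have h2 := Finset.pred_card_le_card_erase
      (s := Finset.univ.filter cross) (a := e₀)
    have h3 : (Finset.univ.filter cross).card ≤ (F.filter cross).card + 1 := by omega
    have h4 : ((Finset.univ.filter cross).card : ℤ) ≤ ((F.filter cross).card : ℤ) + 1 := by
      exact_mod_cast h3
    linarith
  -- final arithmetic
  have hC1z : (F.card : ℤ) = ∑ P ∈ parts, ((Stmt6.ind ends F P).card : ℤ)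
      + ((F.filter cross).card : ℤ) := by exact_mod_cast hC1
  rw [hsum_parts] at hC1z
  have hexp : k * (parts.card : ℤ)
      = k * (M.card : ℤ) + k * (Fintype.card V : ℤ) - k * (S.card : ℤ) := by
    rw [hrz]; ring
  have hlt : ℓ * (M.card : ℤ) ≤ k * (M.card : ℤ) :=
    mul_le_mul_of_nonneg_right hlk (Nat.cast_nonneg _)
  linarith
end

section
/- Let k and ℓ be integers with k+1 ≤ ℓ ≤ 2k−1. Then the complete graph K_{2ℓ+1} is (k,ℓ)-redundant: for every edge e of K_{2ℓ+1}, the graph K_{2ℓ+1} − e contains a spanning (k,ℓ)-tight subgraph. -/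
open scoped Classical

/-- A set `F` of edges of a simple graph on `Fin n` is `(k,ℓ)`-sparse: every vertex set `X`
with `|X| ≥ 2` induces at most `k|X| - ℓ` edges of `F`. -/
noncomputable def SparseS {n : ℕ} (k ℓ : ℤ) (F : Finset (Sym2 (Fin n))) : Prop :=
  ∀ X : Finset (Fin n), 2 ≤ X.card →
    ((F.filter (fun s => ∀ v ∈ s, v ∈ X)).card : ℤ) ≤ k * X.card - ℓ

lemma mod_cases' {n x : ℕ} (hn : 0 < n) (hx : x < 2*n) :
    x % n = x ∨ (n ≤ x ∧ x % n + n = x) := by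
  rcases Nat.lt_or_ge x n with h | h
  · exact Or.inl (Nat.mod_eq_of_lt h)
  · right
    refine ⟨h, ?_⟩
    rw [Nat.mod_eq_sub_mod h, Nat.mod_eq_of_lt (by omega)]
    omega

/-- the circulant edge function -/
noncomputable def cf (ℓ : ℕ) (p : ℕ × ℕ) : Sym2 (Fin (2*ℓ+1)) :=
  s(⟨p.1 % (2*ℓ+1), Nat.mod_lt _ (by omega)⟩,
    ⟨(p.1 + p.2 + 1) % (2*ℓ+1), Nat.mod_lt _ (by omega)⟩)

/-- the matching edge function -/
noncomputable def mf (ℓ : ℕ) (a : ℕ) : Sym2 (Fin (2*ℓ+1)) :=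
  s(⟨a % (2*ℓ+1), Nat.mod_lt _ (by omega)⟩,
    ⟨(a + ℓ) % (2*ℓ+1), Nat.mod_lt _ (by omega)⟩)

noncomputable def CC (ℓ d : ℕ) : Finset (Sym2 (Fin (2*ℓ+1))) :=
  ((Finset.range (2*ℓ+1)) ×ˢ (Finset.range d)).image (cf ℓ)

noncomputable def MM (ℓ : ℕ) : Finset (Sym2 (Fin (2*ℓ+1))) :=
  (Finset.range ℓ).image (mf ℓ)

noncomputable def RR (ℓ d : ℕ) : Finset (Sym2 (Fin (2*ℓ+1))) := CC ℓ d ∪ MM ℓ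

lemma card_CC (ℓ d : ℕ) (hd : 2*d < ℓ) : (CC ℓ d).card = (2*ℓ+1)*d := by
  rw [CC, Finset.card_image_of_injOn, Finset.card_product, Finset.card_range,
    Finset.card_range]
  intro p hp q hq h
  simp only [Finset.mem_coe, Finset.mem_product, Finset.mem_range] at hp hq
  obtain ⟨a, t⟩ := p; obtain ⟨b, u⟩ := q
  obtain ⟨ha, ht⟩ := hp; obtain ⟨hb, hu⟩ := hq
  simp only [cf, Sym2.eq_iff, Fin.mk.injEq] at h
  have h1 := mod_cases' (n := 2*ℓ+1) (x := a) (by omega) (by omega)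
  have h2 := mod_cases' (n := 2*ℓ+1) (x := b) (by omega) (by omega)
  have h3 := mod_cases' (n := 2*ℓ+1) (x := a+t+1) (by omega) (by omega)
  have h4 := mod_cases' (n := 2*ℓ+1) (x := b+u+1) (by omega) (by omega)
  have : a = b ∧ t = u := by omega
  simp [this.1, this.2]

lemma card_MM (ℓ : ℕ) : (MM ℓ).card = ℓ := by
  rw [MM, Finset.card_image_of_injOn, Finset.card_range]
  intro a ha b hb h
  simp only [Finset.mem_coe, Finset.mem_range] at ha hb
  simp only [mf, Sym2.eq_iff, Fin.mk.injEq] at h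
  have h1 := mod_cases' (n := 2*ℓ+1) (x := a) (by omega) (by omega)
  have h2 := mod_cases' (n := 2*ℓ+1) (x := b) (by omega) (by omega)
  have h3 := mod_cases' (n := 2*ℓ+1) (x := a+ℓ) (by omega) (by omega)
  have h4 := mod_cases' (n := 2*ℓ+1) (x := b+ℓ) (by omega) (by omega)
  omega

lemma disj_CC_MM (ℓ d : ℕ) (hd : 2*d < ℓ) : Disjoint (CC ℓ d) (MM ℓ) := by
  rw [Finset.disjoint_left]
  intro z hz hz'
  simp only [CC, MM, Finset.mem_image, Finset.mem_product, Finset.mem_range] at hz hz'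
  obtain ⟨⟨a, t⟩, ⟨⟨ha, ht⟩, rfl⟩⟩ := hz
  obtain ⟨b, hb, h⟩ := hz'
  simp only [mf, cf, Sym2.eq_iff, Fin.mk.injEq] at h
  have h1 := mod_cases' (n := 2*ℓ+1) (x := a) (by omega) (by omega)
  have h2 := mod_cases' (n := 2*ℓ+1) (x := b) (by omega) (by omega)
  have h3 := mod_cases' (n := 2*ℓ+1) (x := a+t+1) (by omega) (by omega)
  have h4 := mod_cases' (n := 2*ℓ+1) (x := b+ℓ) (by omega) (by omega)
  omega

lemma deg_CC (ℓ d : ℕ) (hd : 2*d < ℓ) (v : Fin (2*ℓ+1)) :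
    ((CC ℓ d).filter (fun s => v ∈ s)).card ≤ 2*d := by
  classical
  have hsub : (CC ℓ d).filter (fun s => v ∈ s) ⊆
      ((Finset.range d).image (fun t => ((v : ℕ), t))).image (cf ℓ) ∪
      ((Finset.range d).image
          (fun t => (((v : ℕ) + (2*ℓ+1) - (t+1)) % (2*ℓ+1), t))).image (cf ℓ) := by
    intro z hz
    simp only [Finset.mem_filter, CC, Finset.mem_image, Finset.mem_product,
      Finset.mem_range] at hz
    obtain ⟨⟨⟨a, t⟩, ⟨⟨ha, ht⟩, rfl⟩⟩, hv⟩ := hz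
    simp only [cf, Sym2.mem_iff] at hv
    simp only [Finset.mem_union, Finset.mem_image, Finset.mem_range]
    rcases hv with hv | hv
    · left
      refine ⟨(a, t), ⟨t, ht, ?_⟩, rfl⟩
      have h1 := mod_cases' (n := 2*ℓ+1) (x := a) (by omega) (by omega)
      have hva : (v : ℕ) = a := by
        subst hv; simp only [Fin.val_mk]; omega
      simp [hva]
    · right
      refine ⟨(a, t), ⟨t, ht, ?_⟩, rfl⟩
      have h3 := mod_cases' (n := 2*ℓ+1) (x := a+t+1) (by omega) (by omega)
      have hv' : (v : ℕ) = (a+t+1) % (2*ℓ+1) := by subst hv; rfl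
      have : (v : ℕ) + (2*ℓ+1) - (t+1) = a ∨ (v : ℕ) + (2*ℓ+1) - (t+1) = a + (2*ℓ+1) := by
        omega
      rcases this with h | h
      · rw [h, Nat.mod_eq_of_lt (by omega)]
      · rw [h, Nat.add_mod_right, Nat.mod_eq_of_lt (by omega)]
  calc ((CC ℓ d).filter (fun s => v ∈ s)).card ≤ _ := Finset.card_le_card hsub
    _ ≤ _ + _ := Finset.card_union_le _ _
    _ ≤ 2*d := by
        have b1 := Finset.card_image_le (s := (Finset.range d).image
          (fun t => ((v : ℕ), t))) (f := cf ℓ)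
        have b2 := Finset.card_image_le (s := (Finset.range d).image
          (fun t => (((v : ℕ) + (2*ℓ+1) - (t+1)) % (2*ℓ+1), t))) (f := cf ℓ)
        have c1 := Finset.card_image_le (s := Finset.range d)
          (f := fun t => ((v : ℕ), t))
        have c2 := Finset.card_image_le (s := Finset.range d)
          (f := fun t => (((v : ℕ) + (2*ℓ+1) - (t+1)) % (2*ℓ+1), t))
        simp only [Finset.card_range] at c1 c2
        omega

lemma deg_MM (ℓ : ℕ) (v : Fin (2*ℓ+1)) :
    ((MM ℓ).filter (fun s => v ∈ s)).card ≤ 1 := by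
  classical
  have hsub : (MM ℓ).filter (fun s => v ∈ s) ⊆
      {mf ℓ (if (v : ℕ) < ℓ then (v : ℕ) else (v : ℕ) - ℓ)} := by
    intro z hz
    simp only [Finset.mem_filter, MM, Finset.mem_image, Finset.mem_range] at hz
    obtain ⟨⟨a, ha, rfl⟩, hv⟩ := hz
    simp only [mf, Sym2.mem_iff] at hv
    have h1 := mod_cases' (n := 2*ℓ+1) (x := a) (by omega) (by omega)
    have h3 := mod_cases' (n := 2*ℓ+1) (x := a+ℓ) (by omega) (by omega)
    have hva : (v : ℕ) = a % (2*ℓ+1) ∨ (v : ℕ) = (a+ℓ) % (2*ℓ+1) := by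
      rcases hv with hv | hv <;> [left; right] <;> (subst hv; rfl)
    have : a = (if (v : ℕ) < ℓ then (v : ℕ) else (v : ℕ) - ℓ) := by
      split_ifs with h <;> omega
    rw [Finset.mem_singleton, ← this]
  exact (Finset.card_le_card hsub).trans (by simp)

lemma RR_sub (ℓ d : ℕ) (hd : 2*d < ℓ) :
    RR ℓ d ⊆ (⊤ : SimpleGraph (Fin (2*ℓ+1))).edgeFinset := by
  intro z hz
  simp only [RR, Finset.mem_union, CC, MM, Finset.mem_image, Finset.mem_product,
    Finset.mem_range] at hz
  rw [SimpleGraph.mem_edgeFinset]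
  rcases hz with ⟨⟨a, t⟩, ⟨⟨ha, ht⟩, rfl⟩⟩ | ⟨a, ha, rfl⟩
  · simp only [cf, SimpleGraph.mem_edgeSet, SimpleGraph.top_adj, ne_eq, Fin.mk.injEq]
    have h1 := mod_cases' (n := 2*ℓ+1) (x := a) (by omega) (by omega)
    have h3 := mod_cases' (n := 2*ℓ+1) (x := a+t+1) (by omega) (by omega)
    omega
  · simp only [mf, SimpleGraph.mem_edgeSet, SimpleGraph.top_adj, ne_eq, Fin.mk.injEq]
    have h1 := mod_cases' (n := 2*ℓ+1) (x := a) (by omega) (by omega)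
    have h3 := mod_cases' (n := 2*ℓ+1) (x := a+ℓ) (by omega) (by omega)
    omega

lemma base_mem (ℓ d : ℕ) (hl : 0 < ℓ) :
    s((⟨0, by omega⟩ : Fin (2*ℓ+1)), (⟨ℓ, by omega⟩ : Fin (2*ℓ+1))) ∈ RR ℓ d := by
  simp only [RR, Finset.mem_union, MM, Finset.mem_image, Finset.mem_range]
  right
  refine ⟨0, hl, ?_⟩
  simp only [mf, Sym2.eq_iff, Fin.mk.injEq]
  left
  constructor
  · simp [Nat.mod_eq_of_lt (by omega : (0:ℕ) < 2*ℓ+1)]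
  · simp [Nat.mod_eq_of_lt (by omega : ℓ < 2*ℓ+1)]

lemma filter_top_eq {n : ℕ} (X : Finset (Fin n)) :
    ((⊤ : SimpleGraph (Fin n)).edgeFinset.filter (fun s => ∀ v ∈ s, v ∈ X)) =
    X.sym2.filter (fun s => ¬ s.IsDiag) := by
  ext z
  simp only [Finset.mem_filter, SimpleGraph.mem_edgeFinset, SimpleGraph.edgeSet_top,
    Set.mem_setOf_eq, Finset.mem_sym2_iff]
  tauto

lemma card_filter_top {n : ℕ} (X : Finset (Fin n)) :
    ((⊤ : SimpleGraph (Fin n)).edgeFinset.filter (fun s => ∀ v ∈ s, v ∈ X)).card + X.card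
      = (X.card + 1).choose 2 := by
  classical
  rw [filter_top_eq]
  have himg : X.sym2.filter (fun s => s.IsDiag) = X.image Sym2.diag := by
    ext z
    simp only [Finset.mem_filter, Finset.mem_image]
    constructor
    · rintro ⟨hmem, hdiag⟩
      induction z using Sym2.ind with
      | _ x y =>
        rw [Sym2.mk_isDiag_iff] at hdiag
        subst hdiag
        exact ⟨x, (Finset.mk_mem_sym2_iff.1 hmem).1, rfl⟩
    · rintro ⟨a, ha, rfl⟩
      exact ⟨Finset.diag_mem_sym2_iff.2 ha, Sym2.diag_isDiag a⟩
  have hpart := Finset.card_filter_add_card_filter_not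
    (s := X.sym2) (p := fun s => s.IsDiag)
  rw [himg, Finset.card_image_of_injective _ Sym2.diag_injective] at hpart
  rw [← Finset.card_sym2 X]
  omega

lemma two_choose (x : ℕ) : 2 * ((x+1).choose 2) = x * (x+1) := by
  rw [Nat.choose_two_right]
  simp only [Nat.add_sub_cancel]
  rw [mul_comm (x+1) x, Nat.mul_div_cancel' (Nat.even_mul_succ_self x).two_dvd]

lemma int_small (k l x cF cA : ℕ) (hle : cF ≤ cA) (hA : 2*cA + 2*x = x*(x+1))
    (hx2 : 2 ≤ x) (hx : x ≤ 2*k-1) (h1 : k+1 ≤ l) (h2 : l ≤ 2*k-1) :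
    (cF : ℤ) ≤ k*x - l := by
  have hk2 : 2 ≤ k := by omega
  have hxI : (x:ℤ) ≤ 2*k-1 := by omega
  have hlI : (l:ℤ) ≤ 2*k-1 := by omega
  have hx2I : (2:ℤ) ≤ x := by omega
  have hleI : (cF:ℤ) ≤ cA := by omega
  have hAI : 2*(cA:ℤ) + 2*x = x*(x+1) := by exact_mod_cast hA
  nlinarith [mul_nonneg (by linarith : (0:ℤ) ≤ (x:ℤ) - 2)
    (by linarith : (0:ℤ) ≤ 2*(k:ℤ) - 1 - x)]

lemma int_big (k l d x cF cB cA cO cR : ℕ)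
    (hFA : cF + cB = cA) (hA : 2*cA + 2*x = x*(x+1)) (hpart : cB + cO = cR)
    (hR : cR = (2*l+1)*d + l) (hO : cO ≤ (2*l+1-x)*l) (hd : d = l-k)
    (hx : 2*k ≤ x) (hxn : x ≤ 2*l+1) (h1 : k+1 ≤ l) (h2 : l ≤ 2*k-1) :
    (cF : ℤ) ≤ k*x - l := by
  have hdI : (d:ℤ) = l - k := by omega
  have hRI : (cR:ℤ) = (2*l+1)*d + l := by exact_mod_cast hR
  have hOI : (cO:ℤ) ≤ (2*(l:ℤ)+1-x)*l := by
    calc (cO:ℤ) ≤ ((2*l+1-x)*l : ℕ) := by exact_mod_cast hO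
      _ = (2*(l:ℤ)+1-x)*l := by push_cast [Nat.cast_sub hxn]; ring
  have hAI : 2*(cA:ℤ) + 2*x = x*(x+1) := by exact_mod_cast hA
  have hFAI : (cF:ℤ) + cB = cA := by exact_mod_cast hFA
  have hpartI : (cB:ℤ) + cO = cR := by exact_mod_cast hpart
  have hxI : 2*(k:ℤ) ≤ x := by omega
  have hxnI : (x:ℤ) ≤ 2*l+1 := by omega
  nlinarith [mul_nonneg (by linarith : (0:ℤ) ≤ 2*(l:ℤ)+1 - x)
    (by linarith : (0:ℤ) ≤ (x:ℤ) - 2*k)]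

lemma map_edge {n : ℕ} (σ : Equiv.Perm (Fin n)) {z : Sym2 (Fin n)}
    (h : z ∈ (⊤ : SimpleGraph (Fin n)).edgeFinset) :
    Sym2.map σ z ∈ (⊤ : SimpleGraph (Fin n)).edgeFinset := by
  induction z using Sym2.ind with
  | _ x y =>
    rw [Sym2.map_pair_eq]
    simp only [SimpleGraph.mem_edgeFinset, SimpleGraph.mem_edgeSet,
      SimpleGraph.top_adj, ne_eq] at *
    exact fun hc => h (σ.injective hc)

/-- For integers `k+1 ≤ ℓ ≤ 2k-1`, the complete graph `K_{2ℓ+1}` is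
`(k,ℓ)`-redundant: for every edge `e`, `K_{2ℓ+1} - e` contains a spanning `(k,ℓ)`-tight
subgraph. -/
theorem stmt_7 (k ℓ : ℕ) (h1 : k + 1 ≤ ℓ) (h2 : ℓ ≤ 2 * k - 1) :
    ∀ e ∈ (⊤ : SimpleGraph (Fin (2 * ℓ + 1))).edgeFinset,
      ∃ F ⊆ (⊤ : SimpleGraph (Fin (2 * ℓ + 1))).edgeFinset.erase e,
        SparseS (k : ℤ) (ℓ : ℤ) F ∧ (F.card : ℤ) = (k : ℤ) * (2 * ℓ + 1) - ℓ := by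
  intro e he
  induction e using Sym2.ind with
  | _ u w =>
  have hk2 : 2 ≤ k := by omega
  have hl3 : 3 ≤ ℓ := by omega
  set d : ℕ := ℓ - k with hd'
  have hd : 2*d < ℓ := by omega
  have hne : u ≠ w := by
    rw [SimpleGraph.mem_edgeFinset, SimpleGraph.mem_edgeSet, SimpleGraph.top_adj] at he
    exact he
  set v0 : Fin (2*ℓ+1) := ⟨0, by omega⟩ with hv0
  set vl : Fin (2*ℓ+1) := ⟨ℓ, by omega⟩ with hvl
  have hv0l : v0 ≠ vl := by
    simp only [hv0, hvl, ne_eq, Fin.mk.injEq]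
    omega
  set τ : Equiv.Perm (Fin (2*ℓ+1)) := Equiv.swap v0 u with hτ
  set σ : Equiv.Perm (Fin (2*ℓ+1)) := τ.trans (Equiv.swap (τ vl) w) with hσ
  have hτ0 : τ v0 = u := Equiv.swap_apply_left v0 u
  have hσ0 : σ v0 = u := by
    have hτne : u ≠ τ vl := by
      rw [← hτ0]
      exact fun hc => hv0l (τ.injective hc)
    rw [hσ]
    simp only [Equiv.trans_apply, hτ0]
    exact Equiv.swap_apply_of_ne_of_ne hτne hne
  have hσl : σ vl = w := by
    rw [hσ]
    simp only [Equiv.trans_apply]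
    exact Equiv.swap_apply_left _ _
  set R : Finset (Sym2 (Fin (2*ℓ+1))) := (RR ℓ d).image (Sym2.map σ) with hR
  have hmapinj : Function.Injective (Sym2.map (σ : Fin (2*ℓ+1) → Fin (2*ℓ+1))) :=
    Sym2.map.injective σ.injective
  have hcardR : R.card = (2*ℓ+1)*d + ℓ := by
    rw [hR, Finset.card_image_of_injective _ hmapinj, RR,
      Finset.card_union_of_disjoint (disj_CC_MM ℓ d hd), card_CC ℓ d hd, card_MM]
  have heR : s(u, w) ∈ R := by
    rw [hR, Finset.mem_image]
    exact ⟨s(v0, vl), base_mem ℓ d (by omega), by rw [Sym2.map_pair_eq, hσ0, hσl]⟩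
  have hRsub : R ⊆ (⊤ : SimpleGraph (Fin (2*ℓ+1))).edgeFinset := by
    intro z hz
    rw [hR, Finset.mem_image] at hz
    obtain ⟨z', hz', rfl⟩ := hz
    exact map_edge σ (RR_sub ℓ d hd hz')
  have hdegR : ∀ v : Fin (2*ℓ+1), (R.filter (fun s => v ∈ s)).card ≤ ℓ := by
    intro v
    have hsub : R.filter (fun s => v ∈ s) ⊆
        ((RR ℓ d).filter (fun s => σ.symm v ∈ s)).image (Sym2.map σ) := by
      intro z hz
      rw [Finset.mem_filter, hR, Finset.mem_image] at hz
      obtain ⟨⟨z', hz', rfl⟩, hv⟩ := hz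
      rw [Finset.mem_image]
      refine ⟨z', Finset.mem_filter.2 ⟨hz', ?_⟩, rfl⟩
      rw [Sym2.mem_map] at hv
      obtain ⟨b, hb, hbv⟩ := hv
      have hb' : b = σ.symm v := by rw [← hbv]; simp
      rwa [← hb']
    calc (R.filter (fun s => v ∈ s)).card ≤ _ := Finset.card_le_card hsub
      _ ≤ ((RR ℓ d).filter (fun s => σ.symm v ∈ s)).card := Finset.card_image_le
      _ ≤ 2*d + 1 := by
          rw [RR, Finset.filter_union]
          calc _ ≤ _ + _ := Finset.card_union_le _ _
            _ ≤ 2*d + 1 := Nat.add_le_add (deg_CC ℓ d hd _) (deg_MM ℓ _)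
      _ ≤ ℓ := by omega
  have hEcard : (⊤ : SimpleGraph (Fin (2*ℓ+1))).edgeFinset.card = ℓ * (2*ℓ+1) := by
    rw [SimpleGraph.card_edgeFinset_top_eq_card_choose_two, Fintype.card_fin,
      Nat.choose_two_right, show 2*ℓ+1-1 = 2*ℓ by omega,
      show (2*ℓ+1)*(2*ℓ) = (ℓ*(2*ℓ+1))*2 by ring]
    exact Nat.mul_div_cancel _ (by omega)
  have hRle : R.card ≤ (⊤ : SimpleGraph (Fin (2*ℓ+1))).edgeFinset.card :=
    Finset.card_le_card hRsub
  refine ⟨(⊤ : SimpleGraph (Fin (2*ℓ+1))).edgeFinset \ R, ?_, ?_, ?_⟩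
  · intro z hz
    rw [Finset.mem_sdiff] at hz
    exact Finset.mem_erase.2 ⟨fun hc => hz.2 (hc ▸ heR), hz.1⟩
  · -- sparsity
    intro X hX2
    have hxn : X.card ≤ 2*ℓ+1 := by simpa using Finset.card_le_univ X
    have hcardA2 : 2 * ((⊤ : SimpleGraph (Fin (2*ℓ+1))).edgeFinset.filter
        (fun s => ∀ v ∈ s, v ∈ X)).card + 2 * X.card = X.card * (X.card + 1) := by
      have hA := card_filter_top X
      have h2c := two_choose X.card
      omega
    have hFA : (((⊤ : SimpleGraph (Fin (2*ℓ+1))).edgeFinset \ R).filter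
          (fun s => ∀ v ∈ s, v ∈ X)) =
        ((⊤ : SimpleGraph (Fin (2*ℓ+1))).edgeFinset.filter (fun s => ∀ v ∈ s, v ∈ X)) \
        (R.filter (fun s => ∀ v ∈ s, v ∈ X)) := by
      ext z
      simp only [Finset.mem_filter, Finset.mem_sdiff]
      tauto
    have hBA : (R.filter (fun s => ∀ v ∈ s, v ∈ X)) ⊆
        ((⊤ : SimpleGraph (Fin (2*ℓ+1))).edgeFinset.filter (fun s => ∀ v ∈ s, v ∈ X)) :=
      Finset.filter_subset_filter _ hRsub
    rcases le_or_gt X.card (2*k-1) with hcase | hcase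
    · have hle : (((⊤ : SimpleGraph (Fin (2*ℓ+1))).edgeFinset \ R).filter
          (fun s => ∀ v ∈ s, v ∈ X)).card ≤
          ((⊤ : SimpleGraph (Fin (2*ℓ+1))).edgeFinset.filter
            (fun s => ∀ v ∈ s, v ∈ X)).card := by
        rw [hFA]
        exact Finset.card_le_card (Finset.sdiff_subset)
      exact int_small k ℓ X.card _ _ hle hcardA2 hX2 hcase h1 h2
    · -- big sets
      have hpart := Finset.card_filter_add_card_filter_not
        (s := R) (p := fun s => ∀ v ∈ s, v ∈ X)
      have hout : (R.filter (fun s => ¬ ∀ v ∈ s, v ∈ X)) ⊆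
          (Finset.univ \ X).biUnion (fun v => R.filter (fun s => v ∈ s)) := by
        intro z hz
        rw [Finset.mem_filter] at hz
        obtain ⟨hzR, hz2⟩ := hz
        push_neg at hz2
        obtain ⟨v, hvz, hvX⟩ := hz2
        rw [Finset.mem_biUnion]
        exact ⟨v, by simp [hvX], Finset.mem_filter.2 ⟨hzR, hvz⟩⟩
      have hcardout : (R.filter (fun s => ¬ ∀ v ∈ s, v ∈ X)).card ≤ (2*ℓ+1 - X.card) * ℓ := by
        calc (R.filter (fun s => ¬ ∀ v ∈ s, v ∈ X)).card
            ≤ _ := Finset.card_le_card hout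
          _ ≤ ∑ v ∈ (Finset.univ \ X), (R.filter (fun s => v ∈ s)).card :=
              Finset.card_biUnion_le
          _ ≤ ∑ _v ∈ (Finset.univ \ X), ℓ := Finset.sum_le_sum (fun v _ => hdegR v)
          _ = (Finset.univ \ X).card * ℓ := by rw [Finset.sum_const, smul_eq_mul]
          _ = (2*ℓ+1 - X.card) * ℓ := by
              rw [Finset.card_sdiff_of_subset (Finset.subset_univ X)]
              congr 1
              simp
      have hcardF : (((⊤ : SimpleGraph (Fin (2*ℓ+1))).edgeFinset \ R).filter
            (fun s => ∀ v ∈ s, v ∈ X)).card +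
            (R.filter (fun s => ∀ v ∈ s, v ∈ X)).card =
          ((⊤ : SimpleGraph (Fin (2*ℓ+1))).edgeFinset.filter
            (fun s => ∀ v ∈ s, v ∈ X)).card := by
        rw [hFA]
        exact Finset.card_sdiff_add_card_eq_card hBA
      exact int_big k ℓ d X.card _ _ _ _ _ hcardF hcardA2 hpart hcardR
        hcardout hd' (by omega) hxn h1 h2
  · -- cardinality
    have hsd : (((⊤ : SimpleGraph (Fin (2*ℓ+1))).edgeFinset \ R).card : ℤ) =
        ((⊤ : SimpleGraph (Fin (2*ℓ+1))).edgeFinset.card : ℤ) - (R.card : ℤ) := by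
      rw [Finset.card_sdiff_of_subset hRsub]
      exact Nat.cast_sub hRle
    rw [hsd, hEcard, hcardR]
    have hdz : (d:ℤ) = (ℓ:ℤ) - (k:ℤ) := by omega
    push_cast
    linear_combination (-(2*(ℓ:ℤ)+1)) * hdz
end

section
/- Let k and ℓ be integers with k ≥ 1 and ℓ ≤ 2k−1, let G be a (k,ℓ)-sparse graph, and let G' be obtained from G by adding a new vertex incident to exactly k new edges such that no more than 2k−ℓ of the new edges are parallel between any two vertices. Then G' is (k,ℓ)-sparse. Moreover, if G is (k,ℓ)-tight, then so is G'. -/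
open scoped Classical

/-- Adding a new vertex with exactly `k` incident new edges, at most `2k-ℓ` of
them parallel between any two vertices, preserves `(k,ℓ)`-sparsity; and it preserves
`(k,ℓ)`-tightness. Here the new graph `G'` lives on `Option V` (new vertex `none`) with edge
type `E ⊕ Fin k`. -/
theorem stmt_8 {V E : Type} [Fintype V] [Fintype E]
    (ends : E → Sym2 V) (hloop : ∀ e, ¬ (ends e).IsDiag)
    (k : ℕ) (ℓ : ℤ) (hk : 1 ≤ k) (hl : ℓ ≤ 2 * (k : ℤ) - 1)
    (ends' : E ⊕ Fin k → Sym2 (Option V))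
    (hold : ∀ e : E, ends' (Sum.inl e) = (ends e).map some)
    (hnew : ∀ i : Fin k, ∃ u : V, ends' (Sum.inr i) = s((none : Option V), some u))
    (hmult : ∀ u : V,
      ((Finset.univ.filter
        (fun i : Fin k => ends' (Sum.inr i) = s((none : Option V), some u))).card : ℤ)
        ≤ 2 * (k : ℤ) - ℓ) :
    (SparseM ends (k : ℤ) ℓ Finset.univ → SparseM ends' (k : ℤ) ℓ Finset.univ) ∧
    ((SparseM ends (k : ℤ) ℓ Finset.univ ∧
        (Fintype.card E : ℤ) = (k : ℤ) * Fintype.card V - ℓ) →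
      (SparseM ends' (k : ℤ) ℓ Finset.univ ∧
        (Fintype.card (E ⊕ Fin k) : ℤ) = (k : ℤ) * Fintype.card (Option V) - ℓ)) := by
  have hsparse : SparseM ends (k : ℤ) ℓ Finset.univ → SparseM ends' (k : ℤ) ℓ Finset.univ := by
    intro hG X hX
    suffices hsuf : ((Finset.univ.filter
        (fun e : E ⊕ Fin k => ∀ v ∈ ends' e, v ∈ X)).card : ℤ) ≤ (k : ℤ) * X.card - ℓ by
      convert hsuf using 4
    have hG' : ∀ Z : Finset V, 2 ≤ Z.card →
        ((Finset.univ.filter (fun e : E => ∀ v ∈ ends e, v ∈ Z)).card : ℤ)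
          ≤ (k : ℤ) * Z.card - ℓ := by
      intro Z hZ
      have := hG Z hZ
      convert this using 4
    clear hG
    set Y : Finset V := Finset.univ.filter (fun v => some v ∈ X) with hYdef
    have hmemY : ∀ v : V, v ∈ Y ↔ some v ∈ X := by intro v; simp [hYdef]
    have hYimg : Y.image some = X.erase none := by
      ext o
      cases o with
      | none => simp
      | some v => simp [hmemY v]
    have hYcard : Y.card = (X.erase none).card := by
      rw [← hYimg]; exact (Finset.card_image_of_injective _ (Option.some_injective V)).symm
    -- split the edge count
    have hsplit : (Finset.univ.filter (fun e : E ⊕ Fin k => ∀ v ∈ ends' e, v ∈ X)).card =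
        (Finset.univ.filter (fun e : E => ∀ v ∈ ends' (Sum.inl e), v ∈ X)).card +
        (Finset.univ.filter (fun i : Fin k => ∀ v ∈ ends' (Sum.inr i), v ∈ X)).card := by
      have hL : (Finset.univ.filter (fun e : E ⊕ Fin k => ∀ v ∈ ends' e, v ∈ X)).toLeft =
          Finset.univ.filter (fun e : E => ∀ v ∈ ends' (Sum.inl e), v ∈ X) := by
        ext e; simp [Finset.mem_toLeft]
      have hR : (Finset.univ.filter (fun e : E ⊕ Fin k => ∀ v ∈ ends' e, v ∈ X)).toRight =
          Finset.univ.filter (fun i : Fin k => ∀ v ∈ ends' (Sum.inr i), v ∈ X) := by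
        ext i; simp [Finset.mem_toRight]
      rw [← Finset.card_toLeft_add_card_toRight
        (u := Finset.univ.filter (fun e : E ⊕ Fin k => ∀ v ∈ ends' e, v ∈ X)), hL, hR]
    -- old edges
    have hA : (Finset.univ.filter (fun e : E => ∀ v ∈ ends' (Sum.inl e), v ∈ X)) =
        (Finset.univ.filter (fun e : E => ∀ v ∈ ends e, v ∈ Y)) := by
      apply Finset.filter_congr
      intro e _
      constructor
      · intro h v hv
        exact (hmemY v).mpr (h (some v) (by rw [hold e]; exact Sym2.mem_map.mpr ⟨v, hv, rfl⟩))
      · intro h v' hv'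
        rw [hold e] at hv'
        obtain ⟨v, hv, rfl⟩ := Sym2.mem_map.mp hv'
        exact (hmemY v).mp (h v hv)
    rw [hsplit, hA]
    by_cases hnone : (none : Option V) ∈ X
    · -- new vertex in X
      have hXcard : X.card = Y.card + 1 := by
        rw [hYcard, Finset.card_erase_of_mem hnone]
        have : 1 ≤ X.card := le_trans (by norm_num) hX
        omega
      have hY1 : 1 ≤ Y.card := by omega
      by_cases hY2 : 2 ≤ Y.card
      · -- |Y| ≥ 2
        have hold_bound := hG' Y hY2
        have hnew_bound : ((Finset.univ.filter
            (fun i : Fin k => ∀ v ∈ ends' (Sum.inr i), v ∈ X)).card : ℤ) ≤ (k : ℤ) := by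
          have := Finset.card_filter_le (Finset.univ : Finset (Fin k))
            (fun i => ∀ v ∈ ends' (Sum.inr i), v ∈ X)
          simp only [Finset.card_univ, Fintype.card_fin] at this
          exact_mod_cast this
        rw [hXcard]
        push_cast
        push_cast at hold_bound
        linarith
      · -- |Y| = 1
        have hY1' : Y.card = 1 := by omega
        obtain ⟨u₀, hu₀⟩ := Finset.card_eq_one.mp hY1'
        have hAzero : (Finset.univ.filter (fun e : E => ∀ v ∈ ends e, v ∈ Y)) = ∅ := by
          apply Finset.filter_false_of_mem
          intro e _ h
          obtain ⟨⟨a, b⟩, hab⟩ := Quot.exists_rep (ends e)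
          have hab' : ends e = s(a, b) := hab.symm
          have ha : a ∈ ends e := by rw [hab']; exact Sym2.mem_mk_left a b
          have hb : b ∈ ends e := by rw [hab']; exact Sym2.mem_mk_right a b
          have ha' : a = u₀ := by have := h a ha; rw [hu₀] at this; simpa using this
          have hb' : b = u₀ := by have := h b hb; rw [hu₀] at this; simpa using this
          apply hloop e
          rw [hab', ha', hb']
          exact Sym2.isDiag_iff_proj_eq |>.mpr rfl
        have hBeq : (Finset.univ.filter (fun i : Fin k => ∀ v ∈ ends' (Sum.inr i), v ∈ X)) =
            (Finset.univ.filter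
              (fun i : Fin k => ends' (Sum.inr i) = s((none : Option V), some u₀))) := by
          apply Finset.filter_congr
          intro i _
          obtain ⟨u, hu⟩ := hnew i
          constructor
          · intro h
            have hsome : some u ∈ X := h (some u) (by rw [hu]; exact Sym2.mem_mk_right _ _)
            have huY : u ∈ Y := (hmemY u).mpr hsome
            rw [hu₀] at huY
            simp only [Finset.mem_singleton] at huY
            rw [hu, huY]
          · intro h v hv
            rw [h] at hv
            rcases Sym2.mem_iff.mp hv with rfl | rfl
            · exact hnone
            · refine (hmemY u₀).mp ?_
              rw [hu₀]; simp
        have hX2 : X.card = 2 := by omega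
        rw [hAzero, hBeq, hX2]
        simp only [Finset.card_empty, Nat.zero_add]
        push_cast
        have := hmult u₀
        linarith
    · -- new vertex not in X
      have hXcard : X.card = Y.card := by
        rw [hYcard, Finset.erase_eq_of_notMem hnone]
      have hBzero : (Finset.univ.filter
          (fun i : Fin k => ∀ v ∈ ends' (Sum.inr i), v ∈ X)) = ∅ := by
        apply Finset.filter_false_of_mem
        intro i _ h
        obtain ⟨u, hu⟩ := hnew i
        exact hnone (h none (by rw [hu]; exact Sym2.mem_mk_left _ _))
      have hold_bound := hG' Y (by omega)
      rw [hBzero, hXcard]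
      simpa using hold_bound
  refine ⟨hsparse, fun ⟨hG, hcard⟩ => ⟨hsparse hG, ?_⟩⟩
  have h1 : Fintype.card (E ⊕ Fin k) = Fintype.card E + k := by
    simp [Fintype.card_sum]
  have h2 : Fintype.card (Option V) = Fintype.card V + 1 := by
    simp [Fintype.card_option]
  rw [h1, h2]
  push_cast
  linarith
end

section
/- Let k and ℓ be integers with 2 ≤ k < ℓ ≤ 2k−1. Then every 2ℓ-connected graph G is (k,ℓ)-redundant: for every edge e of G, the rank of E(G)−e in the (k,ℓ)-count matroid equals k|V(G)| − ℓ. -/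
open scoped Classical

/-- The set of vertices incident to an edge of `F`. -/
noncomputable def incVerts {V : Type} [Fintype V] (F : Finset (Sym2 V)) : Finset V :=
  Finset.univ.filter (fun v => ∃ e ∈ F, v ∈ e)

/-- `F` is independent in the `(k,ℓ)`-count matroid: every nonempty subset `F'` satisfies
`|F'| ≤ k|V(F')| - ℓ`. -/
noncomputable def CountSparse {V : Type} [Fintype V] (k ℓ : ℤ) (F : Finset (Sym2 V)) : Prop :=
  ∀ F' ⊆ F, F'.Nonempty → (F'.card : ℤ) ≤ k * (incVerts F').card - ℓ

/-- Rank of an edge set in the `(k,ℓ)`-count matroid: the largest size of an independent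
subset. -/
noncomputable def countRank {V : Type} [Fintype V] (k ℓ : ℤ) (F : Finset (Sym2 V)) : ℕ :=
  (F.powerset.filter (CountSparse k ℓ)).sup Finset.card

/-- `G` is `c`-(vertex-)connected. -/
def VConn {V : Type} [Fintype V] (G : SimpleGraph V) (c : ℕ) : Prop :=
  c < Fintype.card V ∧
    ∀ S : Finset V, S.card < c → (G.induce ((↑S : Set V)ᶜ)).Connected


variable {V : Type} [Fintype V]

lemma mem_incVerts {F : Finset (Sym2 V)} {v : V} : v ∈ incVerts F ↔ ∃ e ∈ F, v ∈ e := by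
  simp [incVerts]

lemma incVerts_mono {F F' : Finset (Sym2 V)} (h : F ⊆ F') : incVerts F ⊆ incVerts F' := by
  intro v hv; rw [mem_incVerts] at *; obtain ⟨e, he, hve⟩ := hv; exact ⟨e, h he, hve⟩

lemma incVerts_union (F F' : Finset (Sym2 V)) :
    incVerts (F ∪ F') = incVerts F ∪ incVerts F' := by
  ext v; simp [mem_incVerts, or_and_right, exists_or]

lemma incVerts_pair {a b : V} : incVerts {s(a, b)} = {a, b} := by
  ext v
  simp [mem_incVerts, Sym2.mem_iff]

lemma three_le_card_incVerts {G : SimpleGraph V} {P : Finset (Sym2 V)}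
    (hP : P ⊆ G.edgeFinset) (h2 : 2 ≤ P.card) : 3 ≤ (incVerts P).card := by
  obtain ⟨g, hg, g', hg', hne⟩ := Finset.one_lt_card.mp h2
  induction g using Sym2.ind with
  | _ a b =>
  have hab : a ≠ b := by
    have := G.not_isDiag_of_mem_edgeSet (SimpleGraph.mem_edgeFinset.mp (hP hg))
    simpa using this
  have hd' : ¬ g'.IsDiag := G.not_isDiag_of_mem_edgeSet (SimpleGraph.mem_edgeFinset.mp (hP hg'))
  induction g' using Sym2.ind with
  | _ c d =>
  have hcd : c ≠ d := by simpa using hd'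
  have hcase : c ∉ ({a, b} : Finset V) ∨ d ∉ ({a, b} : Finset V) := by
    by_contra hcon
    push_neg at hcon
    obtain ⟨hc, hd⟩ := hcon
    simp only [Finset.mem_insert, Finset.mem_singleton] at hc hd
    apply hne
    rcases hc with rfl | rfl <;> rcases hd with rfl | rfl <;> first
      | exact absurd rfl hcd
      | rfl
      | exact Sym2.eq_swap
  have hmem : ∀ x, x ∈ ({a,b} : Finset V) → x ∈ incVerts P := by
    have ha : a ∈ incVerts P := mem_incVerts.mpr ⟨s(a,b), hg, Sym2.mem_mk_left _ _⟩
    have hb : b ∈ incVerts P := mem_incVerts.mpr ⟨s(a,b), hg, Sym2.mem_mk_right _ _⟩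
    intro x hx
    simp only [Finset.mem_insert, Finset.mem_singleton] at hx
    rcases hx with h | h
    · rwa [h]
    · rwa [h]
  rcases hcase with hc | hd
  · have hsub : insert c ({a, b} : Finset V) ⊆ incVerts P := by
      intro x hx
      rcases Finset.mem_insert.mp hx with h | hx
      · rw [h]; exact mem_incVerts.mpr ⟨s(c,d), hg', Sym2.mem_mk_left _ _⟩
      · exact hmem x hx
    calc (3:ℕ) = (insert c ({a,b} : Finset V)).card := by
          rw [Finset.card_insert_of_notMem hc, Finset.card_insert_of_notMem (by simpa using hab)]
          simp
      _ ≤ _ := Finset.card_le_card hsub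
  · have hsub : insert d ({a, b} : Finset V) ⊆ incVerts P := by
      intro x hx
      rcases Finset.mem_insert.mp hx with h | hx
      · rw [h]; exact mem_incVerts.mpr ⟨s(c,d), hg', Sym2.mem_mk_right _ _⟩
      · exact hmem x hx
    calc (3:ℕ) = (insert d ({a,b} : Finset V)).card := by
          rw [Finset.card_insert_of_notMem hd, Finset.card_insert_of_notMem (by simpa using hab)]
          simp
      _ ≤ _ := Finset.card_le_card hsub

lemma min_degree {G : SimpleGraph V} {c : ℕ} (hconn : VConn G c) (v : V) :
    c ≤ G.degree v := by
  by_contra hdeg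
  push_neg at hdeg
  set S := G.neighborFinset v with hS
  have hcard : S.card < c := by rwa [G.card_neighborFinset_eq_degree]
  have hcon := hconn.2 S hcard
  have hvS : v ∈ ((↑S : Set V)ᶜ : Set V) := by
    simp [hS, Set.mem_compl_iff]
  have hex : ∃ w, w ∉ insert v S := by
    by_contra hco
    push_neg at hco
    have : Finset.univ ⊆ insert v S := fun w _ => hco w
    have := Finset.card_le_card this
    rw [Finset.card_univ] at this
    have h2 := Finset.card_insert_le v S
    have hcV := hconn.1
    omega
  obtain ⟨w, hw⟩ := hex
  have hwv : w ≠ v := fun h => hw (h ▸ Finset.mem_insert_self v S)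
  have hwS : w ∈ ((↑S : Set V)ᶜ : Set V) := by
    intro hmem
    exact hw (Finset.mem_insert_of_mem hmem)
  obtain ⟨p⟩ := hcon.preconnected ⟨v, hvS⟩ ⟨w, hwS⟩
  have hne : (⟨v, hvS⟩ : ((↑S : Set V)ᶜ : Set V)) ≠ ⟨w, hwS⟩ := by
    intro h
    exact hwv (congrArg Subtype.val h).symm
  have hadj := SimpleGraph.Walk.adj_snd (SimpleGraph.Walk.not_nil_of_ne hne) (p := p)
  have hGadj : G.Adj v ↑(p.getVert 1) := hadj
  have : ↑(p.getVert 1) ∈ S := by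
    exact SimpleGraph.mem_neighborFinset _ _ _ |>.mpr hGadj
  exact (p.getVert 1).2 this

lemma walk_stays {G : SimpleGraph V} (W B : Finset V) (hBW : B ⊆ W)
    (hbd : ∀ v ∈ W, v ∉ B → ∀ u, G.Adj v u → u ∈ W) :
    ∀ (x y : ((↑B : Set V)ᶜ : Set V)) (p : (G.induce ((↑B : Set V)ᶜ)).Walk x y),
      ↑x ∈ W → ↑y ∈ W := by
  intro x y p
  induction p with
  | nil => exact id
  | @cons a b c h p ih =>
    intro hx
    apply ih
    have hGadj : G.Adj ↑a ↑b := h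
    have haB : ↑a ∉ B := fun hmem => a.2 (Finset.mem_coe.mpr hmem)
    exact hbd ↑a hx haB ↑b hGadj

lemma boundary_lemma {G : SimpleGraph V} {c : ℕ} (hconn : VConn G c)
    (W : Finset V) (hWuniv : W ≠ Finset.univ) :
    c ≤ (W.filter (fun v => ∃ u, G.Adj v u ∧ u ∉ W)).card ∨
      (W.filter (fun v => ∃ u, G.Adj v u ∧ u ∉ W)) = W := by
  by_contra hcon
  push_neg at hcon
  obtain ⟨hcard, hBneq⟩ := hcon
  set B := W.filter (fun v => ∃ u, G.Adj v u ∧ u ∉ W) with hB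
  have hBW : B ⊆ W := Finset.filter_subset _ _
  obtain ⟨x, hxW, hxB⟩ : ∃ x, x ∈ W ∧ x ∉ B := by
    by_contra hc
    push_neg at hc
    exact hBneq (Finset.Subset.antisymm hBW (fun v hv => hc v hv))
  obtain ⟨y, hyW⟩ : ∃ y, y ∉ W := by
    by_contra hc
    push_neg at hc
    exact hWuniv (Finset.eq_univ_iff_forall.mpr hc)
  have hyB : y ∉ B := fun h => hyW (hBW h)
  have hcon2 := hconn.2 B hcard
  have hxc : x ∈ ((↑B : Set V)ᶜ : Set V) := hxB
  have hyc : y ∈ ((↑B : Set V)ᶜ : Set V) := hyB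
  obtain ⟨p⟩ := hcon2.preconnected ⟨x, hxc⟩ ⟨y, hyc⟩
  have hbd : ∀ v ∈ W, v ∉ B → ∀ u, G.Adj v u → u ∈ W := by
    intro v hv hvB u hadj
    by_contra huW
    exact hvB (Finset.mem_filter.mpr ⟨hv, u, hadj, huW⟩)
  exact hyW (walk_stays W B hBW hbd _ _ p hxW)

noncomputable def rho (l w : ℕ) : ℚ := max (1/2 : ℚ) ((l : ℚ) / (w : ℚ))

lemma rho_ge_half (l w : ℕ) : (1/2 : ℚ) ≤ rho l w := le_max_left _ _

lemma rho_nonneg (l w : ℕ) : (0:ℚ) ≤ rho l w := le_trans (by norm_num) (rho_ge_half l w)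

lemma rho_le_third {l w : ℕ} (hl3 : 3 ≤ l) (hw : 3 ≤ w) : rho l w ≤ (l : ℚ) / 3 := by
  apply max_le
  · rw [div_le_div_iff₀ (by norm_num) (by norm_num)]
    have : (3:ℚ) ≤ l := by exact_mod_cast hl3
    linarith
  · apply div_le_div_of_nonneg_left _ (by norm_num) (by exact_mod_cast hw)
    positivity

lemma rho_eq_half {l w : ℕ} (hl : 0 < l) (h : 2*l ≤ w) : rho l w = 1/2 := by
  have hw0 : 0 < w := by omega
  apply max_eq_left
  rw [div_le_iff₀ (by exact_mod_cast hw0 : (0:ℚ) < (w:ℚ))]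
  have : (2*l : ℚ) ≤ w := by exact_mod_cast h
  push_cast at this ⊢
  linarith

lemma rho_eq_div {l w : ℕ} (hw : 0 < w) (h : w ≤ 2*l) : rho l w = (l:ℚ)/w := by
  apply max_eq_right
  rw [le_div_iff₀ (by positivity : (0:ℚ) < (w:ℚ))]
  have : (w:ℚ) ≤ 2*l := by exact_mod_cast h
  linarith

set_option maxHeartbeats 2000000 in
lemma lemA {β : Type} (k l : ℕ) (hk : 2 ≤ k) (hkl : k < l) (hl : l + 1 ≤ 2*k)
    (S : Finset β) (w : β → ℕ) (hw : ∀ b ∈ S, 3 ≤ w b) (r ε : ℕ) (hε : ε ≤ 1)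
    (hdeg : 2*l + S.card ≤ (∑ b ∈ S, w b) + r + ε)
    (hact : 2 ≤ S.card ∨ 1 ≤ r ∨ ε = 1) :
    ∑ b ∈ S, rho l (w b) ≤ (k : ℚ) * ((S.card : ℚ) - 1) + (r:ℚ)/2 + (ε:ℚ)/2 := by
  have hl3 : 3 ≤ l := by omega
  have hlq : (3:ℚ) ≤ l := by exact_mod_cast hl3
  have hkq : (2:ℚ) ≤ k := by exact_mod_cast hk
  have hklq : (k:ℚ) + 1 ≤ l := by exact_mod_cast hkl
  have hlq2 : (l:ℚ) + 1 ≤ 2*k := by exact_mod_cast hl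
  have hrq : (0:ℚ) ≤ r := by positivity
  have hεq : (0:ℚ) ≤ ε := by positivity
  rcases Nat.lt_or_ge S.card 3 with hc3 | hc3
  · interval_cases hcard : S.card
    · -- card 0
      rw [Finset.card_eq_zero] at hcard
      subst hcard
      simp only [Finset.sum_empty, Finset.card_empty]
      have : (2*l : ℚ) ≤ r + ε := by
        exact_mod_cast (by simpa using hdeg : 2*l ≤ r + ε)
      push_cast at this
      push_cast
      linarith
    · -- card 1
      rw [Finset.card_eq_one] at hcard
      obtain ⟨b, rfl⟩ := hcard
      simp only [Finset.sum_singleton, Finset.card_singleton]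
      have hw3 : 3 ≤ w b := hw b (Finset.mem_singleton_self b)
      have hdeg' : 2*l + 1 ≤ w b + r + ε := by simpa using hdeg
      have hact' : 1 ≤ r ∨ ε = 1 := by
        rcases hact with h | h
        · omega
        · exact h
      norm_num
      by_cases hwl : 2*l ≤ w b
      · rw [rho_eq_half (by omega) hwl]
        have : (1:ℚ) ≤ r + ε := by
          have : 1 ≤ r + ε := by omega
          exact_mod_cast this
        linarith
      · push_neg at hwl
        rw [rho_eq_div (by omega) (by omega)]
        have hx3 : (3:ℚ) ≤ (w b : ℚ) := by exact_mod_cast hw3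
        have hxl : (w b : ℚ) ≤ 2*l - 1 := by
          have : w b ≤ 2*l - 1 := by omega
          have h2 : (w b : ℚ) ≤ ((2*l - 1 : ℕ) : ℚ) := by exact_mod_cast this
          rw [Nat.cast_sub (by omega)] at h2
          push_cast at h2
          linarith
        have hre : (2*l : ℚ) + 1 ≤ (w b : ℚ) + r + ε := by
          exact_mod_cast hdeg'
        have hx0 : (0:ℚ) < (w b : ℚ) := by linarith
        have key : (l:ℚ)/(w b) ≤ (2*l + 1 - w b)/2 := by
          rw [div_le_div_iff₀ hx0 (by norm_num)]
          nlinarith [mul_nonneg (by linarith : (0:ℚ) ≤ (w b : ℚ) - 3)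
            (by linarith : (0:ℚ) ≤ 2*(l:ℚ) - 1 - (w b : ℚ))]
        linarith
    · -- card 2
      rw [Finset.card_eq_two] at hcard
      obtain ⟨b1, b2, hne, rfl⟩ := hcard
      rw [Finset.sum_pair hne]
      rw [Finset.sum_pair hne] at hdeg
      have hw1 : 3 ≤ w b1 := hw b1 (by simp)
      have hw2 : 3 ≤ w b2 := hw b2 (by simp)
      have hx1 : (3:ℚ) ≤ (w b1 : ℚ) := by exact_mod_cast hw1
      have hx2 : (3:ℚ) ≤ (w b2 : ℚ) := by exact_mod_cast hw2
      have hp1 : (0:ℚ) < (w b1 : ℚ) := by linarith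
      have hp2 : (0:ℚ) < (w b2 : ℚ) := by linarith
      have hdeg2 : 2*l + 2 ≤ w b1 + w b2 + r + ε := by simpa using hdeg
      norm_num
      by_cases hbig : 2*l + 2 ≤ w b1 + w b2 + ε
      · -- total big: rho1 + rho2 ≤ k
        have main : rho l (w b1) + rho l (w b2) ≤ (k:ℚ) := by
          by_cases h1 : w b1 ≤ 2*l <;> by_cases h2 : w b2 ≤ 2*l
          · -- both small
            rw [rho_eq_div (by omega) h1, rho_eq_div (by omega) h2]
            have hσ : (2*l + 1 : ℚ) ≤ w b1 + w b2 := by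
              have : 2*l + 1 ≤ w b1 + w b2 := by omega
              exact_mod_cast this
            rw [div_add_div _ _ (ne_of_gt hp1) (ne_of_gt hp2), div_le_iff₀ (by positivity)]
            nlinarith [mul_nonneg (mul_nonneg (by linarith : (0:ℚ) ≤ (w b1:ℚ) - 3)
                (by linarith : (0:ℚ) ≤ (w b2:ℚ) - 3)) (by linarith : (0:ℚ) ≤ (k:ℚ)),
              mul_nonneg (by linarith : (0:ℚ) ≤ 3*(k:ℚ) - l)
                (by linarith : (0:ℚ) ≤ (w b1:ℚ) + w b2 - (2*l+1)),
              mul_nonneg (by linarith : (0:ℚ) ≤ (l:ℚ)) (by linarith : (0:ℚ) ≤ 2*(k:ℚ)-1-l),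
              mul_nonneg (by linarith : (0:ℚ) ≤ (k:ℚ)) (by linarith : (0:ℚ) ≤ (l:ℚ)-k-1),
              sq_nonneg ((k:ℚ)-1)]
          · push_neg at h2
            rw [rho_eq_div (by omega) h1, rho_eq_half (by omega) (by omega)]
            have : (l:ℚ)/(w b1) ≤ l/3 :=
              div_le_div_of_nonneg_left (by positivity) (by norm_num) hx1
            linarith
          · push_neg at h1
            rw [rho_eq_half (by omega) (by omega), rho_eq_div (by omega) h2]
            have : (l:ℚ)/(w b2) ≤ l/3 :=
              div_le_div_of_nonneg_left (by positivity) (by norm_num) hx2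
            linarith
          · push_neg at h1 h2
            rw [rho_eq_half (by omega) (by omega), rho_eq_half (by omega) (by omega)]
            linarith
        linarith
      · -- total small
        push_neg at hbig
        have hsb : w b1 + w b2 + ε ≤ 2*l + 1 := by omega
        have h1 : w b1 ≤ 2*l := by omega
        have h2 : w b2 ≤ 2*l := by omega
        rw [rho_eq_div (by omega) h1, rho_eq_div (by omega) h2]
        have hσq : (w b1 : ℚ) + w b2 + ε ≤ 2*l + 1 := by exact_mod_cast hsb
        have hrbound : (2*l : ℚ) + 2 ≤ w b1 + w b2 + r + ε := by exact_mod_cast hdeg2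
        -- suffices: l/x1 + l/x2 ≤ k + l + 1 - (x1+x2)/2 - ε/2 + ε/2 ... use r ≥ 2l+2-x1-x2-ε
        have key : (l:ℚ)/(w b1) + (l:ℚ)/(w b2) ≤ (k:ℚ) + l + 1 - ((w b1:ℚ) + w b2)/2 := by
          rw [div_add_div _ _ (ne_of_gt hp1) (ne_of_gt hp2), div_le_iff₀ (by positivity)]
          set x1 := (w b1 : ℚ) with hx1def
          set x2 := (w b2 : ℚ) with hx2def
          have hσ6 : (6:ℚ) ≤ x1 + x2 := by linarith
          have hσu : x1 + x2 ≤ 2*(l:ℚ) + 1 := by linarith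
          have h6 : (0:ℚ) ≤ 18*(k:ℚ) + 6*l - 36 := by linarith
          have h6k : (0:ℚ) ≤ 6*(k:ℚ) - 2*l - 6 := by linarith
          nlinarith [mul_nonneg (mul_nonneg (by linarith : (0:ℚ) ≤ x1 - 3) (by linarith : (0:ℚ) ≤ x2 - 3))
              (by linarith : (0:ℚ) ≤ 2*(k:ℚ) + 2*l + 2 - (x1+x2)),
            mul_nonneg (by linarith : (0:ℚ) ≤ x1 + x2 - 6) (by linarith : (0:ℚ) ≤ 2*(l:ℚ)+1-(x1+x2)),
            mul_nonneg (by linarith : (0:ℚ) ≤ x1 + x2 - 6) h6k]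
        linarith
  · -- card ≥ 3
    have hsum : ∑ b ∈ S, rho l (w b) ≤ (S.card : ℚ) * ((l:ℚ)/3) := by
      calc ∑ b ∈ S, rho l (w b) ≤ ∑ b ∈ S, (l:ℚ)/3 :=
            Finset.sum_le_sum (fun b hb => rho_le_third hl3 (hw b hb))
        _ = (S.card : ℚ) * ((l:ℚ)/3) := by rw [Finset.sum_const, nsmul_eq_mul]
    have hd : (3:ℚ) ≤ (S.card : ℚ) := by exact_mod_cast hc3
    have : (S.card : ℚ) * ((l:ℚ)/3) ≤ (k:ℚ) * ((S.card:ℚ) - 1) := by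
      have h3 : (S.card:ℚ) * ((l:ℚ)/3) = (S.card:ℚ)*(l:ℚ)/3 := by ring
      rw [h3, div_le_iff₀ (by norm_num : (0:ℚ) < 3)]
      nlinarith [mul_nonneg (by linarith : (0:ℚ) ≤ (k:ℚ)) (by linarith : (0:ℚ) ≤ (S.card:ℚ) - 3)]
    linarith

section Counting
variable {V : Type} [Fintype V]

lemma card_eq_sum_ind (s : Finset V) :
    s.card = ∑ v ∈ Finset.univ, (if v ∈ s then (1:ℕ) else 0) := by
  rw [← Finset.card_filter]
  congr 1
  exact (Finset.filter_univ_mem s).symm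

set_option maxHeartbeats 2000000 in
lemma counting (k l : ℕ) (hk : 2 ≤ k) (hkl : k < l) (hl : l + 1 ≤ 2*k)
    {G : SimpleGraph V} (hconn : VConn G (2*l)) {e : Sym2 V} (he : e ∈ G.edgeFinset)
    (𝒬 : Finset (Finset (Sym2 V)))
    (hsub : ∀ P ∈ 𝒬, P ⊆ G.edgeFinset.erase e)
    (hne : ∀ P ∈ 𝒬, P.Nonempty)
    (hdisj : ∀ P ∈ 𝒬, ∀ Q ∈ 𝒬, P ≠ Q → Disjoint P Q)
    (hcover : ∀ g ∈ G.edgeFinset.erase e, ∃ P ∈ 𝒬, g ∈ P) :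
    (k:ℚ) * (Fintype.card V) - l ≤
      ∑ P ∈ 𝒬, (if P.card = 1 then (1:ℚ) else (k:ℚ) * ((incVerts P).card : ℚ) - l) := by
  have hl3 : 3 ≤ l := by omega
  have hsubE : ∀ P ∈ 𝒬, P ⊆ G.edgeFinset := fun P hP =>
    (hsub P hP).trans (Finset.erase_subset _ _)
  have hw3 : ∀ P ∈ 𝒬, 2 ≤ P.card → 3 ≤ (incVerts P).card := fun P hP h2 =>
    three_le_card_incVerts (hsubE P hP) h2
  have hterm_nonneg : ∀ P ∈ 𝒬, (0:ℚ) ≤ (if P.card = 1 then (1:ℚ) else (k:ℚ) * ((incVerts P).card : ℚ) - l) := by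
    intro P hP
    by_cases h1 : P.card = 1
    · simp [h1]
    · have h2 : 2 ≤ P.card := by
        have := (hne P hP).card_pos
        omega
      have h3 : (3:ℚ) ≤ ((incVerts P).card : ℚ) := by exact_mod_cast hw3 P hP h2
      have hkq : (2:ℚ) ≤ (k:ℚ) := by exact_mod_cast hk
      have hlq : (l:ℚ) + 1 ≤ 2*(k:ℚ) := by exact_mod_cast hl
      simp only [h1, if_false]
      nlinarith
  by_cases hfull : ∃ P ∈ 𝒬, 2 ≤ P.card ∧ incVerts P = Finset.univ
  · obtain ⟨P0, hP0, hc2, hfullP⟩ := hfull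
    have hterm : (if P0.card = 1 then (1:ℚ) else (k:ℚ) * ((incVerts P0).card : ℚ) - l) =
        (k:ℚ) * (Fintype.card V) - l := by
      have h1 : ¬ P0.card = 1 := by omega
      simp only [h1, if_false, hfullP, Finset.card_univ]
    calc (k:ℚ) * (Fintype.card V) - l
        = (if P0.card = 1 then (1:ℚ) else (k:ℚ) * ((incVerts P0).card : ℚ) - l) := hterm.symm
      _ ≤ _ := Finset.single_le_sum hterm_nonneg hP0
  · push_neg at hfull
    -- main case
    set NT := 𝒬.filter (fun P => 2 ≤ P.card) with hNT
    set TR := 𝒬.filter (fun P => P.card = 1) with hTR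
    set dv := fun v => (NT.filter (fun P => v ∈ incVerts P)).card with hdv
    set rv := fun v => (TR.filter (fun P => v ∈ incVerts P)).card with hrv
    set ev := fun v => if v ∈ e then (1:ℕ) else 0 with hev
    have hQsplit : ∀ P ∈ 𝒬, (P ∈ NT ∧ P ∉ TR ∧ 2 ≤ P.card) ∨ (P ∈ TR ∧ P ∉ NT ∧ P.card = 1) := by
      intro P hP
      have hpos := (hne P hP).card_pos
      by_cases h2 : 2 ≤ P.card
      · exact Or.inl ⟨Finset.mem_filter.mpr ⟨hP, h2⟩, by
          intro hmem; have := (Finset.mem_filter.mp hmem).2; omega, h2⟩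
      · have h1 : P.card = 1 := by omega
        exact Or.inr ⟨Finset.mem_filter.mpr ⟨hP, h1⟩, by
          intro hmem; have := (Finset.mem_filter.mp hmem).2; omega, h1⟩
    -- F1
    have hF1 : ∑ P ∈ NT, (incVerts P).card = ∑ v ∈ Finset.univ, dv v := by
      calc ∑ P ∈ NT, (incVerts P).card
          = ∑ P ∈ NT, ∑ v ∈ Finset.univ, (if v ∈ incVerts P then (1:ℕ) else 0) :=
            Finset.sum_congr rfl (fun P _ => card_eq_sum_ind _)
        _ = ∑ v ∈ Finset.univ, ∑ P ∈ NT, (if v ∈ incVerts P then (1:ℕ) else 0) := Finset.sum_comm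
        _ = ∑ v ∈ Finset.univ, dv v := by
            apply Finset.sum_congr rfl
            intro v _
            simp only [hdv]
            rw [Finset.card_filter]
    -- F2
    have hTR2 : ∀ P ∈ TR, (incVerts P).card = 2 := by
      intro P hP
      obtain ⟨hPQ, h1⟩ := Finset.mem_filter.mp hP
      obtain ⟨g, rfl⟩ := Finset.card_eq_one.mp h1
      have hg : g ∈ G.edgeFinset := hsubE _ hPQ (Finset.mem_singleton_self g)
      have hnd : ¬ g.IsDiag := G.not_isDiag_of_mem_edgeSet (SimpleGraph.mem_edgeFinset.mp hg)
      induction g using Sym2.ind with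
      | _ a b =>
        rw [incVerts_pair, Finset.card_insert_of_notMem (by simpa using hnd),
          Finset.card_singleton]
    have hF2 : ∑ v ∈ Finset.univ, rv v = 2 * TR.card := by
      calc ∑ v ∈ Finset.univ, rv v
          = ∑ v ∈ Finset.univ, ∑ P ∈ TR, (if v ∈ incVerts P then (1:ℕ) else 0) := by
            apply Finset.sum_congr rfl
            intro v _
            simp only [hrv]
            rw [Finset.card_filter]
        _ = ∑ P ∈ TR, ∑ v ∈ Finset.univ, (if v ∈ incVerts P then (1:ℕ) else 0) := Finset.sum_comm
        _ = ∑ P ∈ TR, (incVerts P).card :=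
            Finset.sum_congr rfl (fun P _ => (card_eq_sum_ind _).symm)
        _ = ∑ P ∈ TR, 2 := Finset.sum_congr rfl hTR2
        _ = 2 * TR.card := by rw [Finset.sum_const, smul_eq_mul, mul_comm]
    -- F3
    have hF3 : ∑ v ∈ Finset.univ, ev v = 2 := by
      have hnd : ¬ e.IsDiag := G.not_isDiag_of_mem_edgeSet (SimpleGraph.mem_edgeFinset.mp he)
      rw [hev]
      have hcard : (Finset.univ.filter (fun v => v ∈ e)).card = 2 := by
        have h2 : (Finset.univ.filter (fun v => v ∈ e)) = incVerts {e} := by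
          ext v
          simp [mem_incVerts]
        rw [h2]
        have : ({e} : Finset (Sym2 V)) ⊆ G.edgeFinset := by
          intro g hg
          rw [Finset.mem_singleton] at hg
          rw [hg]
          exact he
        -- reuse hTR2-style argument directly
        revert hnd
        induction e using Sym2.ind with
        | _ a b =>
          intro hnd
          rw [incVerts_pair, Finset.card_insert_of_notMem (by simpa using hnd),
            Finset.card_singleton]
      rw [← hcard, Finset.card_filter]
    -- F4 (degree bound)
    have hF4 : ∀ v : V, 2*l + dv v ≤
        (∑ P ∈ NT.filter (fun P => v ∈ incVerts P), (incVerts P).card) + rv v + ev v := by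
      intro v
      have hdeg : 2*l ≤ G.degree v := min_degree hconn v
      set Ev := G.incidenceFinset v with hEv
      have hEvcard : Ev.card = G.degree v := SimpleGraph.card_incidenceFinset_eq_degree (G := G) (v := v)
      have hmemEv : ∀ g ∈ Ev, g ∈ G.edgeFinset ∧ v ∈ g := by
        intro g hg
        have := (SimpleGraph.mem_incidenceFinset (G := G) (v := v) g).mp hg
        exact ⟨SimpleGraph.mem_edgeFinset.mpr this.1, this.2⟩
      have hsubset : Ev ⊆ (if v ∈ e then ({e} : Finset (Sym2 V)) else ∅) ∪
          𝒬.biUnion (fun P => Ev ∩ P) := by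
        intro g hg
        by_cases hge : g = e
        · subst hge
          have hve : v ∈ g := (hmemEv g hg).2
          apply Finset.mem_union_left
          rw [if_pos hve]
          exact Finset.mem_singleton_self g
        · have hgE : g ∈ G.edgeFinset.erase e := Finset.mem_erase.mpr ⟨hge, (hmemEv g hg).1⟩
          obtain ⟨P, hP, hgP⟩ := hcover g hgE
          exact Finset.mem_union_right _ (Finset.mem_biUnion.mpr
            ⟨P, hP, Finset.mem_inter.mpr ⟨hg, hgP⟩⟩)
      have hcard1 : Ev.card ≤ ev v + ∑ P ∈ 𝒬, (Ev ∩ P).card := by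
        calc Ev.card ≤ ((if v ∈ e then ({e} : Finset (Sym2 V)) else ∅) ∪
              𝒬.biUnion (fun P => Ev ∩ P)).card := Finset.card_le_card hsubset
          _ ≤ (if v ∈ e then ({e} : Finset (Sym2 V)) else ∅).card +
              (𝒬.biUnion (fun P => Ev ∩ P)).card := Finset.card_union_le _ _
          _ ≤ ev v + ∑ P ∈ 𝒬, (Ev ∩ P).card := by
              apply Nat.add_le_add
              · by_cases hve : v ∈ e
                · rw [if_pos hve, hev]
                  simp [hve]
                · rw [if_neg hve, hev]
                  simp [hve]
              · exact Finset.card_biUnion_le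
      have hsplitsum : ∑ P ∈ 𝒬, (Ev ∩ P).card =
          ∑ P ∈ NT, (Ev ∩ P).card + ∑ P ∈ TR, (Ev ∩ P).card := by
        rw [← Finset.sum_filter_add_sum_filter_not 𝒬 (fun P => 2 ≤ P.card)]
        congr 1
        apply Finset.sum_congr _ (fun _ _ => rfl)
        apply Finset.filter_congr
        intro P hP
        have := (hne P hP).card_pos
        constructor
        · intro h; omega
        · intro h; omega
      have hTRbound : ∑ P ∈ TR, (Ev ∩ P).card ≤ rv v := by
        simp only [hrv]
        rw [Finset.card_filter]
        apply Finset.sum_le_sum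
        intro P hP
        by_cases hvP : v ∈ incVerts P
        · rw [if_pos hvP]
          calc (Ev ∩ P).card ≤ P.card := Finset.card_le_card (Finset.inter_subset_right)
            _ = 1 := (Finset.mem_filter.mp hP).2
        · rw [if_neg hvP]
          have : Ev ∩ P = ∅ := by
            rw [Finset.eq_empty_iff_forall_notMem]
            intro g hg
            obtain ⟨hg1, hg2⟩ := Finset.mem_inter.mp hg
            exact hvP (mem_incVerts.mpr ⟨g, hg2, (hmemEv g hg1).2⟩)
          rw [this]
          simp
      have hNTbound : ∀ P ∈ NT, (Ev ∩ P).card ≤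
          if v ∈ incVerts P then (incVerts P).card - 1 else 0 := by
        intro P hPNT
        by_cases hvP : v ∈ incVerts P
        · rw [if_pos hvP]
          have hinj : (Ev ∩ P).card ≤ ((incVerts P).erase v).card := by
            apply Finset.card_le_card_of_injOn
              (fun g => if h : v ∈ g then (Sym2.Mem.other' h) else v)
            · intro g hg
              obtain ⟨hg1, hg2⟩ := Finset.mem_inter.mp hg
              obtain ⟨hgE, hvg⟩ := hmemEv g hg1
              beta_reduce
              rw [dif_pos hvg, Finset.mem_coe]
              apply Finset.mem_erase.mpr
              constructor
              · intro hoth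
                have hspec := Sym2.other_spec' hvg
                have : g.IsDiag := by
                  rw [← hspec, hoth]
                  exact Sym2.mk_isDiag_iff.mpr rfl
                exact G.not_isDiag_of_mem_edgeSet (SimpleGraph.mem_edgeFinset.mp hgE) this
              · exact mem_incVerts.mpr ⟨g, hg2, Sym2.other_mem' hvg⟩
            · intro g1 hg1 g2 hg2 hfe
              obtain ⟨hg11, hg12⟩ := Finset.mem_inter.mp hg1
              obtain ⟨hg21, hg22⟩ := Finset.mem_inter.mp hg2
              have hv1 : v ∈ g1 := (hmemEv g1 hg11).2
              have hv2 : v ∈ g2 := (hmemEv g2 hg21).2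
              beta_reduce at hfe
              rw [dif_pos hv1, dif_pos hv2] at hfe
              rw [← Sym2.other_spec' hv1, ← Sym2.other_spec' hv2, hfe]
          calc (Ev ∩ P).card ≤ ((incVerts P).erase v).card := hinj
            _ = (incVerts P).card - 1 := Finset.card_erase_of_mem hvP
        · rw [if_neg hvP]
          have : Ev ∩ P = ∅ := by
            rw [Finset.eq_empty_iff_forall_notMem]
            intro g hg
            obtain ⟨hg1, hg2⟩ := Finset.mem_inter.mp hg
            exact hvP (mem_incVerts.mpr ⟨g, hg2, (hmemEv g hg1).2⟩)
          rw [this]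
          simp
      have hNTsum : ∑ P ∈ NT, (Ev ∩ P).card ≤
          ∑ P ∈ NT.filter (fun P => v ∈ incVerts P), ((incVerts P).card - 1) := by
        calc ∑ P ∈ NT, (Ev ∩ P).card
            ≤ ∑ P ∈ NT, (if v ∈ incVerts P then (incVerts P).card - 1 else 0) :=
              Finset.sum_le_sum hNTbound
          _ = ∑ P ∈ NT.filter (fun P => v ∈ incVerts P), ((incVerts P).card - 1) :=
              (Finset.sum_filter _ _).symm
      have hsum_add : ∑ P ∈ NT.filter (fun P => v ∈ incVerts P), ((incVerts P).card - 1) + dv v =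
          ∑ P ∈ NT.filter (fun P => v ∈ incVerts P), (incVerts P).card := by
        simp only [hdv]
        rw [Finset.card_eq_sum_ones (NT.filter (fun P => v ∈ incVerts P))]
        rw [← Finset.sum_add_distrib]
        apply Finset.sum_congr rfl
        intro P hP
        have hP3 : 3 ≤ (incVerts P).card := by
          obtain ⟨hPNT, _⟩ := Finset.mem_filter.mp hP
          obtain ⟨hPQ, h2⟩ := Finset.mem_filter.mp hPNT
          exact hw3 P hPQ h2
        omega
      omega
    -- F5 boundary
    have hF5 : ∀ P ∈ NT,
        2*l ≤ ((incVerts P).filter (fun v => 2 ≤ dv v ∨ 1 ≤ rv v ∨ v ∈ e)).card ∨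
        ((incVerts P).filter (fun v => 2 ≤ dv v ∨ 1 ≤ rv v ∨ v ∈ e)) = incVerts P := by
      intro P hPNT
      obtain ⟨hPQ, h2⟩ := Finset.mem_filter.mp hPNT
      have hWne : incVerts P ≠ Finset.univ := hfull P hPQ h2
      have hbd := boundary_lemma hconn (incVerts P) hWne
      have hBsubA : (incVerts P).filter (fun x => ∃ u, G.Adj x u ∧ u ∉ incVerts P) ⊆
          (incVerts P).filter (fun v => 2 ≤ dv v ∨ 1 ≤ rv v ∨ v ∈ e) := by
        intro x hx
        obtain ⟨hxP, u, hadj, huP⟩ := Finset.mem_filter.mp hx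
        refine Finset.mem_filter.mpr ⟨hxP, ?_⟩
        have hgE : s(x,u) ∈ G.edgeFinset := SimpleGraph.mem_edgeFinset.mpr hadj
        by_cases hge : s(x,u) = e
        · right; right; rw [← hge]; exact Sym2.mem_mk_left x u
        · obtain ⟨Q, hQ, hgQ⟩ := hcover _ (Finset.mem_erase.mpr ⟨hge, hgE⟩)
          have hQP : Q ≠ P := by
            rintro rfl
            exact huP (mem_incVerts.mpr ⟨_, hgQ, Sym2.mem_mk_right x u⟩)
          have hxQ : x ∈ incVerts Q := mem_incVerts.mpr ⟨_, hgQ, Sym2.mem_mk_left x u⟩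
          rcases hQsplit Q hQ with ⟨hQNT, _, _⟩ | ⟨hQTR, _, _⟩
          · left
            have hm1 : P ∈ NT.filter (fun R => x ∈ incVerts R) :=
              Finset.mem_filter.mpr ⟨hPNT, hxP⟩
            have hm2 : Q ∈ NT.filter (fun R => x ∈ incVerts R) :=
              Finset.mem_filter.mpr ⟨hQNT, hxQ⟩
            have : 1 < (NT.filter (fun R => x ∈ incVerts R)).card :=
              Finset.one_lt_card.mpr ⟨P, hm1, Q, hm2, fun h => hQP h.symm⟩
            simp only [hdv]
            omega
          · right; left
            have hm : Q ∈ TR.filter (fun R => x ∈ incVerts R) :=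
              Finset.mem_filter.mpr ⟨hQTR, hxQ⟩
            have : 0 < (TR.filter (fun R => x ∈ incVerts R)).card :=
              Finset.card_pos.mpr ⟨Q, hm⟩
            simp only [hrv]
            omega
      rcases hbd with h | h
      · exact Or.inl (le_trans h (Finset.card_le_card hBsubA))
      · refine Or.inr (Finset.Subset.antisymm (Finset.filter_subset _ _) ?_)
        calc incVerts P = (incVerts P).filter (fun x => ∃ u, G.Adj x u ∧ u ∉ incVerts P) := h.symm
          _ ⊆ _ := hBsubA
    -- F6 part guarantee
    have hF6 : ∀ P ∈ NT, (l:ℚ) ≤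
        (((incVerts P).filter (fun v => 2 ≤ dv v ∨ 1 ≤ rv v ∨ v ∈ e)).card : ℚ) *
          rho l (incVerts P).card := by
      intro P hPNT
      obtain ⟨hPQ, h2⟩ := Finset.mem_filter.mp hPNT
      have hwP : 3 ≤ (incVerts P).card := hw3 P hPQ h2
      rcases hF5 P hPNT with hA | hA
      · have hAq : (2*l : ℚ) ≤ (((incVerts P).filter (fun v => 2 ≤ dv v ∨ 1 ≤ rv v ∨ v ∈ e)).card : ℚ) := by
          exact_mod_cast hA
        calc (l:ℚ) = (2*l : ℚ) * (1/2) := by ring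
          _ ≤ (((incVerts P).filter (fun v => 2 ≤ dv v ∨ 1 ≤ rv v ∨ v ∈ e)).card : ℚ) *
              rho l (incVerts P).card :=
            mul_le_mul hAq (rho_ge_half _ _) (by norm_num) (by positivity)
      · rw [hA]
        have hwpos : (0:ℚ) < ((incVerts P).card : ℚ) := by
          have : (3:ℚ) ≤ ((incVerts P).card : ℚ) := by exact_mod_cast hwP
          linarith
        calc (l:ℚ) = ((incVerts P).card : ℚ) * ((l:ℚ) / ((incVerts P).card : ℚ)) := by
              field_simp
          _ ≤ ((incVerts P).card : ℚ) * rho l (incVerts P).card :=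
            mul_le_mul_of_nonneg_left (le_max_right _ _) (by positivity)
    -- F7 per-vertex
    have hF7 : ∀ v : V,
        (if (2 ≤ dv v ∨ 1 ≤ rv v ∨ v ∈ e) then
            ∑ P ∈ NT.filter (fun P => v ∈ incVerts P), rho l (incVerts P).card else 0) ≤
          (k:ℚ) * ((dv v : ℚ) - 1) + (rv v : ℚ)/2 + (ev v : ℚ)/2 := by
      intro v
      by_cases hact : (2 ≤ dv v ∨ 1 ≤ rv v ∨ v ∈ e)
      · rw [if_pos hact]
        have hεle : ev v ≤ 1 := by
          rw [hev]
          by_cases hve : v ∈ e <;> simp [hve]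
        have hact' : 2 ≤ (NT.filter (fun P => v ∈ incVerts P)).card ∨ 1 ≤ rv v ∨ ev v = 1 := by
          rcases hact with h | h | h
          · left; rw [hdv] at h; exact h
          · right; left; exact h
          · right; right; rw [hev]; simp [h]
        have happ := lemA k l hk hkl hl (NT.filter (fun P => v ∈ incVerts P))
          (fun P => (incVerts P).card)
          (fun P hP => by
            obtain ⟨hPNT, _⟩ := Finset.mem_filter.mp hP
            obtain ⟨hPQ, h2⟩ := Finset.mem_filter.mp hPNT
            exact hw3 P hPQ h2)
          (rv v) (ev v) hεle (hF4 v) hact'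
        have hdveq : (NT.filter (fun P => v ∈ incVerts P)).card = dv v := by rw [hdv]
        rw [hdveq] at happ
        exact happ
      · rw [if_neg hact]
        push_neg at hact
        obtain ⟨hd1, hr0, hve⟩ := hact
        have hrv0 : rv v = 0 := by omega
        have hev0 : ev v = 0 := by rw [hev]; simp [hve]
        have hdpos : 1 ≤ dv v := by
          by_contra h0
          push_neg at h0
          have hdv0 : dv v = 0 := by omega
          have hfe : NT.filter (fun P => v ∈ incVerts P) = ∅ := by
            rw [← Finset.card_eq_zero]
            rw [hdv] at hdv0
            exact hdv0
          have h4 := hF4 v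
          rw [hfe, Finset.sum_empty, hdv0, hrv0, hev0] at h4
          omega
        have hdv1 : dv v = 1 := by omega
        rw [hdv1, hrv0, hev0]
        norm_num
    -- F8 swap
    have hF8 : ∑ v ∈ Finset.univ,
        (if (2 ≤ dv v ∨ 1 ≤ rv v ∨ v ∈ e) then
            ∑ P ∈ NT.filter (fun P => v ∈ incVerts P), rho l (incVerts P).card else 0) =
        ∑ P ∈ NT, (((incVerts P).filter (fun v => 2 ≤ dv v ∨ 1 ≤ rv v ∨ v ∈ e)).card : ℚ) *
          rho l (incVerts P).card := by
      calc ∑ v ∈ Finset.univ,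
          (if (2 ≤ dv v ∨ 1 ≤ rv v ∨ v ∈ e) then
              ∑ P ∈ NT.filter (fun P => v ∈ incVerts P), rho l (incVerts P).card else 0)
          = ∑ v ∈ Finset.univ, ∑ P ∈ NT,
              (if (v ∈ incVerts P ∧ (2 ≤ dv v ∨ 1 ≤ rv v ∨ v ∈ e)) then
                rho l (incVerts P).card else 0) := by
            apply Finset.sum_congr rfl
            intro v _
            by_cases hact : (2 ≤ dv v ∨ 1 ≤ rv v ∨ v ∈ e)
            · rw [if_pos hact, Finset.sum_filter]
              apply Finset.sum_congr rfl
              intro P _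
              by_cases hv : v ∈ incVerts P
              · rw [if_pos hv, if_pos ⟨hv, hact⟩]
              · rw [if_neg hv, if_neg (fun h => hv h.1)]
            · rw [if_neg hact]
              symm
              apply Finset.sum_eq_zero
              intro P _
              rw [if_neg (fun h => hact h.2)]
        _ = ∑ P ∈ NT, ∑ v ∈ Finset.univ,
              (if (v ∈ incVerts P ∧ (2 ≤ dv v ∨ 1 ≤ rv v ∨ v ∈ e)) then
                rho l (incVerts P).card else 0) := Finset.sum_comm
        _ = ∑ P ∈ NT, (((incVerts P).filter (fun v => 2 ≤ dv v ∨ 1 ≤ rv v ∨ v ∈ e)).card : ℚ) *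
              rho l (incVerts P).card := by
            apply Finset.sum_congr rfl
            intro P _
            rw [← Finset.sum_filter]
            have hfeq : Finset.univ.filter
                (fun v => v ∈ incVerts P ∧ (2 ≤ dv v ∨ 1 ≤ rv v ∨ v ∈ e)) =
                (incVerts P).filter (fun v => 2 ≤ dv v ∨ 1 ≤ rv v ∨ v ∈ e) := by
              ext v
              simp only [Finset.mem_filter, Finset.mem_univ, true_and]
            rw [hfeq, Finset.sum_const, nsmul_eq_mul]
    -- assembly
    have hQeqsplit : ∑ P ∈ 𝒬, (if P.card = 1 then (1:ℚ) else (k:ℚ) * ((incVerts P).card : ℚ) - l)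
        = ∑ P ∈ NT, ((k:ℚ) * ((incVerts P).card : ℚ) - l) + (TR.card : ℚ) := by
      rw [← Finset.sum_filter_add_sum_filter_not 𝒬 (fun P => 2 ≤ P.card)]
      congr 1
      · apply Finset.sum_congr rfl
        intro P hP
        have h2 := (Finset.mem_filter.mp hP).2
        rw [if_neg (by omega)]
      · have hTReq : 𝒬.filter (fun P => ¬ 2 ≤ P.card) = TR := by
          apply Finset.filter_congr
          intro P hP
          have := (hne P hP).card_pos
          constructor
          · intro h; omega
          · intro h; omega
        rw [hTReq]
        rw [Finset.sum_congr rfl (fun P hP => if_pos ((Finset.mem_filter.mp hP).2))]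
        rw [Finset.sum_const, nsmul_eq_mul, mul_one]
    have hchain : (l:ℚ) * NT.card ≤
        (k:ℚ) * (∑ v ∈ Finset.univ, (dv v : ℚ)) - (k:ℚ) * (Fintype.card V)
          + (TR.card : ℚ) + 1 := by
      have c1 : (l:ℚ) * NT.card = ∑ P ∈ NT, (l:ℚ) := by
        rw [Finset.sum_const, nsmul_eq_mul, mul_comm]
      have c2 : ∑ P ∈ NT, (l:ℚ) ≤
          ∑ P ∈ NT, (((incVerts P).filter (fun v => 2 ≤ dv v ∨ 1 ≤ rv v ∨ v ∈ e)).card : ℚ) *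
            rho l (incVerts P).card := Finset.sum_le_sum hF6
      have c3 := hF8.symm
      have c4 : ∑ v ∈ Finset.univ,
          (if (2 ≤ dv v ∨ 1 ≤ rv v ∨ v ∈ e) then
              ∑ P ∈ NT.filter (fun P => v ∈ incVerts P), rho l (incVerts P).card else 0) ≤
          ∑ v ∈ Finset.univ, ((k:ℚ) * ((dv v : ℚ) - 1) + (rv v : ℚ)/2 + (ev v : ℚ)/2) :=
        Finset.sum_le_sum (fun v _ => hF7 v)
      have c5 : ∑ v ∈ Finset.univ, ((k:ℚ) * ((dv v : ℚ) - 1) + (rv v : ℚ)/2 + (ev v : ℚ)/2)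
          = (k:ℚ) * (∑ v ∈ Finset.univ, (dv v : ℚ)) - (k:ℚ) * (Fintype.card V)
            + (TR.card : ℚ) + 1 := by
        rw [Finset.sum_add_distrib, Finset.sum_add_distrib]
        have e1 : ∑ v ∈ Finset.univ, (k:ℚ) * ((dv v : ℚ) - 1)
            = (k:ℚ) * (∑ v ∈ Finset.univ, (dv v : ℚ)) - (k:ℚ) * (Fintype.card V) := by
          rw [← Finset.mul_sum, Finset.sum_sub_distrib, Finset.sum_const, nsmul_eq_mul,
            Finset.card_univ, mul_one, mul_sub]
        have e2 : ∑ v ∈ Finset.univ, (rv v : ℚ)/2 = (TR.card : ℚ) := by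
          rw [← Finset.sum_div]
          have : ∑ v ∈ Finset.univ, (rv v : ℚ) = ((∑ v ∈ Finset.univ, rv v : ℕ) : ℚ) := by
            push_cast
            rfl
          rw [this, hF2]
          push_cast
          ring
        have e3 : ∑ v ∈ Finset.univ, (ev v : ℚ)/2 = 1 := by
          rw [← Finset.sum_div]
          have : ∑ v ∈ Finset.univ, (ev v : ℚ) = ((∑ v ∈ Finset.univ, ev v : ℕ) : ℚ) := by
            push_cast
            rfl
          rw [this, hF3]
          norm_num
        rw [e1, e2, e3]
      calc (l:ℚ) * NT.card = ∑ P ∈ NT, (l:ℚ) := c1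
        _ ≤ _ := c2
        _ = _ := c3
        _ ≤ _ := c4
        _ = _ := c5
    have hNTsum : ∑ P ∈ NT, ((k:ℚ) * ((incVerts P).card : ℚ) - l)
        = (k:ℚ) * (∑ v ∈ Finset.univ, (dv v : ℚ)) - (l:ℚ) * NT.card := by
      rw [Finset.sum_sub_distrib, ← Finset.mul_sum, Finset.sum_const, nsmul_eq_mul]
      have : ∑ P ∈ NT, ((incVerts P).card : ℚ) = ∑ v ∈ Finset.univ, (dv v : ℚ) := by
        have := hF1
        push_cast
        exact_mod_cast congrArg (fun n : ℕ => (n : ℚ)) this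
      rw [this]
      ring
    rw [hQeqsplit, hNTsum]
    have hlq : (1:ℚ) ≤ (l:ℚ) := by
      have : (3:ℚ) ≤ (l:ℚ) := by exact_mod_cast hl3
      linarith
    linarith
end Counting

section Matroid
variable {V : Type} [Fintype V]


lemma card_incVerts_singleton {G : SimpleGraph V} {g : Sym2 V} (hg : g ∈ G.edgeFinset) :
    (incVerts {g}).card = 2 := by
  have hnd : ¬ g.IsDiag := G.not_isDiag_of_mem_edgeSet (SimpleGraph.mem_edgeFinset.mp hg)
  induction g using Sym2.ind with
  | _ a b =>
    rw [incVerts_pair, Finset.card_insert_of_notMem (by simpa using hnd), Finset.card_singleton]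

lemma tight_union (k l : ℕ) {F X Y : Finset (Sym2 V)}
    (hsp : CountSparse (k:ℤ) (l:ℤ) F) (hX : X ⊆ F) (hY : Y ⊆ F)
    (hXt : (X.card : ℤ) = (k:ℤ) * (incVerts X).card - l)
    (hYt : (Y.card : ℤ) = (k:ℤ) * (incVerts Y).card - l)
    (hint : (X ∩ Y).Nonempty) :
    ((X ∪ Y).card : ℤ) = (k:ℤ) * (incVerts (X ∪ Y)).card - l := by
  have hXYne : (X ∪ Y).Nonempty := by
    obtain ⟨a, ha⟩ := hint
    exact ⟨a, Finset.mem_union_left _ (Finset.mem_inter.mp ha).1⟩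
  have hub := hsp (X ∪ Y) (Finset.union_subset hX hY) hXYne
  have hlb_int := hsp (X ∩ Y) ((Finset.inter_subset_left).trans hX) hint
  have hcards : (X ∪ Y).card + (X ∩ Y).card = X.card + Y.card :=
    Finset.card_union_add_card_inter X Y
  have hV : incVerts (X ∪ Y) = incVerts X ∪ incVerts Y := incVerts_union X Y
  have hVcards : (incVerts X ∪ incVerts Y).card + (incVerts X ∩ incVerts Y).card
      = (incVerts X).card + (incVerts Y).card :=
    Finset.card_union_add_card_inter _ _
  have hVsub : incVerts (X ∩ Y) ⊆ incVerts X ∩ incVerts Y :=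
    Finset.subset_inter (incVerts_mono Finset.inter_subset_left)
      (incVerts_mono Finset.inter_subset_right)
  have hVsubc : (incVerts (X ∩ Y)).card ≤ (incVerts X ∩ incVerts Y).card :=
    Finset.card_le_card hVsub
  have hk0 : (0:ℤ) ≤ (k:ℤ) := by positivity
  -- combine
  have h1 : ((X ∪ Y).card : ℤ) ≥ (k:ℤ) * (incVerts (X ∪ Y)).card - l := by
    have hcast : ((X ∪ Y).card : ℤ) + (X ∩ Y).card = X.card + Y.card := by exact_mod_cast hcards
    have hVcast : ((incVerts X ∪ incVerts Y).card : ℤ) + (incVerts X ∩ incVerts Y).card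
        = (incVerts X).card + (incVerts Y).card := by exact_mod_cast hVcards
    have hVsc : ((incVerts (X ∩ Y)).card : ℤ) ≤ ((incVerts X ∩ incVerts Y).card : ℤ) := by
      exact_mod_cast hVsubc
    have hmul := mul_le_mul_of_nonneg_left hVsc hk0
    rw [hV]
    nlinarith [hlb_int, hXt, hYt]
  omega

lemma exists_maximal_tight (k l : ℕ) {F : Finset (Sym2 V)} {X : Finset (Sym2 V)}
    (hX : X ∈ F.powerset.filter (fun X => X.Nonempty ∧
      (X.card : ℤ) = (k:ℤ) * (incVerts X).card - l)) :
    ∃ M ∈ (F.powerset.filter (fun X => X.Nonempty ∧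
        (X.card : ℤ) = (k:ℤ) * (incVerts X).card - l)).filter
        (fun X => ∀ Y ∈ F.powerset.filter (fun X => X.Nonempty ∧
          (X.card : ℤ) = (k:ℤ) * (incVerts X).card - l), X ⊆ Y → X = Y),
      X ⊆ M := by
  classical
  set T := F.powerset.filter (fun X => X.Nonempty ∧
      (X.card : ℤ) = (k:ℤ) * (incVerts X).card - l) with hT
  have hS : (T.filter (fun Y => X ⊆ Y)).Nonempty := ⟨X, Finset.mem_filter.mpr ⟨hX, le_refl _⟩⟩
  obtain ⟨M, hM, hMmax⟩ := Finset.exists_max_image (T.filter (fun Y => X ⊆ Y)) Finset.card hS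
  obtain ⟨hMT, hXM⟩ := Finset.mem_filter.mp hM
  refine ⟨M, Finset.mem_filter.mpr ⟨hMT, ?_⟩, hXM⟩
  intro Y hY hMY
  have hYS : Y ∈ T.filter (fun Y => X ⊆ Y) :=
    Finset.mem_filter.mpr ⟨hY, hXM.trans hMY⟩
  exact Finset.eq_of_subset_of_card_le hMY (hMmax Y hYS)

end Matroid

section KeyLower
variable {V : Type} [Fintype V]

set_option maxHeartbeats 4000000 in
lemma key_lower (k l : ℕ) (hk : 2 ≤ k) (hkl : k < l) (hl : l + 1 ≤ 2*k)
    {G : SimpleGraph V} (hconn : VConn G (2*l)) {e : Sym2 V} (he : e ∈ G.edgeFinset)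
    (F : Finset (Sym2 V)) (hFsub : F ⊆ G.edgeFinset.erase e)
    (hFsp : CountSparse (k:ℤ) (l:ℤ) F)
    (hFmax : ∀ g ∈ G.edgeFinset.erase e, g ∉ F → ¬ CountSparse (k:ℤ) (l:ℤ) (insert g F)) :
    (k:ℚ) * (Fintype.card V) - (l:ℚ) ≤ (F.card : ℚ) := by
  classical
  set E' := G.edgeFinset.erase e with hE'
  have hE'sub : E' ⊆ G.edgeFinset := Finset.erase_subset _ _
  set T := F.powerset.filter (fun X => X.Nonempty ∧
      (X.card : ℤ) = (k:ℤ) * (incVerts X).card - l) with hT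
  set M𝒮 := T.filter (fun X => ∀ Y ∈ T, X ⊆ Y → X = Y) with hM𝒮
  have hMfacts : ∀ M ∈ M𝒮, M ⊆ F ∧ M.Nonempty ∧
      (M.card : ℤ) = (k:ℤ) * (incVerts M).card - l := by
    intro M hM
    obtain ⟨hMT, _⟩ := Finset.mem_filter.mp hM
    obtain ⟨hMP, hMne, hMt⟩ := Finset.mem_filter.mp hMT
    exact ⟨Finset.mem_powerset.mp hMP, hMne, hMt⟩
  have hMdisj : ∀ M ∈ M𝒮, ∀ M' ∈ M𝒮, M ≠ M' → Disjoint M M' := by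
    intro M hM M' hM' hne
    rw [Finset.disjoint_left]
    by_contra hcon
    push_neg at hcon
    obtain ⟨a, haM, haM'⟩ := hcon
    obtain ⟨hMF, hMne, hMt⟩ := hMfacts M hM
    obtain ⟨hM'F, hM'ne, hM't⟩ := hMfacts M' hM'
    have hU : ((M ∪ M').card : ℤ) = (k:ℤ) * (incVerts (M ∪ M')).card - l :=
      tight_union k l hFsp hMF hM'F hMt hM't ⟨a, Finset.mem_inter.mpr ⟨haM, haM'⟩⟩
    have hUT : M ∪ M' ∈ T := Finset.mem_filter.mpr
      ⟨Finset.mem_powerset.mpr (Finset.union_subset hMF hM'F),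
        ⟨a, Finset.mem_union_left _ haM⟩, hU⟩
    have h1 := (Finset.mem_filter.mp hM).2 (M ∪ M') hUT Finset.subset_union_left
    have h2 := (Finset.mem_filter.mp hM').2 (M ∪ M') hUT Finset.subset_union_right
    exact hne (h1.trans h2.symm)
  -- the X_g construction for g outside F
  have hXg : ∀ g, g ∈ E' → g ∉ F → ∃ X ∈ T, incVerts {g} ⊆ incVerts X := by
    intro g hgE hgF
    have hviol := hFmax g hgE hgF
    rw [CountSparse] at hviol
    push_neg at hviol
    obtain ⟨F', hF'sub, hF'ne, hF'big⟩ := hviol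
    have hgF' : g ∈ F' := by
      by_contra hgF'
      have : F' ⊆ F := by
        intro x hx
        rcases Finset.mem_insert.mp (hF'sub hx) with rfl | hxF
        · exact absurd hx hgF'
        · exact hxF
      exact absurd (hFsp F' this hF'ne) (not_le.mpr hF'big)
    set X := F'.erase g with hX
    have hXF : X ⊆ F := by
      intro x hx
      obtain ⟨hxg, hxF'⟩ := Finset.mem_erase.mp hx
      rcases Finset.mem_insert.mp (hF'sub hxF') with rfl | hxF
      · exact absurd rfl hxg
      · exact hxF
    have hF'eq : F' = insert g X := by
      rw [hX, Finset.insert_erase hgF']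
    have hcardX : F'.card = X.card + 1 := by
      rw [hX, Finset.card_erase_of_mem hgF']
      have := Finset.card_pos.mpr ⟨g, hgF'⟩
      omega
    have hg2 : (incVerts {g}).card = 2 := card_incVerts_singleton (hE'sub hgE)
    have hXne : X.Nonempty := by
      rw [Finset.nonempty_iff_ne_empty]
      intro hXe
      have hF'g : F' = {g} := by rw [hF'eq, hXe]; rfl
      rw [hF'g] at hF'big
      rw [hF'g] at *
      have : (({g} : Finset (Sym2 V)).card : ℤ) = 1 := by simp
      rw [this, hg2] at hF'big
      have : (l:ℤ) + 1 ≤ 2*k := by exact_mod_cast hl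
      omega
    -- X is tight and incVerts X = incVerts F'
    have hsubV : incVerts X ⊆ incVerts F' := incVerts_mono (by rw [hF'eq]; exact Finset.subset_insert g X)
    have hXsp := hFsp X hXF hXne
    have hbig' : (k:ℤ) * (incVerts F').card - l ≤ (X.card : ℤ) := by
      have : (F'.card : ℤ) = (X.card : ℤ) + 1 := by exact_mod_cast hcardX
      omega
    have hmono : (k:ℤ) * (incVerts X).card ≤ (k:ℤ) * (incVerts F').card := by
      have := Finset.card_le_card hsubV
      have hc : ((incVerts X).card : ℤ) ≤ ((incVerts F').card : ℤ) := by exact_mod_cast this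
      have hk0 : (0:ℤ) ≤ (k:ℤ) := by positivity
      exact mul_le_mul_of_nonneg_left hc hk0
    have hXt : (X.card : ℤ) = (k:ℤ) * (incVerts X).card - l := le_antisymm hXsp (by omega)
    have hVeq : incVerts X = incVerts F' := by
      apply Finset.eq_of_subset_of_card_le hsubV
      have hk0 : (0:ℤ) < (k:ℤ) := by positivity
      have h1 : (k:ℤ) * (incVerts F').card ≤ (k:ℤ) * (incVerts X).card := by omega
      have h2 : ((incVerts F').card : ℤ) ≤ ((incVerts X).card : ℤ) :=
        le_of_mul_le_mul_left h1 hk0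
      exact_mod_cast h2
    refine ⟨X, Finset.mem_filter.mpr ⟨Finset.mem_powerset.mpr hXF, hXne, hXt⟩, ?_⟩
    rw [hVeq]
    apply incVerts_mono
    intro x hx
    rw [Finset.mem_singleton] at hx
    rw [hx, hF'eq]
    exact Finset.mem_insert_self g X
  -- choice of assignment
  have hchoice : ∀ g : Sym2 V, ∃ M : Finset (Sym2 V),
      (g ∈ E' ∧ g ∉ F) → (M ∈ M𝒮 ∧ incVerts {g} ⊆ incVerts M) := by
    intro g
    by_cases hg : g ∈ E' ∧ g ∉ F
    · obtain ⟨X, hXT, hXV⟩ := hXg g hg.1 hg.2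
      obtain ⟨M, hMM, hXM⟩ := exists_maximal_tight k l hXT
      exact ⟨M, fun _ => ⟨hMM, hXV.trans (incVerts_mono hXM)⟩⟩
    · exact ⟨∅, fun h => absurd h hg⟩
  choose φ hφ using hchoice
  -- the partition
  set att := fun M => (E' \ F).filter (fun g => φ g = M) with hatt
  set Qp := fun M => M ∪ att M with hQp
  set U := M𝒮.biUnion id with hU
  set L := F \ U with hL
  set 𝒬 := M𝒮.image Qp ∪ L.image (fun x => ({x} : Finset (Sym2 V))) with h𝒬
  have hattE : ∀ M, att M ⊆ E' \ F := fun M => Finset.filter_subset _ _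
  have hQpV : ∀ M ∈ M𝒮, incVerts (Qp M) = incVerts M := by
    intro M hM
    apply Finset.Subset.antisymm
    · intro v hv
      obtain ⟨g, hg, hvg⟩ := mem_incVerts.mp hv
      rcases Finset.mem_union.mp hg with hgM | hgatt
      · exact mem_incVerts.mpr ⟨g, hgM, hvg⟩
      · obtain ⟨hgEF, hgphi⟩ := Finset.mem_filter.mp hgatt
        obtain ⟨hgE, hgF⟩ := Finset.mem_sdiff.mp hgEF
        have := (hφ g ⟨hgE, hgF⟩).2
        rw [hgphi] at this
        exact this (mem_incVerts.mpr ⟨g, Finset.mem_singleton_self g, hvg⟩)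
    · exact incVerts_mono Finset.subset_union_left
  have hQpF : ∀ M, Qp M ∩ F = M ∩ F := by
    intro M
    rw [hQp]
    ext x
    simp only [Finset.mem_inter, Finset.mem_union]
    constructor
    · rintro ⟨hx1 | hx2, hxF⟩
      · exact ⟨hx1, hxF⟩
      · exact absurd hxF (Finset.mem_sdiff.mp (hattE M hx2)).2
    · rintro ⟨hx, hxF⟩
      exact ⟨Or.inl hx, hxF⟩
  have hQpinj : ∀ M ∈ M𝒮, ∀ M' ∈ M𝒮, Qp M = Qp M' → M = M' := by
    intro M hM M' hM' hQQ
    have h1 := hQpF M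
    have h2 := hQpF M'
    rw [hQQ, h2] at h1
    have hMF := (hMfacts M hM).1
    have hM'F := (hMfacts M' hM').1
    rw [Finset.inter_eq_left.mpr hMF, Finset.inter_eq_left.mpr hM'F] at h1
    exact h1.symm
  have hQnotsingle : ∀ M ∈ M𝒮, ∀ x ∈ L, Qp M ≠ {x} := by
    intro M hM x hx hcon
    obtain ⟨hMF, hMne, _⟩ := hMfacts M hM
    obtain ⟨y, hy⟩ := hMne
    have hyQ : y ∈ Qp M := Finset.mem_union_left _ hy
    rw [hcon, Finset.mem_singleton] at hyQ
    subst hyQ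
    obtain ⟨hxF, hxU⟩ := Finset.mem_sdiff.mp hx
    exact hxU (Finset.mem_biUnion.mpr ⟨M, hM, hy⟩)
  have hQsub : ∀ P ∈ 𝒬, P ⊆ E' := by
    intro P hP
    rcases Finset.mem_union.mp hP with hP1 | hP2
    · obtain ⟨M, hM, rfl⟩ := Finset.mem_image.mp hP1
      apply Finset.union_subset
      · exact ((hMfacts M hM).1).trans hFsub
      · exact (hattE M).trans (Finset.sdiff_subset)
    · obtain ⟨x, hx, rfl⟩ := Finset.mem_image.mp hP2
      intro y hy
      rw [Finset.mem_singleton] at hy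
      subst hy
      exact hFsub (Finset.mem_sdiff.mp hx).1
  have hQne : ∀ P ∈ 𝒬, P.Nonempty := by
    intro P hP
    rcases Finset.mem_union.mp hP with hP1 | hP2
    · obtain ⟨M, hM, rfl⟩ := Finset.mem_image.mp hP1
      obtain ⟨y, hy⟩ := (hMfacts M hM).2.1
      exact ⟨y, Finset.mem_union_left _ hy⟩
    · obtain ⟨x, hx, rfl⟩ := Finset.mem_image.mp hP2
      exact ⟨x, Finset.mem_singleton_self x⟩
  have hmemQp : ∀ M ∈ M𝒮, ∀ x, x ∈ Qp M → (x ∈ M ∧ x ∈ F) ∨ (x ∈ E' ∧ x ∉ F ∧ φ x = M) := by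
    intro M hM x hx
    rcases Finset.mem_union.mp hx with h1 | h2
    · exact Or.inl ⟨h1, (hMfacts M hM).1 h1⟩
    · obtain ⟨hxEF, hxphi⟩ := Finset.mem_filter.mp h2
      obtain ⟨hxE, hxF⟩ := Finset.mem_sdiff.mp hxEF
      exact Or.inr ⟨hxE, hxF, hxphi⟩
  have hQdisj : ∀ P ∈ 𝒬, ∀ P' ∈ 𝒬, P ≠ P' → Disjoint P P' := by
    intro P hP P' hP' hPP'
    rw [Finset.disjoint_left]
    intro x hxP hxP'
    rcases Finset.mem_union.mp hP with hP1 | hP2 <;>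
      rcases Finset.mem_union.mp hP' with hP'1 | hP'2
    · obtain ⟨M, hM, rfl⟩ := Finset.mem_image.mp hP1
      obtain ⟨M', hM', rfl⟩ := Finset.mem_image.mp hP'1
      have hMM' : M ≠ M' := fun h => hPP' (by rw [h])
      rcases hmemQp M hM x hxP with ⟨hxM, hxF⟩ | ⟨hxE, hxF, hxphi⟩
      · rcases hmemQp M' hM' x hxP' with ⟨hxM', _⟩ | ⟨_, hxF', _⟩
        · exact (Finset.disjoint_left.mp (hMdisj M hM M' hM' hMM')) hxM hxM'
        · exact hxF' hxF
      · rcases hmemQp M' hM' x hxP' with ⟨_, hxF'⟩ | ⟨_, _, hxphi'⟩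
        · exact hxF hxF'
        · exact hMM' (hxphi ▸ hxphi')
    · obtain ⟨M, hM, rfl⟩ := Finset.mem_image.mp hP1
      obtain ⟨y, hy, rfl⟩ := Finset.mem_image.mp hP'2
      rw [Finset.mem_singleton] at hxP'
      subst hxP'
      obtain ⟨hxF, hxU⟩ := Finset.mem_sdiff.mp hy
      rcases hmemQp M hM x hxP with ⟨hxM, _⟩ | ⟨_, hxF', _⟩
      · exact hxU (Finset.mem_biUnion.mpr ⟨M, hM, hxM⟩)
      · exact hxF' hxF
    · obtain ⟨y, hy, rfl⟩ := Finset.mem_image.mp hP2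
      obtain ⟨M, hM, rfl⟩ := Finset.mem_image.mp hP'1
      rw [Finset.mem_singleton] at hxP
      subst hxP
      obtain ⟨hxF, hxU⟩ := Finset.mem_sdiff.mp hy
      rcases hmemQp M hM x hxP' with ⟨hxM, _⟩ | ⟨_, hxF', _⟩
      · exact hxU (Finset.mem_biUnion.mpr ⟨M, hM, hxM⟩)
      · exact hxF' hxF
    · obtain ⟨y, hy, rfl⟩ := Finset.mem_image.mp hP2
      obtain ⟨y', hy', rfl⟩ := Finset.mem_image.mp hP'2
      rw [Finset.mem_singleton] at hxP hxP'
      subst hxP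
      subst hxP'
      exact hPP' rfl
  have hQcover : ∀ g ∈ E', ∃ P ∈ 𝒬, g ∈ P := by
    intro g hgE
    by_cases hgF : g ∈ F
    · by_cases hgU : g ∈ U
      · obtain ⟨M, hM, hgM⟩ := Finset.mem_biUnion.mp hgU
        exact ⟨Qp M, Finset.mem_union_left _ (Finset.mem_image_of_mem Qp hM),
          Finset.mem_union_left _ hgM⟩
      · refine ⟨{g}, Finset.mem_union_right _ ?_, Finset.mem_singleton_self g⟩
        exact Finset.mem_image_of_mem _ (Finset.mem_sdiff.mpr ⟨hgF, hgU⟩)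
    · obtain ⟨hphiM, _⟩ := hφ g ⟨hgE, hgF⟩
      refine ⟨Qp (φ g), Finset.mem_union_left _ (Finset.mem_image_of_mem Qp hphiM), ?_⟩
      apply Finset.mem_union_right
      exact Finset.mem_filter.mpr ⟨Finset.mem_sdiff.mpr ⟨hgE, hgF⟩, rfl⟩
  -- apply counting
  have hcount := counting k l hk hkl hl hconn he 𝒬 hQsub hQne hQdisj hQcover
  -- bound the sum by F.card
  have himdisj : Disjoint (M𝒮.image Qp) (L.image (fun x => ({x} : Finset (Sym2 V)))) := by
    rw [Finset.disjoint_left]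
    intro P hP1 hP2
    obtain ⟨M, hM, rfl⟩ := Finset.mem_image.mp hP1
    obtain ⟨x, hx, hxeq⟩ := Finset.mem_image.mp hP2
    exact hQnotsingle M hM x hx hxeq.symm
  have hsum1 : ∑ P ∈ M𝒮.image Qp,
      (if P.card = 1 then (1:ℚ) else (k:ℚ) * ((incVerts P).card : ℚ) - l)
      = ∑ M ∈ M𝒮, (if (Qp M).card = 1 then (1:ℚ) else (k:ℚ) * ((incVerts (Qp M)).card : ℚ) - l) := by
    apply Finset.sum_image
    exact hQpinj
  have hsum2 : ∑ P ∈ L.image (fun x => ({x} : Finset (Sym2 V))),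
      (if P.card = 1 then (1:ℚ) else (k:ℚ) * ((incVerts P).card : ℚ) - l)
      = (L.card : ℚ) := by
    rw [Finset.sum_image (fun x _ y _ h => Finset.singleton_injective h)]
    rw [Finset.sum_congr rfl (fun x _ => if_pos (Finset.card_singleton x))]
    rw [Finset.sum_const, nsmul_eq_mul, mul_one]
  have hsum3 : ∀ M ∈ M𝒮, (if (Qp M).card = 1 then (1:ℚ)
      else (k:ℚ) * ((incVerts (Qp M)).card : ℚ) - l) ≤ (M.card : ℚ) := by
    intro M hM
    obtain ⟨hMF, hMne, hMt⟩ := hMfacts M hM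
    have hMc1 : (1:ℚ) ≤ (M.card : ℚ) := by
      have := Finset.card_pos.mpr hMne
      exact_mod_cast this
    by_cases hq1 : (Qp M).card = 1
    · rw [if_pos hq1]
      exact hMc1
    · rw [if_neg hq1]
      rw [hQpV M hM]
      have : (M.card : ℚ) = (k:ℚ) * ((incVerts M).card : ℚ) - l := by
        exact_mod_cast hMt
      rw [this]
  have hUcard : U.card = ∑ M ∈ M𝒮, M.card := Finset.card_biUnion hMdisj
  have hUF : U ⊆ F := by
    intro x hx
    obtain ⟨M, hM, hxM⟩ := Finset.mem_biUnion.mp hx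
    exact (hMfacts M hM).1 hxM
  have hLcard : L.card = F.card - U.card := Finset.card_sdiff_of_subset hUF
  have hUle : U.card ≤ F.card := Finset.card_le_card hUF
  calc (k:ℚ) * (Fintype.card V) - (l:ℚ)
      ≤ ∑ P ∈ 𝒬, (if P.card = 1 then (1:ℚ) else (k:ℚ) * ((incVerts P).card : ℚ) - l) := hcount
    _ = ∑ M ∈ M𝒮, (if (Qp M).card = 1 then (1:ℚ)
          else (k:ℚ) * ((incVerts (Qp M)).card : ℚ) - l) + (L.card : ℚ) := by
        rw [h𝒬, Finset.sum_union himdisj, hsum1, hsum2]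
    _ ≤ ∑ M ∈ M𝒮, (M.card : ℚ) + (L.card : ℚ) := by
        have := Finset.sum_le_sum hsum3
        linarith
    _ = (F.card : ℚ) := by
        have h1 : ∑ M ∈ M𝒮, (M.card : ℚ) = ((∑ M ∈ M𝒮, M.card : ℕ) : ℚ) := by
          push_cast
          rfl
        rw [h1, ← hUcard]
        have h2 : U.card + L.card = F.card := by omega
        have h3 : (U.card : ℚ) + (L.card : ℚ) = (F.card : ℚ) := by exact_mod_cast h2
        exact h3

end KeyLower

/-- For integers `2 ≤ k < ℓ ≤ 2k-1`, every `2ℓ`-connected graph `G` is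
`(k,ℓ)`-redundant: for every edge `e`, the rank of `E(G) - e` in the `(k,ℓ)`-count matroid
equals `k|V(G)| - ℓ`. -/
theorem stmt_9 {V : Type} [Fintype V] (k ℓ : ℕ)
    (hk : 2 ≤ k) (hkl : k < ℓ) (hl : ℓ ≤ 2 * k - 1)
    (G : SimpleGraph V) (hconn : VConn G (2 * ℓ)) :
    ∀ e ∈ G.edgeFinset,
      (countRank (k : ℤ) (ℓ : ℤ) (G.edgeFinset.erase e) : ℤ) =
        (k : ℤ) * Fintype.card V - ℓ := by
  classical
  intro e he
  have hl' : ℓ + 1 ≤ 2*k := by omega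
  set E' := G.edgeFinset.erase e with hE'
  have hn : 2*ℓ < Fintype.card V := hconn.1
  have hkn : ℓ ≤ k * Fintype.card V := by nlinarith
  set N := k * Fintype.card V - ℓ with hN
  have hNZ : (N : ℤ) = (k:ℤ) * Fintype.card V - ℓ := by
    rw [hN]
    push_cast [Nat.cast_sub hkn]
    ring
  have hempty_mem : (∅ : Finset (Sym2 V)) ∈ E'.powerset.filter (CountSparse (k:ℤ) (ℓ:ℤ)) := by
    refine Finset.mem_filter.mpr ⟨Finset.mem_powerset.mpr (Finset.empty_subset _), ?_⟩
    intro F' hF' hne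
    rw [Finset.subset_empty.mp hF'] at hne
    exact absurd hne (by simp)
  obtain ⟨F, hFmem, hFmax⟩ :=
    Finset.exists_max_image (E'.powerset.filter (CountSparse (k:ℤ) (ℓ:ℤ))) Finset.card
      ⟨∅, hempty_mem⟩
  obtain ⟨hFpow, hFsp⟩ := Finset.mem_filter.mp hFmem
  have hFsub := Finset.mem_powerset.mp hFpow
  have hFmax' : ∀ g ∈ E', g ∉ F → ¬ CountSparse (k:ℤ) (ℓ:ℤ) (insert g F) := by
    intro g hg hgF hsp
    have hmem : insert g F ∈ E'.powerset.filter (CountSparse (k:ℤ) (ℓ:ℤ)) :=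
      Finset.mem_filter.mpr ⟨Finset.mem_powerset.mpr (Finset.insert_subset hg hFsub), hsp⟩
    have := hFmax _ hmem
    rw [Finset.card_insert_of_notMem hgF] at this
    omega
  have hlow := key_lower k ℓ hk hkl hl' hconn he F hFsub hFsp hFmax'
  have hNF : N ≤ F.card := by
    have h1 : ((N:ℕ) : ℚ) ≤ (F.card : ℚ) := by
      have h2 : ((N:ℕ) : ℚ) = (k:ℚ) * Fintype.card V - ℓ := by
        have : ((N:ℤ) : ℚ) = ((k:ℤ) * Fintype.card V - ℓ : ℤ) := by exact_mod_cast hNZ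
        push_cast at this
        push_cast
        linarith
      rw [h2]
      exact hlow
    exact_mod_cast h1
  have hub : countRank (k:ℤ) (ℓ:ℤ) E' ≤ N := by
    apply Finset.sup_le
    intro s hs
    obtain ⟨hspow, hssp⟩ := Finset.mem_filter.mp hs
    rcases s.eq_empty_or_nonempty with rfl | hsne
    · simp
    · have h1 := hssp s (le_refl _) hsne
      have h2 : (incVerts s).card ≤ Fintype.card V := by
        rw [← Finset.card_univ]
        exact Finset.card_le_card (Finset.subset_univ _)
      have h3 : (s.card : ℤ) ≤ (k:ℤ) * Fintype.card V - ℓ := by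
        have h4 : ((incVerts s).card : ℤ) ≤ (Fintype.card V : ℤ) := by exact_mod_cast h2
        have h5 : (0:ℤ) ≤ (k:ℤ) := by positivity
        nlinarith
      rw [← hNZ] at h3
      exact_mod_cast h3
  have hlb : N ≤ countRank (k:ℤ) (ℓ:ℤ) E' :=
    le_trans hNF (Finset.le_sup hFmem)
  have : countRank (k:ℤ) (ℓ:ℤ) E' = N := le_antisymm hub hlb
  rw [this, hNZ]
end

section
/- Let k and ℓ be integers with 2 ≤ k < ℓ ≤ 2k−1. For each such pair there exists a (2ℓ−1)-connected graph G that is not (k,ℓ)-rigid. Specifically, take 2ℓ+2 disjoint copies of K_{2ℓ−1} arranged in a cycle with pairwise-disjoint matchings of size ℓ−1 between consecutive copies, plus ℓ+1 long diagonal edges joining the remaining vertices; this graph is (2ℓ−1)-connected but its (k,ℓ)-count matroid rank is at most k|V| − ℓ − 1. -/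
open scoped Classical

namespace S10

open Fin.NatCast

variable {s : ℕ}

abbrev V (s : ℕ) := Fin (s+3) × Fin s

/-- the cross-edge matching involution -/
def sig (s : ℕ) (v : V s) : V s :=
  (v.1 + ((v.2.val + 2 : ℕ) : Fin (s+3)), ⟨s - 1 - v.2.val, by have := v.2.isLt; omega⟩)

lemma sig_fst (v : V s) : (sig s v).1 = v.1 + ((v.2.val + 2 : ℕ) : Fin (s+3)) := rfl

lemma natCast_val (m : ℕ) (h : m < s + 3) : ((m : Fin (s+3))).val = m := by
  rw [Fin.val_natCast, Nat.mod_eq_of_lt h]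

lemma sig_sig (v : V s) : sig s (sig s v) = v := by
  have ha := v.2.isLt
  refine Prod.ext ?_ ?_
  · show v.1 + ((v.2.val + 2 : ℕ) : Fin (s+3)) + (((s - 1 - v.2.val) + 2 : ℕ) : Fin (s+3)) = v.1
    rw [add_assoc, ← Nat.cast_add]
    have h1 : (v.2.val + 2) + (s - 1 - v.2.val + 2) = s + 3 := by omega
    rw [h1]
    simp
  · show (⟨s - 1 - (s - 1 - v.2.val), _⟩ : Fin s) = v.2
    apply Fin.ext
    show s - 1 - (s - 1 - v.2.val) = v.2.val
    omega

lemma sig_fst_ne (v : V s) : (sig s v).1 ≠ v.1 := by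
  have ha := v.2.isLt
  intro h
  have h2 : v.1 + ((v.2.val + 2 : ℕ) : Fin (s+3)) = v.1 + 0 := by
    rw [add_zero]; exact h
  have h3 := add_left_cancel h2
  have h4 : ((v.2.val + 2 : ℕ) : Fin (s+3)).val = v.2.val + 2 := natCast_val _ (by omega)
  rw [h3] at h4
  simp at h4

lemma sig_ne (v : V s) : sig s v ≠ v := fun h => sig_fst_ne v (by rw [h])

lemma sig_inj {u v : V s} (h : sig s u = sig s v) : u = v := by
  have := congrArg (sig s) h
  rwa [sig_sig, sig_sig] at this

/-- The graph: disjoint cliques (fibers of the first projection) plus the matching `sig`. -/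
def G (s : ℕ) : SimpleGraph (V s) where
  Adj u v := u ≠ v ∧ (u.1 = v.1 ∨ sig s u = v)
  symm := by
    constructor
    rintro u v ⟨h1, h2⟩
    refine ⟨h1.symm, ?_⟩
    rcases h2 with h | h
    · exact Or.inl h.symm
    · exact Or.inr (by rw [← h, sig_sig])
  loopless := ⟨fun v h => h.1 rfl⟩

lemma G_adj {u v : V s} : (G s).Adj u v ↔ u ≠ v ∧ (u.1 = v.1 ∨ sig s u = v) := Iff.rfl

noncomputable def ge (s : ℕ) (v : V s) : Sym2 (V s) := s(v, sig s v)

lemma ge_fiber (v : V s) : Finset.univ.filter (fun u => ge s u = ge s v) = {v, sig s v} := by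
  ext u
  simp only [Finset.mem_filter, Finset.mem_univ, true_and, Finset.mem_insert,
    Finset.mem_singleton]
  simp only [ge]
  constructor
  · intro h
    rw [Sym2.eq_iff] at h
    rcases h with ⟨h1, _⟩ | ⟨h1, h2⟩
    · exact Or.inl h1
    · exact Or.inr h1
  · rintro (rfl | rfl)
    · rfl
    · rw [Sym2.eq_iff]; exact Or.inr ⟨rfl, sig_sig v⟩

lemma two_mul_cross : 2 * (Finset.univ.image (ge s)).card = (s+3) * s := by
  have h := Finset.card_eq_sum_card_fiberwise
    (f := ge s) (s := (Finset.univ : Finset (V s))) (t := Finset.univ.image (ge s))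
    (fun x _ => Finset.mem_image_of_mem _ (Finset.mem_univ x))
  have h2 : ∀ b ∈ Finset.univ.image (ge s),
      (Finset.univ.filter (fun u => ge s u = b)).card = 2 := by
    intro b hb
    obtain ⟨v, _, rfl⟩ := Finset.mem_image.mp hb
    rw [ge_fiber]
    rw [Finset.card_insert_of_notMem (by simp [Ne.symm (sig_ne v)]), Finset.card_singleton]
  rw [Finset.sum_congr rfl h2, Finset.sum_const, smul_eq_mul] at h
  have : (Finset.univ : Finset (V s)).card = (s+3) * s := by
    simp [Finset.card_univ]
  omega
lemma mem_incVerts {W : Type} [Fintype W] {F : Finset (Sym2 W)} {v : W} :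
    v ∈ incVerts F ↔ ∃ e ∈ F, v ∈ e := by
  unfold incVerts
  exact ⟨fun h => (Finset.mem_filter.mp h).2,
    fun h => Finset.mem_filter.mpr ⟨Finset.mem_univ _, h⟩⟩

lemma fiber_card (i : Fin (s+3)) : (Finset.univ.filter (fun v : V s => v.1 = i)).card = s := by
  have h : Finset.univ.filter (fun v : V s => v.1 = i) = {i} ×ˢ Finset.univ := by
    ext v
    simp only [Finset.mem_filter, Finset.mem_univ, true_and, Finset.mem_product,
      Finset.mem_singleton]
    exact ⟨fun h => ⟨h, trivial⟩, fun h => h.1⟩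
  rw [h, Finset.card_product]
  simp

lemma cross_of_edge {e : Sym2 (V s)} (he : e ∈ (G s).edgeSet)
    (hne : ¬ ∃ i, ∀ v ∈ e, v.1 = i) : ∃ v, e = ge s v := by
  induction e with
  | _ a b =>
    rw [SimpleGraph.mem_edgeSet, G_adj] at he
    rcases he.2 with h | h
    · exfalso
      refine hne ⟨a.1, ?_⟩
      intro v hv
      rw [Sym2.mem_iff] at hv
      rcases hv with rfl | rfl
      · rfl
      · exact h.symm
    · exact ⟨a, by rw [ge, h]⟩

lemma sparse_card_le (k l : ℕ) (hls : (l:ℤ) ≤ (k:ℤ) * s)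
    (S : Finset (Sym2 (V s))) (hSE : S ⊆ (G s).edgeFinset) (hsp : CountSparse k l S) :
    2 * (S.card : ℤ) ≤ 2 * (s+3) * ((k:ℤ) * s - l) + (s+3) * s := by
  classical
  set P : Sym2 (V s) → Prop := fun e => ∃ i, ∀ v ∈ e, (v : V s).1 = i with hP
  set Si : Fin (s+3) → Finset (Sym2 (V s)) :=
    fun i => S.filter (fun e => ∀ v ∈ e, (v : V s).1 = i) with hSi
  -- cross part
  have hcross : (S.filter (fun e => ¬ P e)).card ≤ (Finset.univ.image (ge s)).card := by
    apply Finset.card_le_card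
    intro e he
    rw [Finset.mem_filter] at he
    obtain ⟨v, rfl⟩ := cross_of_edge (SimpleGraph.mem_edgeFinset.mp (hSE he.1)) he.2
    exact Finset.mem_image_of_mem _ (Finset.mem_univ v)
  -- internal part
  have hint : (S.filter P).card ≤ ∑ i : Fin (s+3), (Si i).card := by
    calc (S.filter P).card ≤ (Finset.univ.biUnion Si).card := by
          apply Finset.card_le_card
          intro e he
          rw [Finset.mem_filter] at he
          obtain ⟨i, hi⟩ := he.2
          exact Finset.mem_biUnion.mpr ⟨i, Finset.mem_univ i,
            Finset.mem_filter.mpr ⟨he.1, hi⟩⟩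
      _ ≤ ∑ i : Fin (s+3), (Si i).card := Finset.card_biUnion_le
  have hSib : ∀ i : Fin (s+3), ((Si i).card : ℤ) ≤ (k:ℤ) * s - l := by
    intro i
    rcases (Si i).eq_empty_or_nonempty with h | h
    · rw [h]; simpa using hls
    · have h1 := hsp (Si i) (Finset.filter_subset _ _) h
      have h2 : (incVerts (Si i)).card ≤ s := by
        refine le_trans (Finset.card_le_card ?_) (le_of_eq (fiber_card i))
        intro v hv
        obtain ⟨e, he, hve⟩ := mem_incVerts.mp hv
        rw [hSi, Finset.mem_filter] at he
        exact Finset.mem_filter.mpr ⟨Finset.mem_univ v, he.2 v hve⟩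
      have h3 : (k:ℤ) * (incVerts (Si i)).card ≤ (k:ℤ) * s := by
        apply mul_le_mul_of_nonneg_left _ (by positivity)
        exact_mod_cast h2
      linarith
  have hsum : (∑ i : Fin (s+3), ((Si i).card : ℤ)) ≤ (s+3) * ((k:ℤ) * s - l) := by
    calc (∑ i : Fin (s+3), ((Si i).card : ℤ))
        ≤ ∑ _i : Fin (s+3), ((k:ℤ) * s - l) := Finset.sum_le_sum (fun i _ => hSib i)
      _ = (s+3) * ((k:ℤ) * s - l) := by
          rw [Finset.sum_const, Finset.card_univ, Fintype.card_fin]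
          push_cast
          ring
  have hsplit : (S.filter P).card + (S.filter (fun e => ¬ P e)).card = S.card :=
    Finset.card_filter_add_card_filter_not P
  have h2c := two_mul_cross (s := s)
  have hint' : ((S.filter P).card : ℤ) ≤ (s+3) * ((k:ℤ) * s - l) := by
    refine le_trans ?_ hsum
    exact_mod_cast hint
  have hcross' : ((S.filter (fun e => ¬ P e)).card : ℤ) ≤ (Finset.univ.image (ge s)).card :=
    Nat.cast_le.mpr hcross
  have : (S.card : ℤ) = ((S.filter P).card : ℤ) + ((S.filter (fun e => ¬ P e)).card : ℤ) := by
    exact_mod_cast hsplit.symm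
  have h2c' : 2 * ((Finset.univ.image (ge s)).card : ℤ) = ((s:ℤ)+3) * s := by
    exact_mod_cast h2c
  push_cast at this ⊢
  linarith
/-- auxiliary "quotient" graph on the cliques recording surviving cross edges -/
def H (s : ℕ) (T : Finset (V s)) : SimpleGraph (Fin (s+3)) where
  Adj i j := i ≠ j ∧ ∃ v : V s, v.1 = i ∧ (sig s v).1 = j ∧ v ∉ T ∧ sig s v ∉ T
  symm := by
    constructor
    rintro i j ⟨hne, v, h1, h2, h3, h4⟩
    exact ⟨hne.symm, sig s v, h2, by rw [sig_sig]; exact h1, h4, by rw [sig_sig]; exact h3⟩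
  loopless := ⟨fun i h => h.1 rfl⟩

variable {T : Finset (V s)}

lemma exists_surv (hT : T.card < s) (i : Fin (s+3)) : ∃ a : Fin s, ((i,a) : V s) ∉ T := by
  by_contra hcon
  push_neg at hcon
  have hsub : (Finset.univ.image (fun a : Fin s => ((i,a) : V s))) ⊆ T := by
    intro v hv
    obtain ⟨a, _, rfl⟩ := Finset.mem_image.mp hv
    exact hcon a
  have hcard : (Finset.univ.image (fun a : Fin s => ((i,a) : V s))).card = s := by
    rw [Finset.card_image_of_injective _ (fun a b h => (Prod.ext_iff.mp h).2)]
    simp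
  have := Finset.card_le_card hsub
  omega

lemma mem_compl_iff {v : V s} : v ∈ ((↑T : Set (V s))ᶜ) ↔ v ∉ T := by
  simp

lemma reach_same (u v : ↥((↑T : Set (V s))ᶜ)) (h : (↑u : V s).1 = (↑v : V s).1) :
    ((G s).induce ((↑T : Set (V s))ᶜ)).Reachable u v := by
  by_cases huv : u = v
  · rw [huv]
  · refine SimpleGraph.Adj.reachable ?_
    show (G s).Adj ↑u ↑v
    rw [G_adj]
    exact ⟨fun hc => huv (Subtype.ext hc), Or.inl h⟩

lemma reach_of_Hwalk {i j : Fin (s+3)} (w : (H s T).Walk i j) :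
    ∀ (u v : ↥((↑T : Set (V s))ᶜ)), (↑u : V s).1 = i → (↑v : V s).1 = j →
      ((G s).induce ((↑T : Set (V s))ᶜ)).Reachable u v := by
  induction w with
  | nil => exact fun u v hu hv => reach_same u v (hu.trans hv.symm)
  | @cons i i' j h p ih =>
    intro u v hu hv
    obtain ⟨hne, x, hx1, hx2, hx3, hx4⟩ := h
    have r1 : ((G s).induce ((↑T : Set (V s))ᶜ)).Reachable u ⟨x, mem_compl_iff.mpr hx3⟩ :=
      reach_same _ _ (by rw [hu, hx1])
    have r2 : ((G s).induce ((↑T : Set (V s))ᶜ)).Adj ⟨x, mem_compl_iff.mpr hx3⟩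
        ⟨sig s x, mem_compl_iff.mpr hx4⟩ := by
      show (G s).Adj x (sig s x)
      rw [G_adj]
      exact ⟨(sig_ne x).symm, Or.inr rfl⟩
    have r3 := ih ⟨sig s x, mem_compl_iff.mpr hx4⟩ v (by rw [hx2]) hv
    exact r1.trans (r2.reachable.trans r3)

lemma card_fixed_diff_fst {t : ℕ} [NeZero t] (X : Finset (Fin t × Fin t)) (A : Finset (Fin t)) (c : ℕ)
    (h1 : ∀ p ∈ X, p.1 ∈ A) (hd : ∀ p ∈ X, (p.2 - p.1).val = c) : X.card ≤ A.card := by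
  refine Finset.card_le_card_of_injOn Prod.fst h1 ?_
  intro p hp q hq h
  have h1 : p.2 - p.1 = q.2 - q.1 := Fin.ext (by rw [hd p hp, hd q hq])
  have h2 : p.2 = q.2 := by
    calc p.2 = p.2 - p.1 + p.1 := (sub_add_cancel _ _).symm
      _ = q.2 - q.1 + q.1 := by rw [h1, h]
      _ = q.2 := sub_add_cancel _ _
  exact Prod.ext h h2

lemma card_fixed_diff_snd {t : ℕ} [NeZero t] (X : Finset (Fin t × Fin t)) (B : Finset (Fin t)) (c : ℕ)
    (h1 : ∀ p ∈ X, p.2 ∈ B) (hd : ∀ p ∈ X, (p.2 - p.1).val = c) : X.card ≤ B.card := by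
  refine Finset.card_le_card_of_injOn Prod.snd h1 ?_
  intro p hp q hq h
  have h1 : p.2 - p.1 = q.2 - q.1 := Fin.ext (by rw [hd p hp, hd q hq])
  have h2 : p.1 = q.1 := by
    calc p.1 = p.2 - (p.2 - p.1) := (sub_sub_cancel _ _).symm
      _ = q.2 - (q.2 - q.1) := by rw [h1, h]
      _ = q.1 := sub_sub_cancel _ _
  exact Prod.ext h2 h

lemma count_contra {s a b c d1 d2 tc : ℕ} (hs : 3 ≤ s)
    (hab : a * b ≤ c + d1 + d2) (hct : c ≤ tc) (hT : tc < s)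
    (hsum : a + b = s + 3) (ha : 1 ≤ a) (hb : 1 ≤ b)
    (hd1a : d1 ≤ a) (hd1b : d1 ≤ b) (hd2a : d2 ≤ a) (hd2b : d2 ≤ b) : False := by
  have hsZ : (a : ℤ) + b = (s : ℤ) + 3 := by exact_mod_cast hsum
  rcases le_total a b with hle | hle
  · have h1 : a * b + 1 ≤ s + 2 * a := by omega
    have hb3 : 3 ≤ b := by omega
    have h1' : (a:ℤ) * b + 1 ≤ (s:ℤ) + 2 * a := by exact_mod_cast h1
    have ha' : (1:ℤ) ≤ a := by exact_mod_cast ha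
    have hb3' : (3:ℤ) ≤ b := by exact_mod_cast hb3
    nlinarith [mul_nonneg (sub_nonneg.mpr ha') (sub_nonneg.mpr hb3')]
  · have h1 : a * b + 1 ≤ s + 2 * b := by omega
    have ha3 : 3 ≤ a := by omega
    have h1' : (a:ℤ) * b + 1 ≤ (s:ℤ) + 2 * b := by exact_mod_cast h1
    have hb' : (1:ℤ) ≤ b := by exact_mod_cast hb
    have ha3' : (3:ℤ) ≤ a := by exact_mod_cast ha3
    nlinarith [mul_nonneg (sub_nonneg.mpr hb') (sub_nonneg.mpr ha3')]

lemma H_preconn (hs : 3 ≤ s) (hT : T.card < s) : (H s T).Preconnected := by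
  have hs0 : 0 < s := by omega
  intro i j
  by_contra hreach
  set A := Finset.univ.filter (fun x => (H s T).Reachable i x) with hA
  have hiA : i ∈ A :=
    Finset.mem_filter.mpr ⟨Finset.mem_univ i, SimpleGraph.Reachable.refl i⟩
  have hjA : j ∉ A := by
    simp only [hA, Finset.mem_filter, Finset.mem_univ, true_and]
    exact hreach
  have hclosed : ∀ x ∈ A, ∀ y, (H s T).Adj x y → y ∈ A := by
    intro x hx y hxy
    simp only [hA, Finset.mem_filter, Finset.mem_univ, true_and] at hx ⊢
    exact hx.trans hxy.reachable
  set B := Finset.univ \ A with hB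
  have hjB : j ∈ B := Finset.mem_sdiff.mpr ⟨Finset.mem_univ j, hjA⟩
  set pr := A ×ˢ B with hpr
  set C := pr.filter (fun p => 2 ≤ (p.2 - p.1).val ∧ (p.2 - p.1).val ≤ s+1) with hC
  set D1 := pr.filter (fun p => (p.2 - p.1).val = 1) with hD1
  set D2 := pr.filter (fun p => (p.2 - p.1).val = s+2) with hD2
  -- the witness vertex of a crossing pair
  set wv : Fin (s+3) × Fin (s+3) → V s :=
    fun p => (p.1, ⟨((p.2 - p.1).val - 2) % s, Nat.mod_lt _ hs0⟩) with hwv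
  have hwv2 : ∀ p ∈ C, ((wv p).2 : ℕ) = (p.2 - p.1).val - 2 := by
    intro p hp
    obtain ⟨-, h1, h2⟩ := Finset.mem_filter.mp hp
    show ((p.2 - p.1).val - 2) % s = (p.2 - p.1).val - 2
    exact Nat.mod_eq_of_lt (by omega)
  have hsigwv : ∀ p ∈ C, (sig s (wv p)).1 = p.2 := by
    intro p hp
    obtain ⟨-, h1, h2⟩ := Finset.mem_filter.mp hp
    rw [sig_fst, hwv2 p hp]
    have h3 : (p.2 - p.1).val - 2 + 2 = (p.2 - p.1).val := by omega
    rw [h3, Fin.cast_val_eq_self]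
    exact add_sub_cancel p.1 p.2
  have hfst : ∀ p ∈ C, (wv p).1 = p.1 := fun p _ => rfl
  have hmemA : ∀ p ∈ C, p.1 ∈ A ∧ p.2 ∉ A := by
    intro p hp
    obtain ⟨hpr', -⟩ := Finset.mem_filter.mp hp
    obtain ⟨h1, h2⟩ := Finset.mem_product.mp hpr'
    exact ⟨h1, (Finset.mem_sdiff.mp h2).2⟩
  have key : ∀ p ∈ C, wv p ∈ T ∨ sig s (wv p) ∈ T := by
    intro p hp
    by_contra hcon
    push_neg at hcon
    obtain ⟨hpA, hpB⟩ := hmemA p hp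
    obtain ⟨-, h1, h2⟩ := Finset.mem_filter.mp hp
    have hne : p.1 ≠ p.2 := by
      intro hc
      rw [hc, sub_self] at h1
      simp at h1
    exact hpB (hclosed p.1 hpA p.2 ⟨hne, wv p, rfl, hsigwv p hp, hcon.1, hcon.2⟩)
  -- injection into T
  have hCT : C.card ≤ T.card := by
    refine Finset.card_le_card_of_injOn
      (fun p => if wv p ∈ T then wv p else sig s (wv p)) ?_ ?_
    · intro p hp
      rcases key p hp with h | h
      · simpa [h] using h
      · by_cases h' : wv p ∈ T <;> simp [h', h]
    · intro p hp q hq h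
      simp only at h
      have hpA := hmemA p hp
      have hqA := hmemA q hq
      have heq : wv p = wv q := by
        by_cases h1 : wv p ∈ T <;> by_cases h2 : wv q ∈ T <;> simp [h1, h2] at h
        · exact h
        · exfalso
          have := congrArg Prod.fst h
          rw [hfst p hp] at this
          rw [hsigwv q hq] at this
          rw [this] at hpA
          exact hqA.2 hpA.1
        · exfalso
          have := congrArg Prod.fst h
          rw [hfst q hq, hsigwv p hp] at this
          rw [← this] at hqA
          exact hpA.2 hqA.1
        · exact sig_inj h
      have e1 : p.1 = q.1 := by rw [← hfst p hp, ← hfst q hq, heq]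
      have e2 : p.2 = q.2 := by rw [← hsigwv p hp, ← hsigwv q hq, heq]
      exact Prod.ext e1 e2
  -- covering and counting
  have hcov : pr.card ≤ C.card + D1.card + D2.card := by
    have hsub : pr ⊆ C ∪ D1 ∪ D2 := by
      intro p hp
      obtain ⟨h1, h2⟩ := Finset.mem_product.mp hp
      have hne : p.1 ≠ p.2 := by
        intro hc
        exact (Finset.mem_sdiff.mp h2).2 (hc ▸ h1)
      have hd0 : (p.2 - p.1).val ≠ 0 := by
        intro hc
        exact hne (by
          have : p.2 - p.1 = 0 := Fin.ext (by simpa using hc)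
          have := sub_eq_zero.mp this
          exact this.symm)
      have hdlt : (p.2 - p.1).val < s + 3 := (p.2 - p.1).isLt
      simp only [Finset.mem_union, hC, hD1, hD2, Finset.mem_filter]
      by_cases hc1 : (p.2 - p.1).val = 1
      · exact Or.inl (Or.inr ⟨hp, hc1⟩)
      · by_cases hc2 : (p.2 - p.1).val = s+2
        · exact Or.inr ⟨hp, hc2⟩
        · exact Or.inl (Or.inl ⟨hp, by omega⟩)
    calc pr.card ≤ (C ∪ D1 ∪ D2).card := Finset.card_le_card hsub
      _ ≤ (C ∪ D1).card + D2.card := Finset.card_union_le _ _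
      _ ≤ C.card + D1.card + D2.card := by
          have := Finset.card_union_le C D1
          omega
  have hprcard : pr.card = A.card * B.card := Finset.card_product _ _
  have hBcard : B.card = s + 3 - A.card := by
    rw [hB, Finset.card_sdiff_of_subset (Finset.subset_univ A)]
    simp
  have hAcard : 1 ≤ A.card := Finset.card_pos.mpr ⟨i, hiA⟩
  have hBpos : 1 ≤ B.card := Finset.card_pos.mpr ⟨j, hjB⟩
  have hAle : A.card ≤ s + 2 := by omega
  -- D bounds
  have hD1A : D1.card ≤ A.card := by
    refine card_fixed_diff_fst D1 A 1 ?_ ?_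
    · intro p hp
      exact (Finset.mem_product.mp (Finset.mem_filter.mp hp).1).1
    · exact fun p hp => (Finset.mem_filter.mp hp).2
  have hD1B : D1.card ≤ B.card := by
    refine card_fixed_diff_snd D1 B 1 ?_ ?_
    · intro p hp
      exact (Finset.mem_product.mp (Finset.mem_filter.mp hp).1).2
    · exact fun p hp => (Finset.mem_filter.mp hp).2
  have hD2A : D2.card ≤ A.card := by
    refine card_fixed_diff_fst D2 A (s+2) ?_ ?_
    · intro p hp
      exact (Finset.mem_product.mp (Finset.mem_filter.mp hp).1).1
    · exact fun p hp => (Finset.mem_filter.mp hp).2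
  have hD2B : D2.card ≤ B.card := by
    refine card_fixed_diff_snd D2 B (s+2) ?_ ?_
    · intro p hp
      exact (Finset.mem_product.mp (Finset.mem_filter.mp hp).1).2
    · exact fun p hp => (Finset.mem_filter.mp hp).2
  -- final arithmetic contradiction
  have hab : A.card * B.card ≤ C.card + D1.card + D2.card := hprcard ▸ hcov
  exact count_contra hs hab hCT hT (by omega) hAcard hBpos hD1A hD1B hD2A hD2B

lemma G_conn (hs : 3 ≤ s) (hT : T.card < s) :
    ((G s).induce ((↑T : Set (V s))ᶜ)).Connected := by
  rw [SimpleGraph.connected_iff]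
  constructor
  · intro u v
    obtain ⟨w⟩ := H_preconn hs hT (↑u : V s).1 (↑v : V s).1
    exact reach_of_Hwalk w u v rfl rfl
  · obtain ⟨a, ha⟩ := exists_surv hT 0
    exact ⟨⟨(0, a), mem_compl_iff.mpr ha⟩⟩

lemma incVerts_image {α β : Type} [Fintype α] [Fintype β] (f : α → β) (hf : Function.Injective f)
    (F : Finset (Sym2 α)) :
    incVerts (F.image (Sym2.map f)) = (incVerts F).image f := by
  ext v
  rw [mem_incVerts, Finset.mem_image]
  constructor
  · rintro ⟨e, he, hv⟩
    obtain ⟨e0, he0, rfl⟩ := Finset.mem_image.mp he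
    obtain ⟨w, hw, rfl⟩ := Sym2.mem_map.mp hv
    exact ⟨w, mem_incVerts.mpr ⟨e0, he0, hw⟩, rfl⟩
  · rintro ⟨w, hw, rfl⟩
    obtain ⟨e0, he0, hw0⟩ := mem_incVerts.mp hw
    exact ⟨Sym2.map f e0, Finset.mem_image_of_mem _ he0, Sym2.mem_map.mpr ⟨w, hw0, rfl⟩⟩

lemma countSparse_map {α β : Type} [Fintype α] [Fintype β] (f : α ≃ β) (k l : ℤ)
    {F : Finset (Sym2 α)} {F2 : Finset (Sym2 β)}
    (hmem : ∀ x, x ∈ F2 ↔ ∃ e0 ∈ F, Sym2.map (f : α → β) e0 = x)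
    (h : CountSparse k l F) :
    CountSparse k l F2 := by
  intro F'' hsub hne
  set P := F''.image (Sym2.map (f.symm : β → α)) with hP
  have hPF : P ⊆ F := by
    intro e he
    obtain ⟨e1, he1, rfl⟩ := Finset.mem_image.mp he
    obtain ⟨e0, he0, rfl⟩ := (hmem e1).mp (hsub he1)
    rw [Sym2.map_map]
    simpa using he0
  have hcard : P.card = F''.card :=
    Finset.card_image_of_injective _ (Sym2.map.injective f.symm.injective)
  have hinc : (incVerts P).card = (incVerts F'').card := by
    rw [hP, incVerts_image _ f.symm.injective]
    exact Finset.card_image_of_injective _ f.symm.injective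
  have := h P hPF (hne.image _)
  rw [hcard, hinc] at this
  exact this
end S10

open S10 in
/-- For integers `2 ≤ k < ℓ ≤ 2k-1` there exists a `(2ℓ-1)`-connected graph
that is not `(k,ℓ)`-rigid: its `(k,ℓ)`-count matroid rank is at most `k|V| - ℓ - 1`. -/
theorem stmt_10 (k ℓ : ℕ) (hk : 2 ≤ k) (hkl : k < ℓ) (hl : ℓ ≤ 2 * k - 1) :
    ∃ (n : ℕ) (G : SimpleGraph (Fin n)),
      VConn G (2 * ℓ - 1) ∧
      (countRank (k : ℤ) (ℓ : ℤ) G.edgeFinset : ℤ) ≤ (k : ℤ) * n - ℓ - 1 := by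
  have hl3 : 3 ≤ ℓ := by omega
  set s := 2 * ℓ - 1 with hsdef
  have hs3 : 3 ≤ s := by omega
  have hsl : s + 1 = 2 * ℓ := by omega
  set n := (s + 3) * s with hndef
  have hsZ : (s : ℤ) = 2 * (ℓ:ℤ) - 1 := by
    have : (s:ℤ) + 1 = 2 * (ℓ:ℤ) := by exact_mod_cast hsl
    linarith
  have hnZ : (n : ℤ) = ((s:ℤ) + 3) * s := by exact_mod_cast rfl
  set e : S10.V s ≃ Fin n := finProdFinEquiv with hedef
  set G' : SimpleGraph (Fin n) := SimpleGraph.comap (e.symm : Fin n → S10.V s) (S10.G s)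
    with hG'
  refine ⟨n, G', ⟨?_, ?_⟩, ?_⟩
  · -- c < card
    have h2 : 2 * s ≤ (s+3) * s := Nat.mul_le_mul_right s (by omega)
    simp only [Fintype.card_fin]
    omega
  · -- connectivity
    intro S hS
    set T : Finset (S10.V s) := S.image (e.symm : Fin n → S10.V s) with hT
    have hTcard : T.card = S.card := Finset.card_image_of_injective _ e.symm.injective
    have hmem : ∀ v : S10.V s, v ∈ ((↑T : Set (S10.V s))ᶜ) ↔ (e v) ∈ ((↑S : Set (Fin n))ᶜ) := by
      intro v
      simp only [Set.mem_compl_iff, Finset.mem_coe, hT, Finset.mem_image]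
      constructor
      · intro h hc
        exact h ⟨e v, hc, by simp⟩
      · rintro h ⟨x, hx, rfl⟩
        exact h (by simpa using hx)
    have iso : ((S10.G s).induce ((↑T : Set (S10.V s))ᶜ)) ≃g (G'.induce ((↑S : Set (Fin n))ᶜ)) :=
      { toEquiv := e.subtypeEquiv hmem
        map_rel_iff' := by
          intro u v
          show G'.Adj (e ↑u) (e ↑v) ↔ _
          simp only [hG', SimpleGraph.comap_adj, Equiv.symm_apply_apply]
          rfl }
    exact (SimpleGraph.Iso.connected_iff iso).mp (G_conn hs3 (by omega))
  · -- rank bound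
    have hls : (ℓ:ℤ) ≤ (k:ℤ) * s := by
      have h1 : (2:ℤ) ≤ (k:ℤ) := by exact_mod_cast hk
      have h2 : (0:ℤ) ≤ (s:ℤ) := by positivity
      nlinarith
    have key : ∀ F' ∈ G'.edgeFinset.powerset.filter (CountSparse (k:ℤ) (ℓ:ℤ)),
        (F'.card : ℤ) ≤ (k:ℤ) * n - ℓ - 1 := by
      intro F' hF'
      rw [Finset.mem_filter, Finset.mem_powerset] at hF'
      obtain ⟨hsub, hsp⟩ := hF'
      set F : Finset (Sym2 (S10.V s)) := F'.image (Sym2.map (e.symm : Fin n → S10.V s)) with hF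
      have hFE : F ⊆ (S10.G s).edgeFinset := by
        intro x hx
        obtain ⟨e0, he0, rfl⟩ := Finset.mem_image.mp hx
        have he0' : e0 ∈ G'.edgeSet := SimpleGraph.mem_edgeFinset.mp (hsub he0)
        rw [SimpleGraph.mem_edgeFinset]
        induction e0 with
        | _ x y =>
          rw [Sym2.map_pair_eq]
          rw [SimpleGraph.mem_edgeSet] at he0' ⊢
          exact he0'
      have hFsp : CountSparse (k:ℤ) (ℓ:ℤ) F :=
        countSparse_map e.symm (k:ℤ) (ℓ:ℤ) (fun x => by rw [hF]; exact Finset.mem_image) hsp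
      have hb := sparse_card_le k ℓ hls F hFE hFsp
      have hFcard : F.card = F'.card :=
        Finset.card_image_of_injective _ (Sym2.map.injective e.symm.injective)
      have hid : 2 * ((s:ℤ)+3) * ((k:ℤ) * s - ℓ) + ((s:ℤ)+3) * s
          = 2 * ((k:ℤ) * n - ℓ - 1) := by
        rw [hnZ, hsZ]
        ring
      rw [hFcard] at hb
      push_cast at hb
      linarith [hb, hid.symm.le]
    have hM : ℓ + 1 ≤ k * n := by
      have h1 : n ≥ s := Nat.le_mul_of_pos_left s (by omega)
      have h2 : k * n ≥ 2 * n := Nat.mul_le_mul_right n hk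
      omega
    have hsup : countRank (k:ℤ) (ℓ:ℤ) G'.edgeFinset ≤ k * n - ℓ - 1 := by
      apply Finset.sup_le
      intro F' hF'
      have := key F' hF'
      omega
    have : (countRank (k:ℤ) (ℓ:ℤ) G'.edgeFinset : ℤ) ≤ ((k * n - ℓ - 1 : ℕ) : ℤ) := by
      exact_mod_cast hsup
    refine le_trans this ?_
    push_cast [Nat.cast_sub (by omega : ℓ + 1 ≤ k * n), Nat.cast_sub (by omega : ℓ ≤ k * n - 1)]
    omega
end
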